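/- arXiv:2511.08501 — 7 statements merged into one kernel-verified Lean document; each statement's English description precedes it below -/
import Mathlib

section
/- Let H be a k-uniform hypergraph with m edges, and let Γ = C(k,2)·m^{1/⌊k/2⌋}. Then there exist an ordering e^1,…,e^m of the edges of H and for each i distinct vertices u^i, v^i ∈ e^i such that for each 1 ≤ i ≤ m−1, the number of indices j > i with e^j ⊇ e^i \ {u^i, v^i} is at most Γ. -/
open Finset

section Aux
variable {V : Type*} [DecidableEq V]

lemma count_step (k : ℕ) (hk : 2 ≤ k) (F : Finset (Finset V))
    (huniform : ∀ e ∈ F, e.card = k)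
    {Γ : ℝ} (hΓ : ∀ e ∈ F, ∀ u ∈ e, ∀ v ∈ e, u ≠ v →
      Γ < ((F.filter (fun f => e \ {u, v} ⊆ f)).card : ℝ))
    (u v : V) (huv : u ≠ v) (S : Finset V) (hu : u ∈ S) (hv : v ∈ S) :
    Γ * ((F.filter (fun f => S ⊆ f)).card : ℝ)
      ≤ (k.choose 2 : ℝ) * ((F.filter (fun f => S \ {u, v} ⊆ f)).card : ℝ) := by
  set G := F.filter (fun f => S ⊆ f) with hG
  set T := F.filter (fun f => S \ {u, v} ⊆ f) with hT
  have h1 : Γ * (G.card : ℝ) ≤ ∑ g ∈ G, ((F.filter (fun f => g \ {u, v} ⊆ f)).card : ℝ) := by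
    calc Γ * (G.card : ℝ) = ∑ _g ∈ G, Γ := by rw [Finset.sum_const, nsmul_eq_mul]; ring
    _ ≤ _ := by
        apply Finset.sum_le_sum
        intro g hg
        rw [hG, mem_filter] at hg
        exact le_of_lt (hΓ g hg.1 u (hg.2 hu) v (hg.2 hv) huv)
  have h2 : ∀ g ∈ G, ((F.filter (fun f => g \ {u, v} ⊆ f)).card : ℝ)
      ≤ ((T.filter (fun f => g \ {u, v} ⊆ f)).card : ℝ) := by
    intro g hg
    rw [hG, mem_filter] at hg
    have hsub : F.filter (fun f => g \ {u, v} ⊆ f) ⊆ T.filter (fun f => g \ {u, v} ⊆ f) := by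
      intro f hf
      rw [mem_filter] at hf ⊢
      refine ⟨?_, hf.2⟩
      rw [hT, mem_filter]
      exact ⟨hf.1, le_trans (sdiff_le_sdiff_right hg.2) hf.2⟩
    exact_mod_cast Finset.card_le_card hsub
  have h3 : ∑ g ∈ G, ((T.filter (fun f => g \ {u, v} ⊆ f)).card : ℝ)
      = ∑ h ∈ T, ((G.filter (fun g => g \ {u, v} ⊆ h)).card : ℝ) := by
    rw [← Nat.cast_sum, ← Nat.cast_sum]
    congr 1
    simp only [Finset.card_filter]
    rw [Finset.sum_comm]
  have h4 : ∀ h ∈ T, (G.filter (fun g => g \ {u, v} ⊆ h)).card ≤ k.choose 2 := by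
    intro h hh
    rw [hT, mem_filter] at hh
    have hhcard : h.card = k := huniform h hh.1
    have hle : (G.filter (fun g => g \ {u, v} ⊆ h)).card ≤ (h.powersetCard (k - 2)).card := by
      apply Finset.card_le_card_of_injOn (fun g => g \ {u, v})
      · intro g hg
        rw [mem_coe, mem_filter, hG, mem_filter] at hg
        simp only [mem_coe, mem_powersetCard]
        refine ⟨hg.2, ?_⟩
        have hsub : {u, v} ⊆ g := by
          intro x hx
          rcases Finset.mem_insert.mp hx with rfl | hx
          · exact hg.1.2 hu
          · rw [Finset.mem_singleton] at hx; subst hx; exact hg.1.2 hv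
        rw [Finset.card_sdiff_of_subset hsub, huniform g hg.1.1, Finset.card_pair huv]
      · intro g1 hg1 g2 hg2 heq
        rw [mem_coe, mem_filter, hG, mem_filter] at hg1 hg2
        have hs1 : {u, v} ⊆ g1 := by
          intro x hx
          rcases Finset.mem_insert.mp hx with rfl | hx
          · exact hg1.1.2 hu
          · rw [Finset.mem_singleton] at hx; subst hx; exact hg1.1.2 hv
        have hs2 : {u, v} ⊆ g2 := by
          intro x hx
          rcases Finset.mem_insert.mp hx with rfl | hx
          · exact hg2.1.2 hu
          · rw [Finset.mem_singleton] at hx; subst hx; exact hg2.1.2 hv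
        have := congrArg (fun s => s ∪ ({u, v} : Finset V)) heq
        simpa [Finset.sdiff_union_of_subset hs1, Finset.sdiff_union_of_subset hs2] using this
    rw [Finset.card_powersetCard, hhcard] at hle
    rwa [Nat.choose_symm hk] at hle
  calc Γ * (G.card : ℝ) ≤ ∑ g ∈ G, ((F.filter (fun f => g \ {u, v} ⊆ f)).card : ℝ) := h1
    _ ≤ ∑ g ∈ G, ((T.filter (fun f => g \ {u, v} ⊆ f)).card : ℝ) := Finset.sum_le_sum h2
    _ = ∑ h ∈ T, ((G.filter (fun g => g \ {u, v} ⊆ h)).card : ℝ) := h3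
    _ ≤ ∑ _h ∈ T, (k.choose 2 : ℝ) := by
        apply Finset.sum_le_sum; intro h hh; exact_mod_cast h4 h hh
    _ = (k.choose 2 : ℝ) * (T.card : ℝ) := by rw [Finset.sum_const, nsmul_eq_mul]; ring

lemma growth (k : ℕ) (hk : 2 ≤ k) (F : Finset (Finset V))
    (huniform : ∀ e ∈ F, e.card = k)
    {Γ : ℝ} (hΓpos : 0 < Γ)
    (hΓ : ∀ e ∈ F, ∀ u ∈ e, ∀ v ∈ e, u ≠ v →
      Γ < ((F.filter (fun f => e \ {u, v} ⊆ f)).card : ℝ)) :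
    ∀ j : ℕ, 1 ≤ j → 2 * j ≤ k → ∀ S : Finset V, S.card = k - 2 * j →
      (∃ f ∈ F, S ⊆ f) →
      Γ ^ j / ((k.choose 2 : ℝ)) ^ (j - 1) < ((F.filter (fun f => S ⊆ f)).card : ℝ) := by
  have hC : (0 : ℝ) < (k.choose 2 : ℝ) := by
    have : 0 < k.choose 2 := Nat.choose_pos (by omega)
    exact_mod_cast this
  intro j
  induction j with
  | zero => omega
  | succ j ih =>
    intro _ hjk S hScard ⟨f, hfF, hSf⟩
    have hfcard : f.card = k := huniform f hfF
    rcases Nat.eq_or_lt_of_le (Nat.one_le_iff_ne_zero.mpr (Nat.succ_ne_zero j)) with h1 | h1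
    · -- base case j + 1 = 1
      have hj0 : j = 0 := by omega
      subst hj0
      -- S has card k - 2 and S ⊆ f; f \ S has two elements
      have hfS : (f \ S).card = 2 := by
        rw [Finset.card_sdiff_of_subset hSf, hfcard, hScard]; omega
      obtain ⟨u, v, huv, huvset⟩ := Finset.card_eq_two.mp hfS
      have hS' : f \ {u, v} = S := by
        rw [← huvset, Finset.sdiff_sdiff_self_left, Finset.inter_eq_right.mpr hSf]
      have hu : u ∈ f := (Finset.mem_sdiff.mp (huvset ▸ Finset.mem_insert_self u {v})).1
      have hv : v ∈ f := (Finset.mem_sdiff.mp (huvset ▸ Finset.mem_insert_of_mem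
        (Finset.mem_singleton_self v))).1
      have := hΓ f hfF u hu v hv huv
      rw [hS'] at this
      simpa using this
    · -- inductive step
      have hj1 : 1 ≤ j := by omega
      -- pick u ≠ v in f \ S
      have hfS : 2 ≤ (f \ S).card := by
        rw [Finset.card_sdiff_of_subset hSf, hfcard, hScard]; omega
      obtain ⟨u, hu, v, hv, huv⟩ := Finset.one_lt_card.mp (show 1 < (f \ S).card by omega)
      rw [Finset.mem_sdiff] at hu hv
      set S' := insert u (insert v S) with hS'
      have huS : u ∉ insert v S := by
        simp only [Finset.mem_insert]
        push_neg
        exact ⟨fun h => huv h, hu.2⟩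
      have hS'card : S'.card = k - 2 * j := by
        rw [hS', Finset.card_insert_of_notMem huS, Finset.card_insert_of_notMem hv.2, hScard]
        omega
      have hS'f : S' ⊆ f := by
        rw [hS']
        intro x hx
        rcases Finset.mem_insert.mp hx with rfl | hx
        · exact hu.1
        rcases Finset.mem_insert.mp hx with rfl | hx
        · exact hv.1
        · exact hSf hx
      have hrec := ih hj1 (by omega) S' hS'card ⟨f, hfF, hS'f⟩
      have hvS' : v ∈ S' := by
        rw [hS']; exact Finset.mem_insert_of_mem (Finset.mem_insert_self v S)
      have hstep := count_step k hk F huniform hΓ u v huv S'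
        (Finset.mem_insert_self u _) hvS'
      have hSdiff : S' \ {u, v} = S := by
        rw [hS']
        ext x
        simp only [Finset.mem_sdiff, Finset.mem_insert, Finset.mem_singleton]
        constructor
        · rintro ⟨rfl | rfl | hx, hne⟩
          · exact absurd (Or.inl rfl) hne
          · exact absurd (Or.inr rfl) hne
          · exact hx
        · intro hx
          refine ⟨Or.inr (Or.inr hx), ?_⟩
          rintro (rfl | rfl)
          · exact hu.2 hx
          · exact hv.2 hx
      rw [hSdiff] at hstep
      -- combine: Γ^(j+1)/C^j < Γ * d(S') / C ≤ d(S)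
      have key : Γ * ((F.filter (fun f => S' ⊆ f)).card : ℝ) / (k.choose 2 : ℝ)
          ≤ ((F.filter (fun f => S ⊆ f)).card : ℝ) := by
        rw [div_le_iff₀ hC]
        linarith [hstep]
      refine lt_of_lt_of_le ?_ key
      rw [lt_div_iff₀ hC]
      obtain ⟨d, rfl⟩ : ∃ d, j = d + 1 := ⟨j - 1, by omega⟩
      have hgoal : Γ ^ (d + 1 + 1) / (k.choose 2 : ℝ) ^ (d + 1 + 1 - 1) * (k.choose 2 : ℝ)
          = Γ * (Γ ^ (d + 1) / (k.choose 2 : ℝ) ^ (d + 1 - 1)) := by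
        simp only [Nat.add_sub_cancel]
        field_simp
        ring
      rw [hgoal]
      exact (mul_lt_mul_iff_right₀ hΓpos).mpr hrec

lemma key_lemma (k : ℕ) (hk : 2 ≤ k) (E F : Finset (Finset V)) (hFE : F ⊆ E)
    (hF : F.Nonempty) (huniform : ∀ e ∈ E, e.card = k) :
    ∃ e ∈ F, ∃ u v : V, u ∈ e ∧ v ∈ e ∧ u ≠ v ∧
      ((F.filter (fun f => e \ {u, v} ⊆ f)).card : ℝ)
        ≤ (k.choose 2 : ℝ) * (E.card : ℝ) ^ ((1 : ℝ) / ((k / 2 : ℕ) : ℝ)) := by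
  by_contra hcon
  push_neg at hcon
  set t := k / 2 with ht
  set m := E.card with hm
  set Γ : ℝ := (k.choose 2 : ℝ) * (m : ℝ) ^ ((1 : ℝ) / (t : ℝ)) with hΓdef
  have ht1 : 1 ≤ t := by omega
  have hm1 : 1 ≤ m := Finset.card_pos.mpr (hF.mono hFE)
  have hC : (0 : ℝ) < (k.choose 2 : ℝ) := by
    have : 0 < k.choose 2 := Nat.choose_pos (by omega)
    exact_mod_cast this
  have hC1 : (1 : ℝ) ≤ (k.choose 2 : ℝ) := by
    have : 1 ≤ k.choose 2 := Nat.choose_pos (by omega)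
    exact_mod_cast this
  have hmpos : (0 : ℝ) < (m : ℝ) := by exact_mod_cast hm1
  have hΓpos : 0 < Γ := mul_pos hC (Real.rpow_pos_of_pos hmpos _)
  have hΓ : ∀ e ∈ F, ∀ u ∈ e, ∀ v ∈ e, u ≠ v →
      Γ < ((F.filter (fun f => e \ {u, v} ⊆ f)).card : ℝ) := by
    intro e he u hu v hv huv
    exact hcon e he u v hu hv huv
  have huniF : ∀ e ∈ F, e.card = k := fun e he => huniform e (hFE he)
  obtain ⟨f, hfF⟩ := hF
  have hfcard : f.card = k := huniF f hfF
  obtain ⟨S, hSf, hScard⟩ := Finset.exists_subset_card_eq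
    (show k - 2 * t ≤ f.card by rw [hfcard]; omega)
  have hgrow := growth k hk F huniF hΓpos hΓ t ht1 (by omega) S hScard ⟨f, hfF, hSf⟩
  have hub : ((F.filter (fun f => S ⊆ f)).card : ℝ) ≤ (m : ℝ) := by
    have h1 : (F.filter (fun f => S ⊆ f)).card ≤ F.card := Finset.card_filter_le _ _
    have h2 : F.card ≤ m := Finset.card_le_card hFE
    exact_mod_cast le_trans h1 h2
  -- compute Γ^t / C^(t-1) = C * m
  have htR : ((t : ℝ)) ≠ 0 := by positivity
  have hpow : ((m : ℝ) ^ ((1 : ℝ) / (t : ℝ))) ^ t = (m : ℝ) := by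
    rw [← Real.rpow_natCast ((m : ℝ) ^ ((1 : ℝ) / (t : ℝ))) t, ← Real.rpow_mul (le_of_lt hmpos)]
    rw [one_div_mul_cancel htR, Real.rpow_one]
  have hΓt : Γ ^ t / (k.choose 2 : ℝ) ^ (t - 1) = (k.choose 2 : ℝ) * (m : ℝ) := by
    rw [hΓdef, mul_pow, hpow]
    rw [show t = (t - 1) + 1 by omega, pow_succ]
    field_simp
    ring
    rw [Nat.add_sub_cancel_left]
  rw [hΓt] at hgrow
  nlinarith [hgrow, hub, hmpos, hC1]

lemma build (k : ℕ) (hk : 2 ≤ k) (E : Finset (Finset V))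
    (huniform : ∀ e ∈ E, e.card = k) :
    ∀ n : ℕ, ∀ F : Finset (Finset V), F ⊆ E → F.card = n →
    ∃ (e : Fin n → Finset V) (u v : Fin n → V),
      Function.Injective e ∧ (∀ i, e i ∈ F) ∧
      (∀ i, u i ∈ e i) ∧ (∀ i, v i ∈ e i) ∧ (∀ i, u i ≠ v i) ∧
      ∀ i : Fin n,
        ((univ.filter (fun j => i < j ∧ e i \ {u i, v i} ⊆ e j)).card : ℝ)
          ≤ (k.choose 2 : ℝ) * (E.card : ℝ) ^ ((1 : ℝ) / ((k / 2 : ℕ) : ℝ)) := by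
  intro n
  induction n with
  | zero =>
    intro F _ _
    exact ⟨Fin.elim0, Fin.elim0, Fin.elim0, fun i => i.elim0, fun i => i.elim0,
      fun i => i.elim0, fun i => i.elim0, fun i => i.elim0, fun i => i.elim0⟩
  | succ n ih =>
    intro F hFE hcard
    have hF : F.Nonempty := Finset.card_pos.mp (by omega)
    obtain ⟨e₀, he₀, u₀, v₀, hu₀, hv₀, huv₀, hcount⟩ := key_lemma k hk E F hFE hF huniform
    obtain ⟨e', u', v', hinj, hmem, hu, hv, huv, hcnt⟩ := ih (F.erase e₀)
      (fun x hx => hFE (Finset.erase_subset _ _ hx))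
      (by rw [Finset.card_erase_of_mem he₀, hcard]; rfl)
    refine ⟨Fin.cons e₀ e', Fin.cons u₀ u', Fin.cons v₀ v', ?_, ?_, ?_, ?_, ?_, ?_⟩
    · -- injectivity
      intro i j hij
      induction i using Fin.cases with
      | zero =>
        induction j using Fin.cases with
        | zero => rfl
        | succ j =>
          rw [Fin.cons_zero, Fin.cons_succ] at hij
          exact absurd hij.symm (Finset.ne_of_mem_erase (hmem j))
      | succ i =>
        induction j using Fin.cases with
        | zero =>
          rw [Fin.cons_zero, Fin.cons_succ] at hij
          exact absurd hij (Finset.ne_of_mem_erase (hmem i))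
        | succ j =>
          rw [Fin.cons_succ, Fin.cons_succ] at hij
          rw [hinj hij]
    · intro i
      induction i using Fin.cases with
      | zero => rw [Fin.cons_zero]; exact he₀
      | succ i => rw [Fin.cons_succ]; exact Finset.mem_of_mem_erase (hmem i)
    · intro i
      induction i using Fin.cases with
      | zero => simpa using hu₀
      | succ i => simpa using hu i
    · intro i
      induction i using Fin.cases with
      | zero => simpa using hv₀
      | succ i => simpa using hv i
    · intro i
      induction i using Fin.cases with
      | zero => simpa using huv₀
      | succ i => simpa using huv i
    · intro i
      induction i using Fin.cases with
      | zero =>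
        simp only [Fin.cons_zero]
        refine le_trans ?_ hcount
        have hle : (univ.filter (fun j : Fin (n + 1) => (0 : Fin (n + 1)) < j ∧
              e₀ \ {u₀, v₀} ⊆ (Fin.cons e₀ e' : Fin (n + 1) → Finset V) j)).card
            ≤ (F.filter (fun f => e₀ \ {u₀, v₀} ⊆ f)).card := by
          apply Finset.card_le_card_of_injOn (fun j => (Fin.cons e₀ e' : Fin (n + 1) → Finset V) j)
          · intro j hj
            simp only [Finset.mem_coe, Finset.mem_filter, Finset.mem_univ, true_and] at hj
            simp only [Finset.mem_coe, Finset.mem_filter]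
            constructor
            · induction j using Fin.cases with
              | zero => exact he₀
              | succ j => rw [Fin.cons_succ]; exact Finset.mem_of_mem_erase (hmem j)
            · exact hj.2
          · intro j1 _ j2 _ heq
            have hinjfull : Function.Injective (Fin.cons e₀ e' : Fin (n + 1) → Finset V) := by
              intro a b hab
              induction a using Fin.cases with
              | zero =>
                induction b using Fin.cases with
                | zero => rfl
                | succ b =>
                  rw [Fin.cons_zero, Fin.cons_succ] at hab
                  exact absurd hab.symm (Finset.ne_of_mem_erase (hmem b))
              | succ a =>
                induction b using Fin.cases with
                | zero =>
                  rw [Fin.cons_zero, Fin.cons_succ] at hab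
                  exact absurd hab (Finset.ne_of_mem_erase (hmem a))
                | succ b =>
                  rw [Fin.cons_succ, Fin.cons_succ] at hab
                  rw [hinj hab]
            exact hinjfull heq
        exact_mod_cast hle
      | succ i =>
        simp only [Fin.cons_succ]
        refine le_trans ?_ (hcnt i)
        have hcardeq : (univ.filter (fun j : Fin (n + 1) => i.succ < j ∧
              e' i \ {u' i, v' i} ⊆ (Fin.cons e₀ e' : Fin (n + 1) → Finset V) j)).card
            = (univ.filter (fun j => i < j ∧ e' i \ {u' i, v' i} ⊆ e' j)).card := by
          rw [show (univ.filter (fun j : Fin (n + 1) => i.succ < j ∧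
              e' i \ {u' i, v' i} ⊆ (Fin.cons e₀ e' : Fin (n + 1) → Finset V) j))
              = (univ.filter (fun j => i < j ∧ e' i \ {u' i, v' i} ⊆ e' j)).map
                  ⟨Fin.succ, Fin.succ_injective n⟩ from ?_, Finset.card_map]
          ext j
          simp only [Finset.mem_filter, Finset.mem_univ, true_and, Finset.mem_map,
            Function.Embedding.coeFn_mk]
          constructor
          · intro hj
            induction j using Fin.cases with
            | zero => exact absurd hj.1 (by simp [Fin.pos_iff_ne_zero])
            | succ j =>
              refine ⟨j, ⟨?_, ?_⟩, rfl⟩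
              · exact Fin.succ_lt_succ_iff.mp hj.1
              · simpa using hj.2
          · rintro ⟨j, ⟨hij, hsub⟩, rfl⟩
            exact ⟨Fin.succ_lt_succ_iff.mpr hij, by simpa using hsub⟩
        rw [hcardeq]

end Aux

/-- In a `k`-uniform hypergraph with `m` edges, there is an ordering `e 0, …, e (m-1)` of the
edges and distinct vertices `u i, v i ∈ e i` such that for each `i`, at most
`C(k,2) · m^(1/⌊k/2⌋)` later edges contain `e i \ {u i, v i}`. -/
theorem stmt_2 {V : Type*} [DecidableEq V] (k : ℕ) (hk : 2 ≤ k)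
    (E : Finset (Finset V)) (huniform : ∀ e ∈ E, e.card = k) :
    ∃ (e : Fin E.card → Finset V) (u v : Fin E.card → V),
      Function.Injective e ∧ (∀ i, e i ∈ E) ∧
      (∀ i, u i ∈ e i) ∧ (∀ i, v i ∈ e i) ∧ (∀ i, u i ≠ v i) ∧
      ∀ i : Fin E.card,
        ((univ.filter (fun j => i < j ∧ e i \ {u i, v i} ⊆ e j)).card : ℝ)
          ≤ (k.choose 2 : ℝ) * (E.card : ℝ) ^ ((1 : ℝ) / ((k / 2 : ℕ) : ℝ)) := by
  obtain ⟨e, u, v, hinj, hmem, hu, hv, huv, hcnt⟩ :=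
    build k hk E huniform E.card E subset_rfl rfl
  exact ⟨e, u, v, hinj, hmem, hu, hv, huv, hcnt⟩
end

section
/- Fix a nonnegative integer t. If f : [r+t] → [r] is a uniformly random surjective function, then the probability that there exists some i ∈ [r] with |f^{-1}(i)| ≥ 3 is O(1/r) as r → ∞ (with implied constant depending only on t). -/
open Finset

/-- Number of surjections `Fin m → Fin k`. -/
def surjCount (k m : ℕ) : ℕ :=
  (univ.filter (fun f : Fin m → Fin k => Function.Surjective f)).card

lemma multi_card_le {M k : ℕ} (g : Fin M → Fin k) (hg : Function.Surjective g) :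
    (univ.filter (fun x : Fin M => ∃ y, y ≠ x ∧ g y = g x)).card + 2 * k ≤ 2 * M := by
  classical
  set V := univ.filter (fun x : Fin M => ∃ y, y ≠ x ∧ g y = g x) with hV
  have hVcard : V.card = ∑ w : Fin k, (V.filter (fun x => g x = w)).card :=
    card_eq_sum_card_fiberwise (fun x _ => mem_univ (g x))
  have hM : M = ∑ w : Fin k, (univ.filter (fun x : Fin M => g x = w)).card := by
    have := card_eq_sum_card_fiberwise (f := g) (s := (univ : Finset (Fin M)))
      (t := (univ : Finset (Fin k))) (fun x _ => mem_univ (g x))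
    simpa using this
  have key : ∀ w : Fin k, (V.filter (fun x => g x = w)).card + 2 ≤
      2 * (univ.filter (fun x : Fin M => g x = w)).card := by
    intro w
    set F := univ.filter (fun x : Fin M => g x = w) with hF
    by_cases h2 : 2 ≤ F.card
    · have hsub : V.filter (fun x => g x = w) ⊆ F := by
        intro x hx
        simp only [mem_filter, hV] at hx
        simp [hF, hx.2]
      have := card_le_card hsub
      omega
    · have hempty : V.filter (fun x => g x = w) = ∅ := by
        rw [Finset.eq_empty_iff_forall_notMem]
        intro x hx
        simp only [mem_filter, mem_univ, true_and, hV] at hx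
        obtain ⟨⟨y, hyx, hyg⟩, hgx⟩ := hx
        have hmem : ({y, x} : Finset (Fin M)) ⊆ F := by
          intro z hz
          simp only [mem_insert, mem_singleton] at hz
          rcases hz with rfl | rfl <;> simp [hF, hyg, hgx]
        have : ({y, x} : Finset (Fin M)).card = 2 := card_pair hyx
        have := card_le_card hmem
        omega
      have h1 : 1 ≤ F.card := by
        obtain ⟨x, hx⟩ := hg w
        have : x ∈ F := by simp [hF, hx]
        exact card_pos.mpr ⟨x, this⟩
      rw [hempty]
      simp only [card_empty]
      omega
  calc V.card + 2 * k
      = ∑ w : Fin k, ((V.filter (fun x => g x = w)).card + 2) := by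
        rw [Finset.sum_add_distrib, ← hVcard]
        simp [mul_comm]
    _ ≤ ∑ w : Fin k, 2 * (univ.filter (fun x : Fin M => g x = w)).card :=
        Finset.sum_le_sum (fun w _ => key w)
    _ = 2 * M := by rw [← Finset.mul_sum, ← hM]

lemma surjCount_step (k m : ℕ) (hkm : k ≤ m) :
    k * m * surjCount k m ≤ (2 * (m + 1 - k)) * surjCount k (m + 1) := by
  classical
  set S := univ.filter (fun f : Fin m → Fin k => Function.Surjective f) with hS
  set T := S ×ˢ (univ : Finset (Fin m × Fin k)) with hT
  set Φ : ((Fin m → Fin k) × (Fin m × Fin k)) → (Fin (m+1) → Fin k) :=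
    fun p => Fin.snoc (Function.update p.1 p.2.1 p.2.2) (p.1 p.2.1) with hΦ
  have eLast : ∀ (h : Fin m → Fin k) (u : Fin m) (a : Fin k),
      Φ (h, u, a) (Fin.last m) = h u := fun h u a => Fin.snoc_last _ _
  have eCast : ∀ (h : Fin m → Fin k) (u : Fin m) (a : Fin k) (y : Fin m),
      Φ (h, u, a) (Fin.castSucc y) = Function.update h u a y :=
    fun h u a y => Fin.snoc_castSucc _ _ y
  have hmaps : ∀ p ∈ T, Φ p ∈ univ.filter
      (fun f : Fin (m+1) → Fin k => Function.Surjective f) := by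
    rintro ⟨h, u, a⟩ hp
    have hh : Function.Surjective h := by
      simp only [hT, mem_product, hS, mem_filter] at hp
      exact hp.1.2
    simp only [mem_filter, mem_univ, true_and]
    intro w
    obtain ⟨y, hy⟩ := hh w
    by_cases hyu : y = u
    · exact ⟨Fin.last m, by rw [eLast, ← hyu, hy]⟩
    · exact ⟨Fin.castSucc y, by rw [eCast, Function.update_of_ne hyu, hy]⟩
  have hfiber : ∀ g ∈ univ.filter (fun f : Fin (m+1) → Fin k => Function.Surjective f),
      (T.filter (fun p => Φ p = g)).card ≤ 2 * (m + 1 - k) := by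
    intro g hg
    have hgs : Function.Surjective g := by simpa using hg
    have key : ∀ p ∈ T.filter (fun p => Φ p = g), p.1 = (fun x =>
        if x = p.2.1 then g (Fin.last m) else g (Fin.castSucc x)) ∧
        p.2.2 = g (Fin.castSucc p.2.1) := by
      rintro ⟨h, u, a⟩ hp
      simp only [mem_filter] at hp
      have hΦg : Φ (h, u, a) = g := hp.2
      constructor
      · funext x
        by_cases hx : x = u
        · subst hx
          have : g (Fin.last m) = h x := by rw [← hΦg, eLast]
          simp [this]
        · have : g (Fin.castSucc x) = h x := by
            rw [← hΦg, eCast, Function.update_of_ne hx]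
          simp [hx, this]
      · have : g (Fin.castSucc u) = a := by
          rw [← hΦg, eCast, Function.update_self]
        exact this.symm
    have hinj : Set.InjOn (fun p : ((Fin m → Fin k) × (Fin m × Fin k)) =>
        Fin.castSucc p.2.1) (T.filter (fun p => Φ p = g)) := by
      rintro ⟨h, u, a⟩ hp ⟨h', u', a'⟩ hq huv
      have huu : u = u' := Fin.castSucc_injective m huv
      subst huu
      obtain ⟨hp1, hp2⟩ := key _ hp
      obtain ⟨hq1, hq2⟩ := key _ hq
      simp only at hp1 hq1 hp2 hq2
      rw [Prod.ext_iff, Prod.ext_iff]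
      exact ⟨hp1.trans hq1.symm, rfl, hp2.trans hq2.symm⟩
    have hmapsV : ∀ p ∈ T.filter (fun p => Φ p = g),
        Fin.castSucc p.2.1 ∈ univ.filter
          (fun x : Fin (m+1) => ∃ y, y ≠ x ∧ g y = g x) := by
      rintro ⟨h, u, a⟩ hp
      simp only [mem_filter, mem_univ, true_and]
      simp only [mem_filter, hT, mem_product, hS] at hp
      have hh : Function.Surjective h := by
        have := hp.1.1
        simpa using this
      have hΦg : Φ (h, u, a) = g := hp.2
      have hga : g (Fin.castSucc u) = a := by
        rw [← hΦg, eCast, Function.update_self]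
      obtain ⟨y, hy⟩ := hh a
      by_cases hyu : y = u
      · refine ⟨Fin.last m, (Fin.castSucc_lt_last u).ne', ?_⟩
        rw [hga, ← hΦg, eLast, ← hyu, hy]
      · refine ⟨Fin.castSucc y, by simpa using fun hc => hyu (Fin.castSucc_injective m hc), ?_⟩
        rw [hga, ← hΦg, eCast, Function.update_of_ne hyu, hy]
    have hle := Finset.card_le_card_of_injOn _ hmapsV hinj
    have := multi_card_le g hgs
    omega
  have hcount := Finset.card_le_mul_card_image_of_maps_to hmaps (2 * (m + 1 - k)) hfiber
  have hTcard : T.card = surjCount k m * (m * k) := by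
    simp [hT, surjCount, hS, Finset.card_product]
  rw [hTcard] at hcount
  calc k * m * surjCount k m = surjCount k m * (m * k) := by ring
    _ ≤ _ := hcount

lemma bad_card_le (r t : ℕ) :
    (univ.filter (fun f : Fin (r + t) → Fin r =>
        Function.Surjective f ∧
        ∃ i : Fin r, 3 ≤ (univ.filter (fun x => f x = i)).card)).card ≤
      (r * ((r + t) * (r + t))) * surjCount r (r + t - 2) := by
  classical
  set n := r + t with hn
  set A : Fin r × Fin n × Fin n → Finset (Fin n → Fin r) := fun p =>
    univ.filter (fun f => Function.Surjective f ∧ f p.2.1 = p.1 ∧ f p.2.2 = p.1 ∧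
      ∃ x, x ≠ p.2.1 ∧ x ≠ p.2.2 ∧ f x = p.1) with hA
  set I : Finset (Fin r × Fin n × Fin n) :=
    univ.filter (fun p => p.2.1 ≠ p.2.2) with hI
  have hsub : (univ.filter (fun f : Fin n → Fin r =>
      Function.Surjective f ∧
      ∃ i : Fin r, 3 ≤ (univ.filter (fun x => f x = i)).card)) ⊆ I.biUnion A := by
    intro f hf
    simp only [mem_filter, mem_univ, true_and] at hf
    obtain ⟨hsurj, i, hi⟩ := hf
    obtain ⟨s, hs_sub, hs_card⟩ :=
      Finset.exists_subset_card_eq hi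
    obtain ⟨x, y, z, hxy, hxz, hyz, rfl⟩ := Finset.card_eq_three.mp hs_card
    have hx : f x = i := by
      have := hs_sub (by simp : x ∈ ({x, y, z} : Finset (Fin n)))
      simpa using this
    have hy : f y = i := by
      have := hs_sub (by simp : y ∈ ({x, y, z} : Finset (Fin n)))
      simpa using this
    have hz : f z = i := by
      have := hs_sub (by simp : z ∈ ({x, y, z} : Finset (Fin n)))
      simpa using this
    rw [mem_biUnion]
    refine ⟨(i, y, z), by simp [hI, hyz], ?_⟩
    simp only [hA, mem_filter, mem_univ, true_and]
    exact ⟨hsurj, hy, hz, x, hxy, hxz, hx⟩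
  have hAcard : ∀ p ∈ I, (A p).card ≤ surjCount r (n - 2) := by
    rintro ⟨i, y, z⟩ hp
    have hyz : y ≠ z := by simpa [hI] using hp
    set s : Finset (Fin n) := {y, z} with hs
    have hcompl : sᶜ.card = n - 2 := by
      rw [card_compl, card_pair hyz]
      simp
    set e := sᶜ.orderIsoOfFin hcompl with he
    set Ψ : (Fin n → Fin r) → (Fin (n - 2) → Fin r) := fun f j => f (e j : Fin n) with hΨ
    have hmaps : ∀ f ∈ A (i, y, z),
        Ψ f ∈ univ.filter (fun g : Fin (n-2) → Fin r => Function.Surjective g) := by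
      intro f hf
      simp only [hA, mem_filter, mem_univ, true_and] at hf
      obtain ⟨hsurj, hy, hz, x₀, hx₀y, hx₀z, hx₀⟩ := hf
      simp only [mem_filter, mem_univ, true_and]
      intro w
      obtain ⟨x, hx⟩ := hsurj w
      by_cases hxs : x ∈ sᶜ
      · obtain ⟨j, hj⟩ := e.surjective ⟨x, hxs⟩
        exact ⟨j, by rw [hΨ]; simp only [hj]; exact hx⟩
      · have himp : ¬x = y → x = z := by
          simpa [hs, Finset.mem_compl] using hxs
        have hxyz : x = y ∨ x = z := or_iff_not_imp_left.mpr himp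
        have hwi : w = i := by
          rcases hxyz with rfl | rfl
          · rw [← hx]; exact hy
          · rw [← hx]; exact hz
        have hx₀s : x₀ ∈ sᶜ := by simp [hs, Finset.mem_compl, hx₀y, hx₀z]
        obtain ⟨j, hj⟩ := e.surjective ⟨x₀, hx₀s⟩
        refine ⟨j, ?_⟩
        rw [hΨ]
        simp only [hj]
        rw [hx₀, hwi]
    have hinj : Set.InjOn Ψ (A (i, y, z)) := by
      intro f hf g hg hfg
      simp only [Finset.mem_coe, hA, mem_filter, mem_univ, true_and] at hf hg
      funext x
      by_cases hxs : x ∈ sᶜ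
      · obtain ⟨j, hj⟩ := e.surjective ⟨x, hxs⟩
        have := congrFun hfg j
        rw [hΨ] at this
        simp only [hj] at this
        exact this
      · have himp : ¬x = y → x = z := by simpa [hs, Finset.mem_compl] using hxs
        have hxyz : x = y ∨ x = z := or_iff_not_imp_left.mpr himp
        rcases hxyz with rfl | rfl
        · rw [hf.2.1, hg.2.1]
        · rw [hf.2.2.1, hg.2.2.1]
    exact Finset.card_le_card_of_injOn Ψ hmaps hinj
  calc (univ.filter (fun f : Fin n → Fin r =>
      Function.Surjective f ∧
      ∃ i : Fin r, 3 ≤ (univ.filter (fun x => f x = i)).card)).card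
      ≤ (I.biUnion A).card := card_le_card hsub
    _ ≤ ∑ p ∈ I, (A p).card := card_biUnion_le
    _ ≤ I.card • surjCount r (n - 2) := Finset.sum_le_card_nsmul _ _ _ hAcard
    _ ≤ (r * (n * n)) * surjCount r (n - 2) := by
        rw [smul_eq_mul]
        apply Nat.mul_le_mul_right
        calc I.card ≤ (univ : Finset (Fin r × Fin n × Fin n)).card := card_filter_le _ _
          _ = r * (n * n) := by simp [Fintype.card_prod]

lemma surjCount_eq_zero {k m : ℕ} (h : m < k) : surjCount k m = 0 := by
  rw [surjCount, Finset.card_eq_zero, Finset.filter_eq_empty_iff]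
  intro f _ hf
  have := Fintype.card_le_of_surjective f hf
  simp only [Fintype.card_fin] at this
  omega

lemma surjCount_pos (r t : ℕ) (hr : 1 ≤ r) : 0 < surjCount r (r + t) := by
  rw [surjCount, Finset.card_pos]
  refine ⟨fun x => if h : (x : ℕ) < r then ⟨x, h⟩ else ⟨0, hr⟩, ?_⟩
  simp only [mem_filter, mem_univ, true_and]
  intro w
  refine ⟨⟨(w : ℕ), lt_of_lt_of_le w.2 (Nat.le_add_right r t)⟩, ?_⟩
  simp [w.2]

lemma main_nat (r t : ℕ) (hr : 1 ≤ r) (N : ℕ)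
    (h1x : N ≤ r * ((r + t) * (r + t)) * surjCount r (r + t - 2)) :
    N * r ≤ 4 * (t + 1) ^ 4 * surjCount r (r + t) := by
    by_cases ht : 2 ≤ t
    · have h1 : N ≤ (r * ((r + t) * (r + t))) * surjCount r (r + t - 2) := h1x
      have e2 : r + t - 2 + 1 = r + t - 1 := by omega
      have e1 : r + t - 1 + 1 = r + t := by omega
      have h2 := surjCount_step r (r + t - 2) (by omega)
      rw [e2] at h2
      have h3 := surjCount_step r (r + t - 1) (by omega)
      rw [e1] at h3
      have a2 : r * r * surjCount r (r + t - 2) ≤ 2 * t * surjCount r (r + t - 1) := by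
        calc r * r * surjCount r (r + t - 2) ≤ r * (r + t - 2) * surjCount r (r + t - 2) := by
              gcongr
              omega
          _ ≤ (2 * (r + t - 1 - r)) * surjCount r (r + t - 1) := h2
          _ ≤ 2 * t * surjCount r (r + t - 1) := by
              gcongr
              omega
      have a1 : r * r * surjCount r (r + t - 1) ≤ 2 * t * surjCount r (r + t) := by
        calc r * r * surjCount r (r + t - 1) ≤ r * (r + t - 1) * surjCount r (r + t - 1) := by
              gcongr
              omega
          _ ≤ (2 * (r + t - r)) * surjCount r (r + t) := h3
          _ ≤ 2 * t * surjCount r (r + t) := by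
              gcongr
              omega
      have hr4 : r * r * (r * r * surjCount r (r + t - 2)) ≤
          2 * t * (2 * t * surjCount r (r + t)) := by
        calc r * r * (r * r * surjCount r (r + t - 2))
            ≤ r * r * (2 * t * surjCount r (r + t - 1)) := Nat.mul_le_mul_left _ a2
          _ = 2 * t * (r * r * surjCount r (r + t - 1)) := by ring
          _ ≤ 2 * t * (2 * t * surjCount r (r + t)) := Nat.mul_le_mul_left _ a1
      have h5 : r + t ≤ (t + 1) * r := by
        have htr : t * 1 ≤ t * r := Nat.mul_le_mul_left t hr
        linarith [htr]
      have coeff : 4 * t * t * ((r + t) * (r + t)) ≤ 4 * (t + 1) ^ 4 * (r * r) := by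
        calc 4 * t * t * ((r + t) * (r + t))
            ≤ 4 * t * t * (((t + 1) * r) * ((t + 1) * r)) := by gcongr
          _ = (4 * (t * t * ((t + 1) * (t + 1)))) * (r * r) := by ring
          _ ≤ (4 * ((t + 1) * (t + 1) * ((t + 1) * (t + 1)))) * (r * r) := by
              gcongr <;> exact Nat.le_succ t
          _ = 4 * (t + 1) ^ 4 * (r * r) := by ring
      have keymul : (N * r) * (r * r) ≤ (4 * (t + 1) ^ 4 * surjCount r (r + t)) * (r * r) := by
        calc (N * r) * (r * r) = N * (r * (r * r)) := by ring
          _ ≤ ((r * ((r + t) * (r + t))) * surjCount r (r + t - 2)) * (r * (r * r)) :=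
              Nat.mul_le_mul_right _ h1
          _ = ((r + t) * (r + t)) * (r * r * (r * r * surjCount r (r + t - 2))) := by ring
          _ ≤ ((r + t) * (r + t)) * (2 * t * (2 * t * surjCount r (r + t))) :=
              Nat.mul_le_mul_left _ hr4
          _ = (4 * t * t * ((r + t) * (r + t))) * surjCount r (r + t) := by ring
          _ ≤ (4 * (t + 1) ^ 4 * (r * r)) * surjCount r (r + t) :=
              Nat.mul_le_mul_right _ coeff
          _ = (4 * (t + 1) ^ 4 * surjCount r (r + t)) * (r * r) := by ring
      exact Nat.le_of_mul_le_mul_right keymul (by positivity)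
    · have hzero : surjCount r (r + t - 2) = 0 := surjCount_eq_zero (by omega)
      have h1 : N ≤ (r * ((r + t) * (r + t))) * surjCount r (r + t - 2) := h1x
      rw [hzero, Nat.mul_zero] at h1
      simp [Nat.le_zero.mp h1]

/-- For a uniformly random surjection `f : [r+t] → [r]`, the probability that some value
has at least 3 preimages is `O(1/r)`. -/
theorem stmt_4 (t : ℕ) :
    ∃ C : ℝ, ∀ r : ℕ, 1 ≤ r →
      (((univ.filter (fun f : Fin (r + t) → Fin r =>
            Function.Surjective f ∧
            ∃ i : Fin r, 3 ≤ (univ.filter (fun x => f x = i)).card)).card : ℝ) /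
          ((univ.filter (fun f : Fin (r + t) → Fin r => Function.Surjective f)).card : ℝ))
        ≤ C / r := by
  refine ⟨4 * (t + 1) ^ 4, ?_⟩
  intro r hr
  set N := (univ.filter (fun f : Fin (r + t) → Fin r =>
      Function.Surjective f ∧
      ∃ i : Fin r, 3 ≤ (univ.filter (fun x => f x = i)).card)).card with hN
  have hD : (univ.filter (fun f : Fin (r + t) → Fin r => Function.Surjective f)).card
      = surjCount r (r + t) := rfl
  rw [hD]
  have hDpos : 0 < surjCount r (r + t) := surjCount_pos r t hr
  have hrpos : (0 : ℝ) < r := by exact_mod_cast hr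
  rw [div_le_div_iff₀ (by exact_mod_cast hDpos) hrpos]
  -- suffices to prove the natural-number inequality N * r ≤ 4*(t+1)^4 * surjCount r (r+t)
  have key : N * r ≤ 4 * (t + 1) ^ 4 * surjCount r (r + t) :=
    main_nat r t hr N (bad_card_le r t)
  calc (N : ℝ) * r ≤ ((4 * (t + 1) ^ 4 * surjCount r (r + t) : ℕ) : ℝ) := by
        exact_mod_cast key
    _ = 4 * (t + 1) ^ 4 * (surjCount r (r + t) : ℝ) := by push_cast; ring
end

section
/- Fix a nonnegative integer t and a prime r larger than some r_0(t). Let P = {b_1, ..., b_r} be a profile (a multiset of integers arising as (|f^{-1}(i) ∩ [r]| − 1)_{i∈[r]} for some surjection f : [r+t] → [r]) with exactly j negative elements. Let p(P) be the probability that Σ_{i=1}^r b_i λ_i ≡ 0 (mod r) when (λ_1, ..., λ_r) is a uniformly random permutation of (0, 1, ..., r−1). Then |p(P) − 1/r| = O_t(r^{-j}). -/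
open Finset

section auxlemmas

variable {ι : Type*} [Fintype ι] [DecidableEq ι] {r : ℕ}

open scoped Classical in
/-- Number of `x : ι → ZMod r` injective on `S`, vanishing off `S`,
with `∑_{i∈S} c i * x i = 0`. -/
noncomputable def Icount (r : ℕ) [NeZero r] (S : Finset ι) (c : ι → ℤ) : ℕ :=
  (univ.filter (fun x : ι → ZMod r =>
    Set.InjOn x S ∧ (∀ i ∉ S, x i = 0) ∧ ∑ i ∈ S, (c i : ZMod r) * x i = 0)).card

open scoped Classical in
/-- Number of `x : ι → ZMod r` injective on `S`, vanishing off `S`. -/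
noncomputable def Jcount (r : ℕ) [NeZero r] (S : Finset ι) : ℕ :=
  (univ.filter (fun x : ι → ZMod r =>
    Set.InjOn x S ∧ (∀ i ∉ S, x i = 0))).card

/-- A partition of `S` into nonempty zero-sum (w.r.t. `c`) blocks. -/
def IsZSP (S : Finset ι) (c : ι → ℤ) (P : Finset (Finset ι)) : Prop :=
  (∀ B ∈ P, B.Nonempty ∧ B ⊆ S ∧ ∑ i ∈ B, c i = 0) ∧
  (∀ a ∈ S, ∃ B ∈ P, a ∈ B) ∧
  (P : Set (Finset ι)).PairwiseDisjoint id

set_option linter.unusedSectionVars false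

lemma Jcount_eq (r : ℕ) [NeZero r] (S : Finset ι) :
    Jcount r S = r.descFactorial S.card := by
  classical
  let e : {x : ι → ZMod r // Set.InjOn x S ∧ ∀ i ∉ S, x i = 0} ≃ (↥S ↪ ZMod r) :=
  { toFun := fun x => ⟨fun i => x.1 i, fun a b hab => Subtype.ext (x.2.1 a.2 b.2 hab)⟩
    invFun := fun f => ⟨fun i => if h : i ∈ S then f ⟨i, h⟩ else 0, by
      refine ⟨fun a ha b hb hab => ?_, fun i hi => dif_neg hi⟩
      rw [Finset.mem_coe] at ha hb
      simp only [dif_pos ha, dif_pos hb] at hab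
      exact congrArg Subtype.val (f.injective hab)⟩
    left_inv := by
      intro x
      ext i
      by_cases h : i ∈ S
      · simp [dif_pos h]; rfl
      · simp [dif_neg h, x.2.2 i h]
    right_inv := by
      intro f
      ext i
      simp [dif_pos i.2] }
  have h1 : Jcount r S = Fintype.card {x : ι → ZMod r // Set.InjOn x S ∧ ∀ i ∉ S, x i = 0} := by
    rw [Fintype.card_subtype]
    rfl
  rw [h1, Fintype.card_congr e, Fintype.card_embedding_eq, ZMod.card, Fintype.card_coe]

lemma Icount_of_zero [NeZero r] {S : Finset ι} {c : ι → ℤ}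
    (hall : ∀ i ∈ S, c i = 0) : Icount r S c = Jcount r S := by
  classical
  unfold Icount Jcount
  congr 1
  apply Finset.filter_congr
  intro x _
  have hs : ∑ i ∈ S, (c i : ZMod r) * x i = 0 :=
    Finset.sum_eq_zero fun i hi => by rw [hall i hi]; simp
  constructor
  · rintro ⟨h1, h2, _⟩; exact ⟨h1, h2⟩
  · rintro ⟨h1, h2⟩; exact ⟨h1, h2, hs⟩

lemma Icount_erase_zero [NeZero r] {S : Finset ι} {c : ι → ℤ} {m : ι}
    (hm : m ∈ S) (hcm : c m = 0) :
    Icount r S c = (r - (S.card - 1)) * Icount r (S.erase m) c := by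
  classical
  unfold Icount
  set S' := S.erase m with hS'
  have hmS' : m ∉ S' := Finset.notMem_erase m S
  set A := (univ.filter (fun x : ι → ZMod r =>
    Set.InjOn x S ∧ (∀ i ∉ S, x i = 0) ∧ ∑ i ∈ S, (c i : ZMod r) * x i = 0)) with hA
  set A' := (univ.filter (fun x : ι → ZMod r =>
    Set.InjOn x S' ∧ (∀ i ∉ S', x i = 0) ∧ ∑ i ∈ S', (c i : ZMod r) * x i = 0)) with hA'
  have hsum_split : ∀ x : ι → ZMod r,
      ∑ i ∈ S, (c i : ZMod r) * x i = ∑ i ∈ S', (c i : ZMod r) * x i := by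
    intro x
    rw [← Finset.add_sum_erase S _ hm, hcm]
    simp; rfl
  have hmaps : ∀ x ∈ A, Function.update x m 0 ∈ A' := by
    intro x hx
    rw [hA, Finset.mem_filter] at hx
    obtain ⟨-, hinj, hsupp, hs⟩ := hx
    rw [hA', Finset.mem_filter]
    refine ⟨Finset.mem_univ _, ?_, ?_, ?_⟩
    · intro a ha b hb hab
      rw [Finset.mem_coe] at ha hb
      have ha' := Finset.mem_of_mem_erase ha
      have hb' := Finset.mem_of_mem_erase hb
      rw [Function.update_of_ne (Finset.ne_of_mem_erase ha),
        Function.update_of_ne (Finset.ne_of_mem_erase hb)] at hab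
      exact hinj ha' hb' hab
    · intro i hi
      by_cases h : i = m
      · rw [h]; simp
      · rw [Function.update_of_ne h]
        exact hsupp i (fun hiS => hi (Finset.mem_erase.mpr ⟨h, hiS⟩))
    · have heq : ∑ i ∈ S', (c i : ZMod r) * Function.update x m 0 i
          = ∑ i ∈ S', (c i : ZMod r) * x i :=
        Finset.sum_congr rfl (fun i hi => by
          rw [Function.update_of_ne (Finset.ne_of_mem_erase hi)])
      rw [heq, ← hsum_split, hs]
  have hSins : (S : Set ι) = insert m (S' : Set ι) := by
    rw [hS', ← Finset.coe_insert, Finset.insert_erase hm]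
  have hfiber : ∀ y ∈ A', (A.filter fun x => Function.update x m 0 = y).card
      = r - (S.card - 1) := by
    intro y hy
    rw [hA', Finset.mem_filter] at hy
    obtain ⟨-, hinjy, hsuppy, hsumy⟩ := hy
    have hym : y m = 0 := hsuppy m hmS'
    have htcard : ((univ : Finset (ZMod r)) \ S'.image y).card = r - (S.card - 1) := by
      rw [Finset.card_sdiff_of_subset (Finset.subset_univ _), Finset.card_univ, ZMod.card,
        Finset.card_image_of_injOn hinjy, hS', Finset.card_erase_of_mem hm]
    rw [← htcard]
    apply Finset.card_bij (fun x _ => x m)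
    · intro x hx
      rw [Finset.mem_filter] at hx
      obtain ⟨hxA, hxy⟩ := hx
      rw [hA, Finset.mem_filter] at hxA
      obtain ⟨-, hinj, hsupp, -⟩ := hxA
      rw [Finset.mem_sdiff]
      refine ⟨Finset.mem_univ _, ?_⟩
      intro hmem
      obtain ⟨a, ha, hya⟩ := Finset.mem_image.mp hmem
      have hxa : y a = x a := by
        rw [← hxy, Function.update_of_ne (Finset.ne_of_mem_erase ha)]
      have : a = m := hinj (Finset.mem_of_mem_erase ha) hm (by rw [← hxa, hya])
      exact (Finset.ne_of_mem_erase ha) this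
    · intro x1 hx1 x2 hx2 hv
      rw [Finset.mem_filter] at hx1 hx2
      funext i
      by_cases h : i = m
      · rw [h]; exact hv
      · have e1 := congrFun hx1.2 i
        have e2 := congrFun hx2.2 i
        rw [Function.update_of_ne h] at e1 e2
        rw [e1, e2]
    · intro v hv
      rw [Finset.mem_sdiff] at hv
      obtain ⟨-, hvim⟩ := hv
      refine ⟨Function.update y m v, ?_, Function.update_self m v y⟩
      rw [Finset.mem_filter]
      constructor
      · rw [hA, Finset.mem_filter]
        refine ⟨Finset.mem_univ _, ?_, ?_, ?_⟩
        · rw [hSins]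
          rw [Set.injOn_insert (fun h => hmS' (Finset.mem_coe.mp h))]
          constructor
          · intro a ha b hb hab
            rw [Finset.mem_coe] at ha hb
            rw [Function.update_of_ne (Finset.ne_of_mem_erase ha),
              Function.update_of_ne (Finset.ne_of_mem_erase hb)] at hab
            exact hinjy ha hb hab
          · rw [Function.update_self]
            rintro ⟨a, ha, hav⟩
            rw [Finset.mem_coe] at ha
            rw [Function.update_of_ne (Finset.ne_of_mem_erase ha)] at hav
            exact hvim (Finset.mem_image.mpr ⟨a, ha, hav⟩)
        · intro i hi
          have him : i ≠ m := fun h => hi (h ▸ hm)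
          rw [Function.update_of_ne him]
          exact hsuppy i (fun hiS => hi (Finset.mem_of_mem_erase hiS))
        · rw [hsum_split]
          have heq : ∑ i ∈ S', (c i : ZMod r) * Function.update y m v i
              = ∑ i ∈ S', (c i : ZMod r) * y i :=
            Finset.sum_congr rfl (fun i hi => by
              rw [Function.update_of_ne (Finset.ne_of_mem_erase hi)])
          rw [heq, hsumy]
      · funext i
        by_cases h : i = m
        · rw [h]; simp [hym]
        · simp [Function.update_of_ne h]
  rw [Finset.card_eq_sum_card_fiberwise hmaps,
    Finset.sum_congr rfl hfiber, Finset.sum_const, smul_eq_mul, mul_comm]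

lemma Icount_key [NeZero r] [Fact r.Prime] {S : Finset ι} {c : ι → ℤ} {m : ι}
    (hm : m ∈ S) (hcm : (c m : ZMod r) ≠ 0) :
    Icount r S c + ∑ i ∈ S.erase m, Icount r (S.erase m)
      (Function.update c i (c i + c m)) = r.descFactorial (S.card - 1) := by
  classical
  set S' := S.erase m with hS'
  have hmS' : m ∉ S' := Finset.notMem_erase m S
  have hSins : (S : Set ι) = insert m (S' : Set ι) := by
    rw [hS', ← Finset.coe_insert, Finset.insert_erase hm]
  set B := (univ.filter (fun x : ι → ZMod r =>
    Set.InjOn x S' ∧ (∀ i ∉ S, x i = 0) ∧ ∑ i ∈ S, (c i : ZMod r) * x i = 0)) with hB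
  -- agreement of sums for functions agreeing on S'
  have hagree : ∀ x : ι → ZMod r, ∀ d : ι → ℤ,
      ∑ i ∈ S', (d i : ZMod r) * (Function.update x m 0) i
        = ∑ i ∈ S', (d i : ZMod r) * x i :=
    fun x d => Finset.sum_congr rfl (fun i hi => by
      rw [Function.update_of_ne (Finset.ne_of_mem_erase hi)])
  have hsum_split : ∀ x : ι → ZMod r,
      ∑ i ∈ S, (c i : ZMod r) * x i
        = (c m : ZMod r) * x m + ∑ i ∈ S', (c i : ZMod r) * x i := by
    intro x
    rw [← Finset.add_sum_erase S _ hm]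
  -- Step A : B.card = descFactorial
  have hBcard : B.card = r.descFactorial (S.card - 1) := by
    have : B.card = Jcount r S' := by
      rw [Jcount]
      apply Finset.card_bij (fun x _ => Function.update x m 0)
      · intro x hx
        rw [hB, Finset.mem_filter] at hx
        obtain ⟨-, hinj, hsupp, hsum⟩ := hx
        rw [Finset.mem_filter]
        refine ⟨Finset.mem_univ _, ?_, ?_⟩
        · intro a ha b hb hab
          rw [Finset.mem_coe] at ha hb
          rw [Function.update_of_ne (Finset.ne_of_mem_erase ha),
            Function.update_of_ne (Finset.ne_of_mem_erase hb)] at hab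
          exact hinj ha hb hab
        · intro i hi
          by_cases h : i = m
          · rw [h]; simp
          · rw [Function.update_of_ne h]
            exact hsupp i (fun hiS => hi (Finset.mem_erase.mpr ⟨h, hiS⟩))
      · intro x1 hx1 x2 hx2 hv
        rw [hB, Finset.mem_filter] at hx1 hx2
        obtain ⟨-, -, -, hsum1⟩ := hx1
        obtain ⟨-, -, -, hsum2⟩ := hx2
        have hoff : ∀ i, i ≠ m → x1 i = x2 i := by
          intro i hi
          have := congrFun hv i
          rwa [Function.update_of_ne hi, Function.update_of_ne hi] at this
        have hS'sum : ∑ i ∈ S', (c i : ZMod r) * x1 i = ∑ i ∈ S', (c i : ZMod r) * x2 i :=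
          Finset.sum_congr rfl (fun i hi => by rw [hoff i (Finset.ne_of_mem_erase hi)])
        rw [hsum_split] at hsum1 hsum2
        have hmm : (c m : ZMod r) * x1 m = (c m : ZMod r) * x2 m := by
          have := hsum1.trans hsum2.symm
          rw [hS'sum] at this
          exact add_right_cancel this
        funext i
        by_cases h : i = m
        · rw [h]; exact mul_left_cancel₀ hcm hmm
        · exact hoff i h
      · intro y hy
        rw [Finset.mem_filter] at hy
        obtain ⟨-, hinjy, hsuppy⟩ := hy
        have hym : y m = 0 := hsuppy m hmS'
        set v : ZMod r := -((c m : ZMod r)⁻¹ * ∑ i ∈ S', (c i : ZMod r) * y i) with hv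
        refine ⟨Function.update y m v, ?_, ?_⟩
        · rw [hB, Finset.mem_filter]
          refine ⟨Finset.mem_univ _, ?_, ?_, ?_⟩
          · intro a ha b hb hab
            rw [Finset.mem_coe] at ha hb
            rw [Function.update_of_ne (Finset.ne_of_mem_erase ha),
              Function.update_of_ne (Finset.ne_of_mem_erase hb)] at hab
            exact hinjy ha hb hab
          · intro i hi
            have him : i ≠ m := fun h => hi (h ▸ hm)
            rw [Function.update_of_ne him]
            exact hsuppy i (fun hiS => hi (Finset.mem_of_mem_erase hiS))
          · rw [hsum_split, Function.update_self]
            have heq : ∑ i ∈ S', (c i : ZMod r) * Function.update y m v i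
                = ∑ i ∈ S', (c i : ZMod r) * y i :=
              Finset.sum_congr rfl (fun i hi => by
                rw [Function.update_of_ne (Finset.ne_of_mem_erase hi)])
            rw [heq, hv]
            field_simp
            ring
        · funext i
          by_cases h : i = m
          · rw [h]; simp [hym]
          · simp [Function.update_of_ne h]
    rw [this, Jcount_eq, hS', Finset.card_erase_of_mem hm]
  -- Step B : splitting B
  set A := (univ.filter (fun x : ι → ZMod r =>
    Set.InjOn x S ∧ (∀ i ∉ S, x i = 0) ∧ ∑ i ∈ S, (c i : ZMod r) * x i = 0)) with hA
  have hIA : Icount r S c = A.card := rfl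
  have hsplit : B.card = A.card + ∑ i ∈ S', (B.filter (fun x => x i = x m)).card := by
    have h1 : A = B.filter (fun x => ∀ i ∈ S', x i ≠ x m) := by
      ext x
      rw [hA, hB, Finset.mem_filter, Finset.mem_filter, Finset.mem_filter]
      constructor
      · rintro ⟨hu, hinj, hsupp, hsum⟩
        have hinj' : Set.InjOn x S' ∧ x m ∉ x '' (S' : Set ι) := by
          rw [← Set.injOn_insert (fun h => hmS' (Finset.mem_coe.mp h)), ← hSins]
          exact hinj
        refine ⟨⟨hu, hinj'.1, hsupp, hsum⟩, ?_⟩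
        intro i hi hxi
        exact hinj'.2 ⟨i, Finset.mem_coe.mpr hi, hxi⟩
      · rintro ⟨⟨hu, hinj, hsupp, hsum⟩, hne⟩
        refine ⟨hu, ?_, hsupp, hsum⟩
        rw [hSins, Set.injOn_insert (fun h => hmS' (Finset.mem_coe.mp h))]
        refine ⟨hinj, ?_⟩
        rintro ⟨a, ha, hav⟩
        exact hne a (Finset.mem_coe.mp ha) hav
    have h2 : B.filter (fun x => ¬ ∀ i ∈ S', x i ≠ x m)
        = S'.biUnion (fun i => B.filter (fun x => x i = x m)) := by
      ext x
      rw [Finset.mem_filter, Finset.mem_biUnion]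
      constructor
      · rintro ⟨hxB, hne⟩
        push_neg at hne
        obtain ⟨i, hi, hxi⟩ := hne
        exact ⟨i, hi, Finset.mem_filter.mpr ⟨hxB, hxi⟩⟩
      · rintro ⟨i, hi, hx⟩
        rw [Finset.mem_filter] at hx
        refine ⟨hx.1, ?_⟩
        push_neg
        exact ⟨i, hi, hx.2⟩
    have h3 : (S'.biUnion (fun i => B.filter (fun x => x i = x m))).card
        = ∑ i ∈ S', (B.filter (fun x => x i = x m)).card := by
      apply Finset.card_biUnion
      intro i hi j hj hij
      rw [Function.onFun, Finset.disjoint_left]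
      intro x hx1 hx2
      rw [Finset.mem_filter] at hx1 hx2
      have hinj : Set.InjOn x S' := (Finset.mem_filter.mp hx1.1).2.1
      exact hij (hinj (Finset.mem_coe.mpr hi) (Finset.mem_coe.mpr hj)
        (hx1.2.trans hx2.2.symm))
    rw [← Finset.card_filter_add_card_filter_not
      (p := fun x => ∀ i ∈ S', x i ≠ x m) (s := B), ← h1, h2, h3]
  -- Step C : each piece is a merged Icount
  have hsum_merge : ∀ i ∈ S', ∀ x : ι → ZMod r, x i = x m →
      ∑ j ∈ S', ((Function.update c i (c i + c m) j : ℤ) : ZMod r) * x j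
        = ∑ j ∈ S, (c j : ZMod r) * x j := by
    intro i hi x hxi
    rw [hsum_split x, ← Finset.add_sum_erase S' (fun j => (c j : ZMod r) * x j) hi,
      ← Finset.add_sum_erase S' (fun j => ((Function.update c i (c i + c m) j : ℤ) : ZMod r) * x j) hi]
    have herase : ∑ j ∈ S'.erase i, ((Function.update c i (c i + c m) j : ℤ) : ZMod r) * x j
        = ∑ j ∈ S'.erase i, (c j : ZMod r) * x j :=
      Finset.sum_congr rfl (fun j hj => by
        rw [Function.update_of_ne (Finset.ne_of_mem_erase hj)])
    rw [herase, Function.update_self, hxi]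
    push_cast
    ring
  have hpiece : ∀ i ∈ S', (B.filter (fun x => x i = x m)).card
      = Icount r S' (Function.update c i (c i + c m)) := by
    intro i hi
    have him : i ≠ m := Finset.ne_of_mem_erase hi
    rw [Icount]
    apply Finset.card_bij (fun x _ => Function.update x m 0)
    · intro x hx
      rw [Finset.mem_filter, hB, Finset.mem_filter] at hx
      obtain ⟨⟨-, hinj, hsupp, hsum⟩, hxi⟩ := hx
      rw [Finset.mem_filter]
      refine ⟨Finset.mem_univ _, ?_, ?_, ?_⟩
      · intro a ha b hb hab
        rw [Finset.mem_coe] at ha hb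
        rw [Function.update_of_ne (Finset.ne_of_mem_erase ha),
          Function.update_of_ne (Finset.ne_of_mem_erase hb)] at hab
        exact hinj ha hb hab
      · intro j hj
        by_cases h : j = m
        · rw [h]; simp
        · rw [Function.update_of_ne h]
          exact hsupp j (fun hjS => hj (Finset.mem_erase.mpr ⟨h, hjS⟩))
      · rw [hagree x, hsum_merge i hi x hxi, hsum]
    · intro x1 hx1 hx2' hx2 hv
      rw [Finset.mem_filter] at hx1 hx2
      obtain ⟨hx1B, hx1i⟩ := hx1
      obtain ⟨hx2B, hx2i⟩ := hx2
      have hoff : ∀ j, j ≠ m → x1 j = hx2' j := by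
        intro j hj
        have := congrFun hv j
        rwa [Function.update_of_ne hj, Function.update_of_ne hj] at this
      funext j
      by_cases h : j = m
      · rw [h, ← hx1i, ← hx2i]
        exact hoff i him
      · exact hoff j h
    · intro y hy
      rw [Finset.mem_filter] at hy
      obtain ⟨-, hinjy, hsuppy, hsumy⟩ := hy
      have hym : y m = 0 := hsuppy m hmS'
      refine ⟨Function.update y m (y i), ?_, ?_⟩
      · rw [Finset.mem_filter, hB, Finset.mem_filter]
        have hxi : Function.update y m (y i) i = Function.update y m (y i) m := by
          rw [Function.update_of_ne him, Function.update_self]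
        refine ⟨⟨Finset.mem_univ _, ?_, ?_, ?_⟩, hxi⟩
        · intro a ha b hb hab
          rw [Finset.mem_coe] at ha hb
          rw [Function.update_of_ne (Finset.ne_of_mem_erase ha),
            Function.update_of_ne (Finset.ne_of_mem_erase hb)] at hab
          exact hinjy ha hb hab
        · intro j hj
          have hjm : j ≠ m := fun h => hj (h ▸ hm)
          rw [Function.update_of_ne hjm]
          exact hsuppy j (fun hjS => hj (Finset.mem_of_mem_erase hjS))
        · rw [← hsum_merge i hi _ hxi]
          have heq : ∑ j ∈ S', ((Function.update c i (c i + c m) j : ℤ) : ZMod r)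
                * Function.update y m (y i) j
              = ∑ j ∈ S', ((Function.update c i (c i + c m) j : ℤ) : ZMod r) * y j :=
            Finset.sum_congr rfl (fun j hj => by
              rw [Function.update_of_ne (Finset.ne_of_mem_erase hj)])
          rw [heq, hsumy]
      · funext j
        by_cases h : j = m
        · rw [h]; simp [hym]
        · simp [Function.update_of_ne h]
  rw [hIA, Finset.sum_congr rfl (fun i hi => (hpiece i hi).symm), ← hsplit, hBcard]

lemma zsp_lift {S : Finset ι} {c : ι → ℤ} {m i : ι} (hm : m ∈ S) (hi : i ∈ S.erase m)
    {P : Finset (Finset ι)} (hP : IsZSP (S.erase m) (Function.update c i (c i + c m)) P) :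
    ∃ Q : Finset (Finset ι), IsZSP S c Q ∧ Q.card = P.card := by
  classical
  obtain ⟨hblocks, hcover, hdisj⟩ := hP
  have hmB : ∀ B ∈ P, m ∉ B := fun B hB hmem =>
    Finset.notMem_erase m S ((hblocks B hB).2.1 hmem)
  set g : Finset ι → Finset ι := fun B => if i ∈ B then insert m B else B with hg
  have hmemg : ∀ B ∈ P, ∀ x, x ∈ g B ↔ (x ∈ B ∨ (x = m ∧ i ∈ B)) := by
    intro B hB x
    rw [hg]
    by_cases h : i ∈ B
    · simp only [if_pos h, Finset.mem_insert]
      tauto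
    · simp only [if_neg h]
      tauto
  refine ⟨P.image g, ⟨?_, ?_, ?_⟩, ?_⟩
  · rintro B' hB'
    obtain ⟨B, hB, rfl⟩ := Finset.mem_image.mp hB'
    obtain ⟨hne, hsub, hsum⟩ := hblocks B hB
    by_cases h : i ∈ B
    · rw [hg]
      simp only [if_pos h]
      refine ⟨Finset.insert_nonempty _ _, ?_, ?_⟩
      · intro x hx
        rcases Finset.mem_insert.mp hx with rfl | hx
        · exact hm
        · exact Finset.mem_of_mem_erase (hsub hx)
      · have herase : ∑ j ∈ B.erase i, Function.update c i (c i + c m) j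
            = ∑ j ∈ B.erase i, c j :=
          Finset.sum_congr rfl (fun j hj => Function.update_of_ne (Finset.ne_of_mem_erase hj) _ _)
        rw [← Finset.add_sum_erase B _ h, Function.update_self, herase] at hsum
        rw [Finset.sum_insert (hmB B hB), ← Finset.add_sum_erase B c h]
        linarith
    · rw [hg]
      simp only [if_neg h]
      refine ⟨hne, fun x hx => Finset.mem_of_mem_erase (hsub hx), ?_⟩
      have herase : ∑ j ∈ B, Function.update c i (c i + c m) j = ∑ j ∈ B, c j :=
        Finset.sum_congr rfl (fun j hj => Function.update_of_ne (fun e : j = i => h (e ▸ hj)) _ _)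
      rw [← herase, hsum]
  · intro a ha
    by_cases h : a = m
    · obtain ⟨B, hB, hiB⟩ := hcover i hi
      refine ⟨g B, Finset.mem_image_of_mem g hB, ?_⟩
      rw [hmemg B hB]
      exact Or.inr ⟨h, hiB⟩
    · obtain ⟨B, hB, haB⟩ := hcover a (Finset.mem_erase.mpr ⟨h, ha⟩)
      refine ⟨g B, Finset.mem_image_of_mem g hB, ?_⟩
      rw [hmemg B hB]
      exact Or.inl haB
  · intro B1' hB1' B2' hB2' hne
    obtain ⟨B1, hB1, rfl⟩ := Finset.mem_image.mp (Finset.mem_coe.mp hB1')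
    obtain ⟨B2, hB2, rfl⟩ := Finset.mem_image.mp (Finset.mem_coe.mp hB2')
    have hBne : B1 ≠ B2 := fun e => hne (e ▸ rfl)
    have hd := hdisj (Finset.mem_coe.mpr hB1) (Finset.mem_coe.mpr hB2) hBne
    rw [Function.onFun, Finset.disjoint_left] at hd
    rw [Function.onFun]
    rw [Finset.disjoint_left]
    intro x hx1 hx2
    rw [id_eq] at hx1 hx2
    rw [hmemg B1 hB1] at hx1
    rw [hmemg B2 hB2] at hx2
    rcases hx1 with hx1 | ⟨rfl, hi1⟩
    · rcases hx2 with hx2 | ⟨rfl, hi2⟩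
      · exact hd hx1 hx2
      · exact hmB B1 hB1 hx1
    · rcases hx2 with hx2 | ⟨-, hi2⟩
      · exact hmB B2 hB2 hx2
      · exact hd hi1 hi2
  · apply Finset.card_image_of_injOn
    intro B1 hB1 B2 hB2 he
    rw [Finset.mem_coe] at hB1 hB2
    by_contra hBne
    have hd := hdisj (Finset.mem_coe.mpr hB1) (Finset.mem_coe.mpr hB2) hBne
    rw [Function.onFun, Finset.disjoint_left] at hd
    by_cases h1 : i ∈ B1
    · by_cases h2 : i ∈ B2
      · exact hd h1 h2
      · have : m ∈ g B2 := by rw [← he, hmemg B1 hB1]; exact Or.inr ⟨rfl, h1⟩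
        rw [hmemg B2 hB2] at this
        rcases this with h | ⟨-, h⟩
        · exact hmB B2 hB2 h
        · exact h2 h
    · by_cases h2 : i ∈ B2
      · have : m ∈ g B1 := by rw [he, hmemg B2 hB2]; exact Or.inr ⟨rfl, h2⟩
        rw [hmemg B1 hB1] at this
        rcases this with h | ⟨-, h⟩
        · exact hmB B1 hB1 h
        · exact h1 h
      · rw [hg] at he
        simp only [if_neg h1, if_neg h2] at he
        exact hBne he

lemma main_ind [NeZero r] [Fact r.Prime] :
    ∀ (k : ℕ) (S : Finset ι) (c : ι → ℤ) (D : ℕ), S.card = k → S.card ≤ r →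
      (∑ i ∈ S, (c i).natAbs) < r →
      (∀ P : Finset (Finset ι), IsZSP S c P → P.card ≤ D) →
      |(Icount r S c : ℤ) * r - (r.descFactorial k : ℤ)|
        ≤ (k.factorial : ℤ) * (r : ℤ) ^ (D + 1) := by
  have hr2 : 2 ≤ r := (Fact.out : r.Prime).two_le
  have hr1 : (1 : ℤ) ≤ (r : ℤ) := by exact_mod_cast Nat.one_le_of_lt hr2
  have hr0 : (0 : ℤ) ≤ (r : ℤ) := by linarith
  intro k
  induction k using Nat.strong_induction_on with
  | _ k IH =>
  intro S c D hcard hcardle hsumlt hD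
  by_cases hz : ∀ i ∈ S, c i = 0
  · -- all coefficients zero
    have hkD : k ≤ D := by
      have hP : IsZSP S c (S.image (fun a => {a})) := by
        refine ⟨?_, ?_, ?_⟩
        · rintro B hB
          obtain ⟨a, ha, rfl⟩ := Finset.mem_image.mp hB
          exact ⟨Finset.singleton_nonempty a, Finset.singleton_subset_iff.mpr ha, by
            rw [Finset.sum_singleton, hz a ha]⟩
        · intro a ha
          exact ⟨{a}, Finset.mem_image_of_mem _ ha, Finset.mem_singleton_self a⟩
        · intro B1 hB1 B2 hB2 hne
          obtain ⟨a1, ha1, rfl⟩ := Finset.mem_image.mp (Finset.mem_coe.mp hB1)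
          obtain ⟨a2, ha2, rfl⟩ := Finset.mem_image.mp (Finset.mem_coe.mp hB2)
          rw [Function.onFun, id_eq, id_eq, Finset.disjoint_singleton]
          intro h
          exact hne (h ▸ rfl)
      have hc : (S.image (fun a => {a} : ι → Finset ι)).card = k := by
        rw [Finset.card_image_of_injective _ (fun a b h => Finset.singleton_injective h), hcard]
      rw [← hc]
      exact hD _ hP
    rw [Icount_of_zero hz, Jcount_eq, hcard]
    have h1 : (r.descFactorial k : ℤ) ≤ (r : ℤ) ^ k := by
      exact_mod_cast Nat.descFactorial_le_pow r k
    have h2 : (0 : ℤ) ≤ (r.descFactorial k : ℤ) := Int.natCast_nonneg _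
    have h3 : ((r : ℤ) ^ k) * (r : ℤ) ≤ (r : ℤ) ^ (D + 1) := by
      rw [← pow_succ]
      exact pow_le_pow_right₀ hr1 (by omega)
    have h4 : (1 : ℤ) ≤ (k.factorial : ℤ) := by
      exact_mod_cast Nat.one_le_iff_ne_zero.mpr k.factorial_ne_zero
    have habs : |(r.descFactorial k : ℤ) * (r : ℤ) - (r.descFactorial k : ℤ)|
        = (r.descFactorial k : ℤ) * ((r : ℤ) - 1) := by
      rw [abs_of_nonneg] <;> nlinarith
    rw [habs]
    nlinarith [pow_nonneg hr0 (D+1), pow_nonneg hr0 k]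
  · -- some nonzero coefficient
    push_neg at hz
    obtain ⟨m, hm, hcm⟩ := hz
    have hcmabs : (c m).natAbs < r := by
      calc (c m).natAbs ≤ ∑ i ∈ S, (c i).natAbs :=
            Finset.single_le_sum (f := fun i => (c i).natAbs) (fun i _ => Nat.zero_le _) hm
        _ < r := hsumlt
    have hcmz : ((c m : ℤ) : ZMod r) ≠ 0 := by
      intro h
      rw [ZMod.intCast_zmod_eq_zero_iff_dvd] at h
      apply hcm
      apply Int.eq_zero_of_abs_lt_dvd h
      rw [Int.abs_eq_natAbs]
      exact_mod_cast hcmabs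
    obtain ⟨n, rfl⟩ : ∃ n, k = n + 1 := by
      have h1 : 1 ≤ k := by
        rw [← hcard]
        exact Finset.card_pos.mpr ⟨m, hm⟩
      exact ⟨k - 1, by omega⟩
    have hcard' : (S.erase m).card = n := by
      rw [Finset.card_erase_of_mem hm, hcard]
      omega
    have hkey := Icount_key (r := r) hm hcmz
    rw [hcard] at hkey
    simp only [Nat.add_sub_cancel] at hkey
    have hkeyZ : (Icount r S c : ℤ)
        + ∑ i ∈ (S.erase m), (Icount r (S.erase m) (Function.update c i (c i + c m)) : ℤ)
        = (r.descFactorial n : ℤ) := by exact_mod_cast congrArg (Nat.cast : ℕ → ℤ) hkey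
    have hnr : n + 1 ≤ r := hcard ▸ hcardle
    -- per term bound
    have hterm : ∀ i ∈ (S.erase m), |(Icount r (S.erase m) (Function.update c i (c i + c m)) : ℤ) * r
        - (r.descFactorial n : ℤ)| ≤ (n.factorial : ℤ) * (r : ℤ) ^ (D + 1) := by
      intro i hi
      apply IH n (Nat.lt_succ_self n) (S.erase m) _ D hcard' (by omega)
      · -- natAbs sum bound
        have him : i ≠ m := Finset.ne_of_mem_erase hi
        have hiS : i ∈ S := Finset.mem_of_mem_erase hi
        have e1 : ∑ j ∈ S, (c j).natAbs
            = (c m).natAbs + ∑ j ∈ (S.erase m), (c j).natAbs :=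
          (Finset.add_sum_erase S _ hm).symm
        have e2 : ∑ j ∈ (S.erase m), (c j).natAbs
            = (c i).natAbs + ∑ j ∈ (S.erase m).erase i, (c j).natAbs :=
          (Finset.add_sum_erase (S.erase m) _ hi).symm
        have e3 : ∑ j ∈ (S.erase m), (Function.update c i (c i + c m) j).natAbs
            = (c i + c m).natAbs + ∑ j ∈ (S.erase m).erase i, (c j).natAbs := by
          rw [← Finset.add_sum_erase (S.erase m) _ hi, Function.update_self]
          congr 1
          exact Finset.sum_congr rfl (fun j hj => by
            rw [Function.update_of_ne (Finset.ne_of_mem_erase hj)])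
        have e4 : (c i + c m).natAbs ≤ (c i).natAbs + (c m).natAbs :=
          Int.natAbs_add_le _ _
        omega
      · -- partition bound via lifting
        intro P hP
        obtain ⟨Q, hQ, hQc⟩ := zsp_lift hm hi hP
        rw [← hQc]
        exact hD Q hQ
    have hsum_bound : |∑ i ∈ (S.erase m), ((r.descFactorial n : ℤ)
        - (Icount r (S.erase m) (Function.update c i (c i + c m)) : ℤ) * r)|
        ≤ (n : ℤ) * ((n.factorial : ℤ) * (r : ℤ) ^ (D + 1)) := by
      calc |∑ i ∈ (S.erase m), ((r.descFactorial n : ℤ)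
            - (Icount r (S.erase m) (Function.update c i (c i + c m)) : ℤ) * r)|
          ≤ ∑ i ∈ (S.erase m), |(r.descFactorial n : ℤ)
            - (Icount r (S.erase m) (Function.update c i (c i + c m)) : ℤ) * r| :=
            Finset.abs_sum_le_sum_abs _ _
        _ ≤ ∑ i ∈ (S.erase m), (n.factorial : ℤ) * (r : ℤ) ^ (D + 1) := by
            apply Finset.sum_le_sum
            intro i hi
            rw [abs_sub_comm]
            exact hterm i hi
        _ = (n : ℤ) * ((n.factorial : ℤ) * (r : ℤ) ^ (D + 1)) := by
            rw [Finset.sum_const, hcard', nsmul_eq_mul]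
    have hident : (Icount r S c : ℤ) * r - (r.descFactorial (n + 1) : ℤ)
        = ∑ i ∈ (S.erase m), ((r.descFactorial n : ℤ)
          - (Icount r (S.erase m) (Function.update c i (c i + c m)) : ℤ) * r) := by
      have hdf : (r.descFactorial (n + 1) : ℤ) = ((r : ℤ) - n) * (r.descFactorial n : ℤ) := by
        rw [Nat.descFactorial_succ]
        push_cast [Nat.cast_sub (by omega : n ≤ r)]
        ring
      rw [Finset.sum_sub_distrib, Finset.sum_const, hcard', nsmul_eq_mul, ← Finset.sum_mul, hdf]
      have : ∑ i ∈ (S.erase m), (Icount r (S.erase m) (Function.update c i (c i + c m)) : ℤ)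
          = (r.descFactorial n : ℤ) - (Icount r S c : ℤ) := by linarith
      rw [this]
      ring
    rw [hident]
    calc |∑ i ∈ (S.erase m), ((r.descFactorial n : ℤ)
          - (Icount r (S.erase m) (Function.update c i (c i + c m)) : ℤ) * r)|
        ≤ (n : ℤ) * ((n.factorial : ℤ) * (r : ℤ) ^ (D + 1)) := hsum_bound
      _ ≤ ((n + 1).factorial : ℤ) * (r : ℤ) ^ (D + 1) := by
          have h1 : (n : ℤ) * (n.factorial : ℤ) ≤ ((n + 1).factorial : ℤ) := by
            exact_mod_cast Nat.le_trans (Nat.mul_le_mul_right _ (Nat.le_succ n))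
              (le_of_eq (Nat.factorial_succ n).symm)
          nlinarith [pow_nonneg hr0 (D+1), Int.natCast_nonneg n.factorial]

lemma Icount_strip [NeZero r] : ∀ (n : ℕ) (S : Finset ι) (c : ι → ℤ), S.card = n →
    S.card ≤ r →
    Icount r S c * (r - S.card).factorial
      = Icount r (S.filter (fun i => c i ≠ 0)) c
        * (r - (S.filter (fun i => c i ≠ 0)).card).factorial := by
  intro n
  induction n using Nat.strong_induction_on with
  | _ n IH =>
  intro S c hcard hle
  classical
  by_cases h : ∀ i ∈ S, c i ≠ 0
  · rw [Finset.filter_eq_self.mpr h]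
  · push_neg at h
    obtain ⟨m, hm, hcm0⟩ := h
    have hn1 : 1 ≤ n := by rw [← hcard]; exact Finset.card_pos.mpr ⟨m, hm⟩
    have hstep := Icount_erase_zero (r := r) hm hcm0
    have hfil : (S.erase m).filter (fun i => c i ≠ 0) = S.filter (fun i => c i ≠ 0) := by
      rw [Finset.filter_erase]
      apply Finset.erase_eq_of_notMem
      simp [hcm0]
    have hec : (S.erase m).card = n - 1 := by rw [Finset.card_erase_of_mem hm, hcard]
    have hIH := IH (n - 1) (by omega) (S.erase m) c hec (by omega)
    rw [hfil, hec] at hIH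
    rw [hstep, hcard]
    calc (r - (n - 1)) * Icount r (S.erase m) c * (r - n).factorial
        = Icount r (S.erase m) c * ((r - n + 1) * (r - n).factorial) := by
          have h1 : r - (n - 1) = r - n + 1 := by omega
          rw [h1]; ring
      _ = Icount r (S.erase m) c * (r - (n - 1)).factorial := by
          rw [← Nat.factorial_succ]
          have h1 : r - n + 1 = r - (n - 1) := by omega
          rw [h1]
      _ = Icount r (S.filter (fun i => c i ≠ 0)) c
          * (r - (S.filter (fun i => c i ≠ 0)).card).factorial := hIH


end auxlemmas


lemma perm_count_eq (r : ℕ) [NeZero r] (b : Fin r → ℤ) :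
    (univ.filter (fun σ : Equiv.Perm (Fin r) =>
      (∑ i : Fin r, (b i : ZMod r) * ((σ i).val : ZMod r)) = 0)).card
      = Icount r (univ : Finset (Fin r)) b := by
  classical
  have hφinj : Function.Injective (fun i : Fin r => ((i : ℕ) : ZMod r)) := by
    intro i j hij
    have hij' : (((i : ℕ) : ZMod r)) = ((j : ℕ) : ZMod r) := hij
    have h2 := congrArg ZMod.val hij'
    rw [ZMod.val_cast_of_lt i.isLt, ZMod.val_cast_of_lt j.isLt] at h2
    exact Fin.ext h2
  have hcardeq : Fintype.card (Fin r) = Fintype.card (ZMod r) := by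
    rw [Fintype.card_fin, ZMod.card]
  have hφbij : Function.Bijective (fun i : Fin r => ((i : ℕ) : ZMod r)) :=
    (Fintype.bijective_iff_injective_and_card _).mpr ⟨hφinj, hcardeq⟩
  set φ : Fin r ≃ ZMod r := Equiv.ofBijective _ hφbij with hφ
  have hφap : ∀ i : Fin r, φ i = ((i : ℕ) : ZMod r) := fun i => rfl
  rw [Icount]
  apply Finset.card_bij (fun σ _ => fun i => (((σ i) : ℕ) : ZMod r))
  · intro σ hσ
    rw [Finset.mem_filter] at hσ
    simp only [Finset.mem_filter]
    refine ⟨Finset.mem_univ _, ?_, fun i hi => absurd (Finset.mem_univ i) hi, ?_⟩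
    · intro a _ b' _ hab
      exact σ.injective (hφinj hab)
    · rw [← hσ.2]
  · intro σ1 hσ1 σ2 hσ2 he
    ext i
    exact congrArg Fin.val (hφinj (congrFun he i))
  · intro x hx
    simp only [Finset.mem_filter] at hx
    obtain ⟨-, hinj, -, hsum⟩ := hx
    have hxinj : Function.Injective x := fun a b hab =>
      hinj (Finset.mem_coe.mpr (Finset.mem_univ a)) (Finset.mem_coe.mpr (Finset.mem_univ b)) hab
    have hxbij : Function.Bijective x :=
      (Fintype.bijective_iff_injective_and_card _).mpr ⟨hxinj, hcardeq⟩
    set σ : Equiv.Perm (Fin r) := (Equiv.ofBijective x hxbij).trans φ.symm with hσdef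
    refine ⟨σ, ?_, ?_⟩
    · rw [Finset.mem_filter]
      refine ⟨Finset.mem_univ _, ?_⟩
      have hval : ∀ i, (((σ i) : ℕ) : ZMod r) = x i := by
        intro i
        have : φ (σ i) = x i := by
          rw [hσdef]
          simp [Equiv.trans_apply]
        rwa [hφap] at this
      rw [← hsum]
      exact Finset.sum_congr rfl (fun i _ => by rw [hval i])
    · funext i
      have : φ (σ i) = x i := by
        rw [hσdef]; simp [Equiv.trans_apply]
      rw [← hφap (σ i), this]



/-- For `r` prime and large relative to `t`: if `b` is the profile of a surjection
`f : [r+t] → [r]` (`b i = |f⁻¹(i) ∩ [r]| − 1`) with exactly `j` negative entries, and `p`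
is the probability that `Σ bᵢ λᵢ ≡ 0 (mod r)` for a uniformly random permutation
`(λ₁,…,λ_r)` of `(0,…,r−1)`, then `|p − 1/r| = O_t(r^{-j})`. -/
theorem stmt_5 (t : ℕ) :
    ∃ (r0 : ℕ) (C : ℝ), ∀ r : ℕ, r0 ≤ r → r.Prime →
      ∀ b : Fin r → ℤ,
        (∃ f : Fin (r + t) → Fin r, Function.Surjective f ∧
          ∀ i : Fin r, b i =
            ((univ.filter (fun x : Fin (r + t) => (x : ℕ) < r ∧ f x = i)).card : ℤ) - 1) →
        |(((univ.filter (fun σ : Equiv.Perm (Fin r) =>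
                (∑ i : Fin r, (b i : ZMod r) * ((σ i).val : ZMod r)) = 0)).card : ℝ) /
              (r.factorial : ℝ)) - 1 / r|
          ≤ C * (r : ℝ) ^ (-(((univ.filter (fun i : Fin r => b i < 0)).card : ℕ) : ℝ)) := by
  classical
  refine ⟨4 * t + 4, ((2 * t).factorial : ℝ) * 2 ^ (2 * t), ?_⟩
  intro r hr0 hrp b hbex
  obtain ⟨f, hfs, hb⟩ := hbex
  haveI : Fact r.Prime := ⟨hrp⟩
  haveI : NeZero r := ⟨hrp.pos.ne'⟩
  set neg := (univ.filter (fun i : Fin r => b i < 0)) with hnegdef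
  set pos := (univ.filter (fun i : Fin r => 0 < b i)) with hposdef
  set supp := (univ.filter (fun i : Fin r => b i ≠ 0)) with hsuppdef
  set j := neg.card with hjdef
  set k := supp.card with hkdef
  set D := pos.card with hDdef
  -- (F0) entries are at least -1
  have hF0 : ∀ i, -1 ≤ b i := by
    intro i
    rw [hb i]
    have : (0 : ℤ) ≤ ((univ.filter (fun x : Fin (r + t) => (x : ℕ) < r ∧ f x = i)).card : ℤ) :=
      Int.natCast_nonneg _
    linarith
  -- (F1) negative entries are -1
  have hF1 : ∀ i ∈ neg, b i = -1 := by
    intro i hi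
    rw [hnegdef, Finset.mem_filter] at hi
    have := hF0 i
    omega
  -- the set of low elements has cardinality r
  have hlowcard : (univ.filter (fun x : Fin (r + t) => (x : ℕ) < r)).card = r := by
    have h1 : (univ.filter (fun x : Fin (r + t) => (x : ℕ) < r)).card
        = (univ : Finset (Fin r)).card := by
      apply Finset.card_bij (fun (x : Fin (r + t)) hx =>
        (⟨(x : ℕ), (Finset.mem_filter.mp hx).2⟩ : Fin r))
      · intro x hx
        exact Finset.mem_univ _
      · intro x1 hx1 x2 hx2 he
        have h2 := congrArg Fin.val he
        exact Fin.ext h2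
      · intro y hy
        refine ⟨⟨(y : ℕ), lt_of_lt_of_le y.isLt (Nat.le_add_right r t)⟩, ?_, rfl⟩
        rw [Finset.mem_filter]
        exact ⟨Finset.mem_univ _, y.isLt⟩
    rw [h1, Finset.card_univ, Fintype.card_fin]
  -- (F2) the entries sum to zero
  have hF2 : ∑ i, b i = 0 := by
    have hsplit : ∀ i : Fin r, univ.filter (fun x : Fin (r + t) => (x : ℕ) < r ∧ f x = i)
        = (univ.filter (fun x : Fin (r + t) => (x : ℕ) < r)).filter (fun x => f x = i) := by
      intro i
      rw [Finset.filter_filter]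
    have hfib := Finset.card_eq_sum_card_fiberwise
      (f := f) (s := univ.filter (fun x : Fin (r + t) => (x : ℕ) < r)) (t := univ)
      (fun x _ => Finset.mem_univ _)
    have hsum : ∑ i : Fin r, ((univ.filter
        (fun x : Fin (r + t) => (x : ℕ) < r ∧ f x = i)).card : ℤ) = (r : ℤ) := by
      have h2 : ∑ i : Fin r, ((univ.filter
          (fun x : Fin (r + t) => (x : ℕ) < r ∧ f x = i)).card : ℤ)
          = ((∑ i : Fin r, ((univ.filter (fun x : Fin (r + t) => (x : ℕ) < r)).filter
            (fun x => f x = i)).card : ℕ) : ℤ) := by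
        push_cast
        exact Finset.sum_congr rfl (fun i _ => by rw [hsplit i])
      rw [h2, ← hfib, hlowcard]
    calc ∑ i, b i = ∑ i : Fin r, (((univ.filter
          (fun x : Fin (r + t) => (x : ℕ) < r ∧ f x = i)).card : ℤ) - 1) :=
          Finset.sum_congr rfl (fun i _ => hb i)
      _ = (∑ i : Fin r, ((univ.filter
          (fun x : Fin (r + t) => (x : ℕ) < r ∧ f x = i)).card : ℤ)) - r := by
          rw [Finset.sum_sub_distrib, Finset.sum_const, Finset.card_univ, Fintype.card_fin,
            nsmul_eq_mul, mul_one]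
      _ = 0 := by rw [hsum]; ring
  -- (F3) j ≤ t
  have hF3 : j ≤ t := by
    have hfibempty : ∀ i ∈ neg, ∀ x : Fin (r + t), ¬((x : ℕ) < r ∧ f x = i) := by
      intro i hi
      have h1 : b i = -1 := hF1 i hi
      have h2 := hb i
      rw [h1] at h2
      have h3 : (univ.filter (fun x : Fin (r + t) => (x : ℕ) < r ∧ f x = i)).card = 0 := by omega
      intro x hx
      have : x ∈ univ.filter (fun x : Fin (r + t) => (x : ℕ) < r ∧ f x = i) :=
        Finset.mem_filter.mpr ⟨Finset.mem_univ _, hx⟩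
      rw [Finset.card_eq_zero.mp h3] at this
      exact Finset.notMem_empty _ this
    have hhighcard : (univ.filter (fun x : Fin (r + t) => ¬((x : ℕ) < r))).card = t := by
      have := Finset.card_filter_add_card_filter_not
        (s := (univ : Finset (Fin (r + t)))) (p := fun x => (x : ℕ) < r)
      rw [Finset.card_univ, Fintype.card_fin] at this
      omega
    rw [hjdef, ← hhighcard]
    apply Finset.card_le_card_of_injOn (fun i => (hfs i).choose)
    · intro i hi
      rw [Finset.mem_coe, Finset.mem_filter]
      refine ⟨Finset.mem_univ _, ?_⟩
      intro hlt
      exact hfibempty i hi (hfs i).choose ⟨hlt, (hfs i).choose_spec⟩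
    · intro i1 hi1 i2 hi2 he
      have e1 := (hfs i1).choose_spec
      have e2 := (hfs i2).choose_spec
      have he' : (hfs i1).choose = (hfs i2).choose := he
      rw [← e1, ← e2, he']
  -- (F4) sum of positive entries is j
  have hF4 : ∑ i ∈ pos, b i = (j : ℤ) := by
    have hnegsum : ∑ i ∈ neg, b i = -(j : ℤ) := by
      rw [Finset.sum_congr rfl hF1, Finset.sum_const, hjdef]
      simp
    have hallsplit : ∑ i, b i = ∑ i ∈ neg, b i
        + ∑ i ∈ univ.filter (fun i => ¬ b i < 0), b i := by
      rw [hnegdef]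
      exact (Finset.sum_filter_add_sum_filter_not univ _ b).symm
    have hpossum : ∑ i ∈ univ.filter (fun i => ¬ b i < 0), b i = ∑ i ∈ pos, b i := by
      symm
      apply Finset.sum_subset
      · intro i hi
        rw [hposdef, Finset.mem_filter] at hi
        rw [Finset.mem_filter]
        exact ⟨hi.1, by omega⟩
      · intro i hi1 hi2
        rw [Finset.mem_filter] at hi1
        rw [hposdef, Finset.mem_filter] at hi2
        have h1 := hi1.2
        by_contra h
        have : 0 < b i := lt_of_le_of_ne (by omega) (Ne.symm h)
        exact hi2 ⟨Finset.mem_univ _, this⟩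
    rw [hallsplit, hnegsum, hpossum] at hF2
    linarith
  -- (F5) D ≤ j
  have hF5 : D ≤ j := by
    have h1 : (D : ℤ) ≤ ∑ i ∈ pos, b i := by
      rw [hDdef]
      calc (pos.card : ℤ) = ∑ _i ∈ pos, (1 : ℤ) := by
            rw [Finset.sum_const, nsmul_eq_mul, mul_one]
        _ ≤ ∑ i ∈ pos, b i := Finset.sum_le_sum (fun i hi => by
            rw [hposdef, Finset.mem_filter] at hi
            omega)
    rw [hF4] at h1
    exact_mod_cast h1
  -- (F6) k = D + j
  have hF6 : k = D + j := by
    rw [hkdef, hDdef, hjdef, hsuppdef, hposdef, hnegdef]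
    rw [← Finset.card_union_of_disjoint]
    · congr 1
      ext i
      simp only [Finset.mem_union, Finset.mem_filter, Finset.mem_univ, true_and]
      omega
    · rw [Finset.disjoint_left]
      intro i hi1 hi2
      rw [Finset.mem_filter] at hi1 hi2
      omega
  -- (F8) natAbs sum
  have hF8 : ∑ i ∈ supp, (b i).natAbs = 2 * j := by
    have hz : ((∑ i ∈ supp, (b i).natAbs : ℕ) : ℤ) = 2 * (j : ℤ) := by
      rw [Nat.cast_sum]
      have hsplit2 : ∑ i ∈ supp, ((b i).natAbs : ℤ)
          = ∑ i ∈ pos, ((b i).natAbs : ℤ) + ∑ i ∈ neg, ((b i).natAbs : ℤ) := by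
        rw [← Finset.sum_union]
        · apply Finset.sum_congr _ (fun _ _ => rfl)
          rw [hsuppdef, hposdef, hnegdef]
          ext i
          simp only [Finset.mem_union, Finset.mem_filter, Finset.mem_univ, true_and]
          omega
        · rw [Finset.disjoint_left]
          intro i hi1 hi2
          rw [hposdef, Finset.mem_filter] at hi1
          rw [hnegdef, Finset.mem_filter] at hi2
          omega
      have hposabs : ∑ i ∈ pos, ((b i).natAbs : ℤ) = ∑ i ∈ pos, b i :=
        Finset.sum_congr rfl (fun i hi => by
          rw [hposdef, Finset.mem_filter] at hi
          rw [Int.natAbs_of_nonneg (le_of_lt hi.2)])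
      have hnegabs : ∑ i ∈ neg, ((b i).natAbs : ℤ) = (j : ℤ) := by
        rw [Finset.sum_congr rfl (fun i hi => by rw [hF1 i hi] : ∀ i ∈ neg,
          ((b i).natAbs : ℤ) = ((-1 : ℤ).natAbs : ℤ)), Finset.sum_const, hjdef]
        simp
      rw [hsplit2, hposabs, hnegabs, hF4]
      ring
    exact_mod_cast hz
  -- (F9) partitions have at most D blocks
  have hF9 : ∀ P : Finset (Finset (Fin r)), IsZSP supp b P → P.card ≤ D := by
    intro P hP
    obtain ⟨hblocks, hcover, hdisj⟩ := hP
    have hchoose : ∀ B ∈ P, ∃ i ∈ B, 0 < b i := by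
      intro B hB
      obtain ⟨hne, hsub, hsum⟩ := hblocks B hB
      by_contra hcon
      push_neg at hcon
      have hneg' : ∀ i ∈ B, b i ≤ -1 := by
        intro i hi
        have h1 := hcon i hi
        have h2 := hsub hi
        rw [hsuppdef, Finset.mem_filter] at h2
        have := hF0 i
        omega
      have : ∑ i ∈ B, b i ≤ ∑ i ∈ B, (-1 : ℤ) := Finset.sum_le_sum hneg'
      rw [hsum, Finset.sum_const, nsmul_eq_mul, mul_neg_one] at this
      have hcard : 0 < B.card := Finset.card_pos.mpr hne
      have : (B.card : ℤ) ≤ 0 := by linarith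
      omega
    rw [hDdef]
    apply Finset.card_le_card_of_injOn (fun B => if h : B ∈ P then (hchoose B h).choose
      else Classical.arbitrary _)
    · intro B hB
      rw [Finset.mem_coe] at hB
      simp only [dif_pos hB]
      obtain ⟨hiB, hposB⟩ := (hchoose B hB).choose_spec
      rw [hposdef, Finset.mem_coe, Finset.mem_filter]
      exact ⟨Finset.mem_univ _, hposB⟩
    · intro B1 hB1 B2 hB2 he
      rw [Finset.mem_coe] at hB1 hB2
      simp only [dif_pos hB1, dif_pos hB2] at he
      by_contra hne
      have hd := hdisj (Finset.mem_coe.mpr hB1) (Finset.mem_coe.mpr hB2) hne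
      rw [Function.onFun, Finset.disjoint_left] at hd
      have h1 := (hchoose B1 hB1).choose_spec.1
      have h2 := (hchoose B2 hB2).choose_spec.1
      rw [he] at h1
      exact hd h1 h2
  -- sizes
  have hkr : k ≤ r := by
    have h1 := Finset.card_le_univ supp
    rw [Fintype.card_fin] at h1
    rw [hkdef]
    exact h1
  have hk2t : k ≤ 2 * t := by omega
  have hsumlt : ∑ i ∈ supp, (b i).natAbs < r := by rw [hF8]; omega
  -- main estimate
  have hEst := main_ind (r := r) k supp b D rfl hkr hsumlt hF9
  -- reduce permutation count to Icount over support
  have hN := perm_count_eq r b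
  have hstrip := Icount_strip (r := r) r (univ : Finset (Fin r)) b
    (by rw [Finset.card_univ, Fintype.card_fin])
    (by rw [Finset.card_univ, Fintype.card_fin])
  rw [Finset.card_univ, Fintype.card_fin, Nat.sub_self, Nat.factorial_zero, mul_one,
    ← hsuppdef, ← hkdef] at hstrip
  have hNI : ((univ.filter (fun σ : Equiv.Perm (Fin r) =>
      (∑ i : Fin r, (b i : ZMod r) * ((σ i).val : ZMod r)) = 0)).card : ℝ)
      = ((Icount r supp b : ℕ) : ℝ) * (((r - k).factorial : ℕ) : ℝ) := by
    exact_mod_cast congrArg (Nat.cast : ℕ → ℝ) (hN.trans hstrip)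
  have hfac : (r - k).factorial * r.descFactorial k = r.factorial :=
    Nat.factorial_mul_descFactorial hkr
  -- real estimates
  have hrpos : (0 : ℝ) < r := by
    have : 0 < r := hrp.pos
    exact_mod_cast this
  have hdfpos : (0 : ℝ) < (r.descFactorial k : ℝ) := by
    have h1 : 0 < r.descFactorial k := by
      apply Nat.pos_of_ne_zero
      intro h
      have hfac' := hfac
      rw [h, mul_zero] at hfac'
      exact (Nat.factorial_pos r).ne' hfac'.symm
    exact_mod_cast h1
  have hfacR : ((r.factorial : ℕ) : ℝ)
      = (((r - k).factorial : ℕ) : ℝ) * ((r.descFactorial k : ℕ) : ℝ) := by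
    exact_mod_cast hfac.symm
  have hfkpos : (0 : ℝ) < (((r - k).factorial : ℕ) : ℝ) := by
    exact_mod_cast (r - k).factorial_pos
  have hEq : ((univ.filter (fun σ : Equiv.Perm (Fin r) =>
        (∑ i : Fin r, (b i : ZMod r) * ((σ i).val : ZMod r)) = 0)).card : ℝ) /
        (r.factorial : ℝ) - 1 / r
      = (((Icount r supp b : ℕ) : ℝ) * r - ((r.descFactorial k : ℕ) : ℝ))
        / (((r.descFactorial k : ℕ) : ℝ) * r) := by
    rw [hNI, hfacR]
    field_simp
  have hnum : |((Icount r supp b : ℕ) : ℝ) * r - ((r.descFactorial k : ℕ) : ℝ)|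
      ≤ ((k.factorial : ℕ) : ℝ) * (r : ℝ) ^ (D + 1) := by
    exact_mod_cast hEst
  have hrk2 : (r : ℝ) / 2 ≤ (r : ℝ) - k := by
    have h1 : (k : ℝ) ≤ 2 * t := by exact_mod_cast hk2t
    have h2 : (4 * t + 4 : ℝ) ≤ r := by exact_mod_cast hr0
    linarith
  have hdfge : ((r : ℝ) / 2) ^ k ≤ ((r.descFactorial k : ℕ) : ℝ) := by
    have h1 : ((r + 1 - k) ^ k : ℕ) ≤ r.descFactorial k := Nat.pow_sub_le_descFactorial r k
    have h2 : (((r + 1 - k) ^ k : ℕ) : ℝ) ≤ ((r.descFactorial k : ℕ) : ℝ) := by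
      exact_mod_cast h1
    refine le_trans ?_ h2
    rw [Nat.cast_pow]
    apply pow_le_pow_left₀ (by positivity)
    have h3 : ((r + 1 - k : ℕ) : ℝ) = (r : ℝ) + 1 - k := by
      have : k ≤ r + 1 := by omega
      push_cast [Nat.cast_sub this]
      ring
    rw [h3]
    linarith
  have hpowj : (0 : ℝ) < (r : ℝ) ^ j := by positivity
  have hden1 : (0 : ℝ) < ((r.descFactorial k : ℕ) : ℝ) * r := by positivity
  have hrw : (r : ℝ) ^ (-((j : ℕ) : ℝ)) = ((r : ℝ) ^ j)⁻¹ := by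
    rw [Real.rpow_neg (Nat.cast_nonneg r), Real.rpow_natCast]
  rw [hEq, hrw, abs_div, abs_of_pos hden1]
  have step1 : |((Icount r supp b : ℕ) : ℝ) * r - ((r.descFactorial k : ℕ) : ℝ)|
      / (((r.descFactorial k : ℕ) : ℝ) * r)
      ≤ (((k.factorial : ℕ) : ℝ) * (r : ℝ) ^ (D + 1)) / (((r : ℝ) / 2) ^ k * r) := by
    apply div_le_div₀ (by positivity) hnum (by positivity)
    apply mul_le_mul_of_nonneg_right hdfge (le_of_lt hrpos)
  have step2 : (((k.factorial : ℕ) : ℝ) * (r : ℝ) ^ (D + 1)) / (((r : ℝ) / 2) ^ k * r)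
      = (((k.factorial : ℕ) : ℝ) * 2 ^ k) / (r : ℝ) ^ j := by
    have hpow : (r : ℝ) ^ (D + 1) * (r : ℝ) ^ j = (r : ℝ) ^ k * r := by
      rw [← pow_add, ← pow_succ]
      congr 1
      omega
    rw [div_eq_div_iff (by positivity) (by positivity), div_pow, mul_assoc, hpow]
    field_simp
  have step3 : (((k.factorial : ℕ) : ℝ) * 2 ^ k) / (r : ℝ) ^ j
      ≤ (((2 * t).factorial : ℝ) * 2 ^ (2 * t)) / (r : ℝ) ^ j := by
    have h1 : ((k.factorial : ℕ) : ℝ) ≤ ((2 * t).factorial : ℝ) := by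
      exact_mod_cast Nat.factorial_le hk2t
    have h2 : (2 : ℝ) ^ k ≤ 2 ^ (2 * t) := pow_le_pow_right₀ one_le_two hk2t
    exact div_le_div₀ (by positivity)
      (mul_le_mul h1 h2 (by positivity) (by positivity)) hpowj le_rfl
  calc _ ≤ _ := step1
    _ = _ := step2
    _ ≤ (((2 * t).factorial : ℝ) * 2 ^ (2 * t)) / (r : ℝ) ^ j := step3
    _ = ((2 * t).factorial : ℝ) * 2 ^ (2 * t) * ((r : ℝ) ^ j)⁻¹ := by
      rw [div_eq_mul_inv]
end

section
/- For every nonnegative integer t there exists r_0 such that for every prime r ≥ r_0: if f : [r+t] → [r] is a uniformly random surjection, then the probability that Σ_{i=1}^r f(i) ≡ r(r+1)/2 (mod r) is strictly greater than 1/r. -/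
open Finset


/-! Auxiliary lemmas -/

lemma gauss_fin (r : ℕ) : ∑ v : Fin r, (v.val + 1) = r * (r + 1) / 2 := by
  rw [Fin.sum_univ_eq_sum_range (fun i => i + 1) r]
  have h2 : ∑ i ∈ Finset.range r, (i + 1) = ∑ i ∈ Finset.range (r+1), i := by
    rw [Finset.sum_range_succ' (fun i => i) r]; simp
  rw [h2, Finset.sum_range_id]
  simp [Nat.mul_comm]

lemma fin_succ_cast_bij (r : ℕ) [NeZero r] :
    Function.Bijective (fun v : Fin r => ((v.val + 1 : ℕ) : ZMod r)) := by
  rw [Fintype.bijective_iff_surjective_and_card]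
  constructor
  · intro z
    refine ⟨⟨(z - 1).val, ZMod.val_lt _⟩, ?_⟩
    push_cast
    rw [ZMod.natCast_val, ZMod.cast_id]
    ring
  · simp [ZMod.card]

lemma zmod_sum_univ (r : ℕ) [NeZero r] :
    ∑ z : ZMod r, z = ((r * (r + 1) / 2 : ℕ) : ZMod r) := by
  have h := Fintype.sum_bijective _ (fin_succ_cast_bij r)
    (fun v => ((v.val + 1 : ℕ) : ZMod r)) (fun z => z) (fun v => rfl)
  rw [← h, ← Nat.cast_sum, gauss_fin]

lemma class_card_eq (r k : ℕ) [NeZero r] (hp : r.Prime) (hk0 : 0 < k) (hkr : k < r) (s₁ s₂ : ZMod r) :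
    ((Finset.powersetCard k (Finset.univ : Finset (ZMod r))).filter (fun K => K.sum id = s₁)).card =
    ((Finset.powersetCard k (Finset.univ : Finset (ZMod r))).filter (fun K => K.sum id = s₂)).card := by
  haveI : Fact r.Prime := ⟨hp⟩
  have hkz : (k : ZMod r) ≠ 0 := by
    rw [Ne, ZMod.natCast_eq_zero_iff]
    exact Nat.not_dvd_of_pos_of_lt hk0 hkr
  set c : ZMod r := (s₂ - s₁) * (k : ZMod r)⁻¹ with hc
  have key : ∀ (K : Finset (ZMod r)) (d : ZMod r), K.card = k →
      ((K.image (· + d)).card = k ∧ (K.image (· + d)).sum id = K.sum id + k * d) := by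
    intro K d hK
    have hinj : Function.Injective (· + d) := fun a b h => by simpa using h
    refine ⟨by rw [Finset.card_image_of_injective _ hinj, hK], ?_⟩
    rw [Finset.sum_image (fun x _ y _ h => hinj h)]
    simp only [id]
    rw [Finset.sum_add_distrib, Finset.sum_const, hK, nsmul_eq_mul]
  have hcancel : (k : ZMod r) * c = s₂ - s₁ := by
    rw [hc]; field_simp
  apply Finset.card_bij' (i := fun K _ => K.image (· + c)) (j := fun K _ => K.image (· + (-c)))
  case hi =>
    intro K hK
    rw [Finset.mem_filter, Finset.mem_powersetCard_univ] at hK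
    rw [Finset.mem_filter, Finset.mem_powersetCard_univ]
    obtain ⟨h1, h2⟩ := key K c hK.1
    exact ⟨h1, by rw [h2, hK.2, hcancel]; ring⟩
  case hj =>
    intro K hK
    rw [Finset.mem_filter, Finset.mem_powersetCard_univ] at hK
    rw [Finset.mem_filter, Finset.mem_powersetCard_univ]
    obtain ⟨h1, h2⟩ := key K (-c) hK.1
    refine ⟨h1, ?_⟩
    rw [h2, hK.2, mul_neg, hcancel]; ring
  case left_inv =>
    intro K hK
    rw [Finset.image_image]
    have h : ((· + (-c)) ∘ (· + c)) = id := by funext x; simp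
    rw [h, Finset.image_id]
  case right_inv =>
    intro K hK
    rw [Finset.image_image]
    have h : ((· + c) ∘ (· + (-c))) = id := by funext x; simp
    rw [h, Finset.image_id]

lemma r_mul_class (r k : ℕ) [NeZero r] (hp : r.Prime) (hk0 : 0 < k) (hkr : k < r) (s : ZMod r) :
    r * ((Finset.powersetCard k (Finset.univ : Finset (ZMod r))).filter (fun K => K.sum id = s)).card =
    r.choose k := by
  have hfib : (Finset.powersetCard k (Finset.univ : Finset (ZMod r))).card =
      ∑ b : ZMod r, ((Finset.powersetCard k (Finset.univ : Finset (ZMod r))).filter (fun K => K.sum id = b)).card :=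
    Finset.card_eq_sum_card_fiberwise (fun K _ => Finset.mem_univ _)
  rw [Finset.sum_congr rfl (fun b _ => class_card_eq r k hp hk0 hkr b s)] at hfib
  rw [Finset.sum_const, Finset.card_univ, ZMod.card, smul_eq_mul, Finset.card_powersetCard,
    Finset.card_univ, ZMod.card] at hfib
  exact hfib.symm

lemma transport_card {β : Type*} [Fintype β] [DecidableEq β] (r k : ℕ) [NeZero r]
    (ψ : ZMod r → β) (Fv : β → ZMod r) (hFψ : ∀ z, Fv (ψ z) = z) (s : ZMod r) :
    ((Finset.powersetCard k ((Finset.univ : Finset (ZMod r)).image ψ)).filter (fun K => K.sum Fv = s)).card =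
    ((Finset.powersetCard k (Finset.univ : Finset (ZMod r))).filter (fun W => W.sum id = s)).card := by
  have hψinj : Function.Injective ψ := by
    intro a b h; rw [← hFψ a, ← hFψ b, h]
  set A : Finset β := (Finset.univ : Finset (ZMod r)).image ψ with hA
  have hFinjA : ∀ x ∈ A, ∀ y ∈ A, Fv x = Fv y → x = y := by
    intro x hx y hy h
    rw [hA, Finset.mem_image] at hx hy
    obtain ⟨a, _, rfl⟩ := hx
    obtain ⟨b, _, rfl⟩ := hy
    rw [hFψ, hFψ] at h
    rw [h]
  apply Finset.card_bij' (i := fun K _ => K.image Fv) (j := fun W _ => W.image ψ)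
  case hi =>
    intro K hK
    rw [Finset.mem_filter, Finset.mem_powersetCard] at hK
    obtain ⟨⟨hKA, hKcard⟩, hKsum⟩ := hK
    rw [Finset.mem_filter, Finset.mem_powersetCard_univ]
    have hinjK : ∀ x ∈ K, ∀ y ∈ K, Fv x = Fv y → x = y :=
      fun x hx y hy => hFinjA x (hKA hx) y (hKA hy)
    refine ⟨by rw [Finset.card_image_of_injOn hinjK, hKcard], ?_⟩
    rw [Finset.sum_image hinjK] at *
    simpa using hKsum
  case hj =>
    intro W hW
    rw [Finset.mem_filter, Finset.mem_powersetCard_univ] at hW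
    rw [Finset.mem_filter, Finset.mem_powersetCard]
    refine ⟨⟨?_, by rw [Finset.card_image_of_injective _ hψinj, hW.1]⟩, ?_⟩
    · intro x hx
      rw [Finset.mem_image] at hx
      obtain ⟨z, _, rfl⟩ := hx
      rw [hA, Finset.mem_image]
      exact ⟨z, Finset.mem_univ z, rfl⟩
    · rw [Finset.sum_image (fun x _ y _ h => hψinj h)]
      simp only [hFψ]
      simpa using hW.2
  case left_inv =>
    intro K hK
    rw [Finset.mem_filter, Finset.mem_powersetCard] at hK
    obtain ⟨⟨hKA, hKcard⟩, _⟩ := hK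
    rw [Finset.image_image]
    apply Finset.Subset.antisymm
    · intro x hx
      rw [Finset.mem_image] at hx
      obtain ⟨y, hy, rfl⟩ := hx
      have hyA := hKA hy
      rw [hA, Finset.mem_image] at hyA
      obtain ⟨z, _, rfl⟩ := hyA
      simpa [hFψ] using hy
    · intro x hx
      have hxA := hKA hx
      rw [hA, Finset.mem_image] at hxA
      obtain ⟨z, _, rfl⟩ := hxA
      rw [Finset.mem_image]
      exact ⟨ψ z, hx, by simp [hFψ]⟩
  case right_inv =>
    intro W hW
    rw [Finset.image_image]
    have h : (Fv ∘ ψ) = id := by funext z; simp [hFψ]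
    rw [h, Finset.image_id]

lemma fiber_card {α : Type*} [Fintype α] [DecidableEq α] (A : Finset α) (m : ℕ) (J : Finset α)
    (hJ : J ⊆ Aᶜ) (hm : J.card ≤ m) (P : Finset α → Prop) [DecidablePred P] :
    ((Finset.powersetCard m (Finset.univ : Finset α)).filter (fun R => P R ∧ R ∩ Aᶜ = J)).card
    = ((Finset.powersetCard (m - J.card) A).filter (fun K => P (K ∪ J))).card := by
  apply Finset.card_bij' (i := fun R _ => R \ J) (j := fun K _ => K ∪ J)
  case hi =>
    intro R hR
    rw [Finset.mem_filter, Finset.mem_powersetCard_univ] at hR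
    obtain ⟨hcard, hP, hJR⟩ := hR
    have hJsub : J ⊆ R := by rw [← hJR]; exact Finset.inter_subset_left
    rw [Finset.mem_filter, Finset.mem_powersetCard]
    refine ⟨⟨?_, by rw [Finset.card_sdiff_of_subset hJsub, hcard]⟩, ?_⟩
    · intro x hx
      rw [Finset.mem_sdiff] at hx
      by_contra hxA
      have hmem : x ∈ R ∩ Aᶜ := Finset.mem_inter.mpr ⟨hx.1, Finset.mem_compl.mpr hxA⟩
      rw [hJR] at hmem
      exact hx.2 hmem
    · rwa [Finset.sdiff_union_of_subset hJsub]
  case hj =>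
    intro K hK
    rw [Finset.mem_filter, Finset.mem_powersetCard] at hK
    obtain ⟨⟨hKA, hKcard⟩, hP⟩ := hK
    have hdisj : Disjoint K J := by
      rw [Finset.disjoint_left]
      intro x hxK hxJ
      exact (Finset.mem_compl.mp (hJ hxJ)) (hKA hxK)
    rw [Finset.mem_filter, Finset.mem_powersetCard_univ]
    refine ⟨by rw [Finset.card_union_of_disjoint hdisj, hKcard]; omega, hP, ?_⟩
    rw [Finset.union_inter_distrib_right]
    have h1 : K ∩ Aᶜ = ∅ := by
      rw [Finset.eq_empty_iff_forall_notMem]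
      intro x hx
      rw [Finset.mem_inter, Finset.mem_compl] at hx
      exact hx.2 (hKA hx.1)
    have h2 : J ∩ Aᶜ = J := Finset.inter_eq_left.mpr hJ
    rw [h1, h2, Finset.empty_union]
  case left_inv =>
    intro R hR
    rw [Finset.mem_filter, Finset.mem_powersetCard_univ] at hR
    have hJsub : J ⊆ R := by rw [← hR.2.2]; exact Finset.inter_subset_left
    exact Finset.sdiff_union_of_subset hJsub
  case right_inv =>
    intro K hK
    rw [Finset.mem_filter, Finset.mem_powersetCard] at hK
    have hdisj : Disjoint K J := by
      rw [Finset.disjoint_left]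
      intro x hxK hxJ
      exact (Finset.mem_compl.mp (hJ hxJ)) (hK.1.1 hxK)
    rw [Finset.union_sdiff_cancel_right hdisj]

lemma subtypeCongr_pos {α : Type*} (p q : α → Prop) [DecidablePred p] [DecidablePred q]
    (e : {x // p x} ≃ {x // q x}) (f : {x // ¬p x} ≃ {x // ¬q x}) (x : α) (hx : p x) :
    q (Equiv.subtypeCongr e f x) := by
  have h1 : (Equiv.sumCompl p).symm x = Sum.inl ⟨x, hx⟩ := by
    rw [Equiv.symm_apply_eq]; rfl
  simp [Equiv.subtypeCongr, h1]
  exact (e ⟨x, hx⟩).2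

lemma subtypeCongr_neg {α : Type*} (p q : α → Prop) [DecidablePred p] [DecidablePred q]
    (e : {x // p x} ≃ {x // q x}) (f : {x // ¬p x} ≃ {x // ¬q x}) (x : α) (hx : ¬ p x) :
    ¬ q (Equiv.subtypeCongr e f x) := by
  have h1 : (Equiv.sumCompl p).symm x = Sum.inr ⟨x, hx⟩ := by
    rw [Equiv.symm_apply_eq]; rfl
  simp [Equiv.subtypeCongr, h1]
  exact (f ⟨x, hx⟩).2

lemma exists_perm_maps {α : Type*} [Fintype α] [DecidableEq α] (s u : Finset α)
    (h : s.card = u.card) : ∃ σ : Equiv.Perm α, ∀ x : α, x ∈ s ↔ σ x ∈ u := by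
  have hc : (sᶜ : Finset α).card = (uᶜ : Finset α).card := by
    rw [Finset.card_compl, Finset.card_compl, h]
  set e₁ : {x // x ∈ s} ≃ {x // x ∈ u} := Finset.equivOfCardEq h with he₁
  set a : {x // x ∈ (sᶜ : Finset α)} ≃ {x // ¬ x ∈ s} :=
    Equiv.subtypeEquivRight (fun x => Finset.mem_compl) with ha
  set b : {x // x ∈ (uᶜ : Finset α)} ≃ {x // ¬ x ∈ u} :=
    Equiv.subtypeEquivRight (fun x => Finset.mem_compl) with hb
  set e₂ : {x // ¬ x ∈ s} ≃ {x // ¬ x ∈ u} :=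
    (a.symm.trans (Finset.equivOfCardEq hc)).trans b with he₂
  refine ⟨Equiv.subtypeCongr e₁ e₂, fun x => ?_⟩
  constructor
  · intro hx
    exact subtypeCongr_pos _ _ e₁ e₂ x hx
  · intro hx
    by_contra hxs
    exact subtypeCongr_neg _ _ e₁ e₂ x hxs hx

lemma pointwise_count (r t : ℕ) (hp : r.Prime) (hrt : t + 2 ≤ r)
    (f : Fin (r + t) → Fin r) (hf : Function.Surjective f) :
    r * ((Finset.powersetCard r (Finset.univ : Finset (Fin (r + t)))).filter
        (fun R => R.sum (fun q => (((f q).val + 1 : ℕ) : ZMod r)) = ((r * (r + 1) / 2 : ℕ) : ZMod r))).card + 1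
      = r + (r + t).choose r := by
  haveI : NeZero r := ⟨hp.pos.ne'⟩
  set Fv : Fin (r + t) → ZMod r := fun q => (((f q).val + 1 : ℕ) : ZMod r) with hFv
  set τ : ZMod r := ((r * (r + 1) / 2 : ℕ) : ZMod r) with hτ
  have he := fin_succ_cast_bij r
  set e : Equiv (Fin r) (ZMod r) := Equiv.ofBijective _ he with hee
  set ψ : ZMod r → Fin (r + t) := fun z => Function.surjInv hf (e.symm z) with hψ
  have hFψ : ∀ z, Fv (ψ z) = z := by
    intro z
    have h1 : f (Function.surjInv hf (e.symm z)) = e.symm z := Function.surjInv_eq hf _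
    rw [hψ]
    simp only [hFv, h1]
    exact e.apply_symm_apply z
  have hψinj : Function.Injective ψ := fun a b h => by rw [← hFψ a, ← hFψ b, h]
  set A : Finset (Fin (r + t)) := (Finset.univ : Finset (ZMod r)).image ψ with hA
  have hAcard : A.card = r := by
    rw [hA, Finset.card_image_of_injective _ hψinj, Finset.card_univ, ZMod.card]
  have hXcard : (Aᶜ : Finset (Fin (r + t))).card = t := by
    rw [Finset.card_compl, hAcard]
    rw [Fintype.card_fin]; omega
  have hatom : A.sum Fv = τ := by
    rw [hA, Finset.sum_image (fun x _ y _ h => hψinj h)]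
    rw [Finset.sum_congr rfl (fun z _ => hFψ z)]
    exact zmod_sum_univ r
  set S := (Finset.powersetCard r (Finset.univ : Finset (Fin (r + t)))).filter (fun R => R.sum Fv = τ) with hS
  have hfib1 : S.card = ∑ J ∈ (Aᶜ : Finset (Fin (r+t))).powerset,
      (S.filter (fun R => R ∩ Aᶜ = J)).card :=
    Finset.card_eq_sum_card_fiberwise (fun R _ => Finset.mem_powerset.mpr Finset.inter_subset_right)
  have hfib2 : (Finset.powersetCard r (Finset.univ : Finset (Fin (r + t)))).card
      = ∑ J ∈ (Aᶜ : Finset (Fin (r+t))).powerset,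
        ((Finset.powersetCard r (Finset.univ : Finset (Fin (r + t)))).filter (fun R => R ∩ Aᶜ = J)).card :=
    Finset.card_eq_sum_card_fiberwise (fun R _ => Finset.mem_powerset.mpr Finset.inter_subset_right)
  have hJfacts : ∀ J ∈ (Aᶜ : Finset (Fin (r+t))).powerset, J ⊆ Aᶜ ∧ J.card ≤ t := by
    intro J hJ
    have h := Finset.mem_powerset.mp hJ
    exact ⟨h, le_of_le_of_eq (Finset.card_le_card h) hXcard⟩
  have hcnt : ∀ J ∈ (Aᶜ : Finset (Fin (r+t))).powerset,
      (S.filter (fun R => R ∩ Aᶜ = J)).card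
      = ((Finset.powersetCard (r - J.card) A).filter (fun K => K.sum Fv = τ - J.sum Fv)).card := by
    intro J hJ
    obtain ⟨hJX, hJt⟩ := hJfacts J hJ
    rw [hS, Finset.filter_filter]
    rw [fiber_card A r J hJX (by omega) (fun R => R.sum Fv = τ)]
    apply Finset.card_bij' (i := fun K _ => K) (j := fun K _ => K)
    case hi =>
      intro K hK
      rw [Finset.mem_filter] at hK ⊢
      obtain ⟨hm, hsum⟩ := hK
      refine ⟨hm, ?_⟩
      rw [Finset.mem_powersetCard] at hm
      have hdisj : Disjoint K J := by
        rw [Finset.disjoint_left]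
        intro x hxK hxJ
        exact (Finset.mem_compl.mp (hJX hxJ)) (hm.1 hxK)
      rw [Finset.sum_union hdisj] at hsum
      rw [eq_sub_iff_add_eq]
      exact hsum
    case hj =>
      intro K hK
      rw [Finset.mem_filter] at hK ⊢
      obtain ⟨hm, hsum⟩ := hK
      refine ⟨hm, ?_⟩
      rw [Finset.mem_powersetCard] at hm
      have hdisj : Disjoint K J := by
        rw [Finset.disjoint_left]
        intro x hxK hxJ
        exact (Finset.mem_compl.mp (hJX hxJ)) (hm.1 hxK)
      rw [Finset.sum_union hdisj, ← eq_sub_iff_add_eq]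
      exact hsum
    case left_inv => intro K _; rfl
    case right_inv => intro K _; rfl
  have hcnt0 : ((Finset.powersetCard (r - (∅ : Finset (Fin (r+t))).card) A).filter
      (fun K => K.sum Fv = τ - (∅ : Finset (Fin (r+t))).sum Fv)).card = 1 := by
    have hrA : r - (∅ : Finset (Fin (r+t))).card = A.card := by simp [hAcard]
    rw [hrA, Finset.powersetCard_self, Finset.filter_singleton]
    simp [hatom]
  have hcntJ : ∀ J ∈ (Aᶜ : Finset (Fin (r+t))).powerset, J ≠ ∅ →
      r * ((Finset.powersetCard (r - J.card) A).filter (fun K => K.sum Fv = τ - J.sum Fv)).card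
        = r.choose (r - J.card) := by
    intro J hJ hJne
    obtain ⟨hJX, hJt⟩ := hJfacts J hJ
    have hJpos : 0 < J.card := Finset.card_pos.mpr (Finset.nonempty_iff_ne_empty.mpr hJne)
    have hk0 : 0 < r - J.card := by omega
    have hkr : r - J.card < r := by omega
    rw [hA, transport_card r (r - J.card) ψ Fv hFψ (τ - J.sum Fv)]
    exact r_mul_class r (r - J.card) hp hk0 hkr _
  have hplain : ∀ J ∈ (Aᶜ : Finset (Fin (r+t))).powerset,
      ((Finset.powersetCard r (Finset.univ : Finset (Fin (r + t)))).filter (fun R => R ∩ Aᶜ = J)).card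
        = r.choose (r - J.card) := by
    intro J hJ
    obtain ⟨hJX, hJt⟩ := hJfacts J hJ
    have h1 : ((Finset.powersetCard r (Finset.univ : Finset (Fin (r + t)))).filter (fun R => R ∩ Aᶜ = J))
        = ((Finset.powersetCard r (Finset.univ : Finset (Fin (r + t)))).filter
            (fun R => (fun _ => True) R ∧ R ∩ Aᶜ = J)) := by
      apply Finset.filter_congr
      intro R _
      simp
    rw [h1, fiber_card A r J hJX (by omega) (fun _ => True), Finset.filter_true,
      Finset.card_powersetCard, hAcard]
  have hmemE : (∅ : Finset (Fin (r+t))) ∈ (Aᶜ : Finset (Fin (r+t))).powerset :=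
    Finset.empty_mem_powerset _
  rw [← Finset.add_sum_erase _ _ hmemE] at hfib1 hfib2
  rw [hcnt (∅ : Finset (Fin (r+t))) hmemE, hcnt0] at hfib1
  rw [hplain (∅ : Finset (Fin (r+t))) hmemE] at hfib2
  have hEchoose : r.choose (r - (∅ : Finset (Fin (r+t))).card) = 1 := by
    simp
  rw [hEchoose] at hfib2
  have hS2 : r * S.card = r * 1 + ∑ J ∈ ((Aᶜ : Finset (Fin (r+t))).powerset).erase ∅,
      (r * (S.filter (fun R => R ∩ Aᶜ = J)).card) := by
    rw [hfib1, Nat.mul_add, Finset.mul_sum]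
  have hsum_eq : ∑ J ∈ ((Aᶜ : Finset (Fin (r+t))).powerset).erase ∅,
      (r * (S.filter (fun R => R ∩ Aᶜ = J)).card)
      = ∑ J ∈ ((Aᶜ : Finset (Fin (r+t))).powerset).erase ∅,
        ((Finset.powersetCard r (Finset.univ : Finset (Fin (r + t)))).filter (fun R => R ∩ Aᶜ = J)).card := by
    apply Finset.sum_congr rfl
    intro J hJ
    have hJmem := Finset.mem_of_mem_erase hJ
    have hJne := Finset.ne_of_mem_erase hJ
    rw [hcnt J hJmem, hcntJ J hJmem hJne, hplain J hJmem]
  have hchoose : (Finset.powersetCard r (Finset.univ : Finset (Fin (r + t)))).card = (r + t).choose r := by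
    rw [Finset.card_powersetCard, Finset.card_univ, Fintype.card_fin]
  rw [hchoose] at hfib2
  rw [hS2, hsum_eq]
  omega

lemma perR_card (r t : ℕ) (R : Finset (Fin (r+t))) (hR : R.card = r) :
    ((Finset.univ : Finset (Fin (r+t) → Fin r)).filter
      (fun f => Function.Surjective f ∧
        R.sum (fun q => (((f q).val + 1 : ℕ) : ZMod r)) = ((r * (r + 1) / 2 : ℕ) : ZMod r))).card
    = ((Finset.univ : Finset (Fin (r+t) → Fin r)).filter
      (fun f => Function.Surjective f ∧
        (∑ i : Fin r, (((f (Fin.castLE (Nat.le_add_right r t) i)).val + 1 : ℕ) : ZMod r))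
          = ((r * (r + 1) / 2 : ℕ) : ZMod r))).card := by
  set Pr : Finset (Fin (r+t)) := Finset.univ.map (Fin.castLEEmb (Nat.le_add_right r t)) with hPr
  have hPrcard : Pr.card = r := by
    rw [hPr, Finset.card_map, Finset.card_univ, Fintype.card_fin]
  obtain ⟨σ, hσ⟩ := exists_perm_maps Pr R (by rw [hPrcard, hR])
  have hsum : ∀ (g : Fin (r+t) → Fin r),
      (∑ i : Fin r, (((g (σ (Fin.castLE (Nat.le_add_right r t) i))).val + 1 : ℕ) : ZMod r))
        = R.sum (fun q => (((g q).val + 1 : ℕ) : ZMod r)) := by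
    intro g
    have h1 : (∑ i : Fin r, (((g (σ (Fin.castLE (Nat.le_add_right r t) i))).val + 1 : ℕ) : ZMod r))
        = ∑ x ∈ Pr, (((g (σ x)).val + 1 : ℕ) : ZMod r) := by
      rw [hPr, Finset.sum_map]
      rfl
    rw [h1]
    apply Finset.sum_nbij' (i := fun x => σ x) (j := fun y => σ.symm y)
    · intro x hx
      exact (hσ x).mp hx
    · intro y hy
      have : σ (σ.symm y) ∈ R := by rwa [Equiv.apply_symm_apply]
      exact (hσ (σ.symm y)).mpr this
    · intro x _; exact σ.symm_apply_apply x
    · intro y _; exact σ.apply_symm_apply y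
    · intro x _; rfl
  apply Finset.card_bij' (i := fun f _ => f ∘ σ) (j := fun g _ => g ∘ σ.symm)
  case hi =>
    intro f hf
    rw [Finset.mem_filter] at hf ⊢
    obtain ⟨_, hsurj, hsums⟩ := hf
    refine ⟨Finset.mem_univ _, hsurj.comp σ.surjective, ?_⟩
    have := hsum f
    simp only [Function.comp_apply]
    rw [this]
    exact hsums
  case hj =>
    intro g hg
    rw [Finset.mem_filter] at hg ⊢
    obtain ⟨_, hsurj, hsums⟩ := hg
    refine ⟨Finset.mem_univ _, hsurj.comp σ.symm.surjective, ?_⟩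
    have h2 := hsum (g ∘ σ.symm)
    simp only [Function.comp_apply, Equiv.symm_apply_apply] at h2 ⊢
    rw [← h2]
    exact hsums
  case left_inv =>
    intro f _
    funext x
    simp [Function.comp_apply]
  case right_inv =>
    intro g _
    funext x
    simp [Function.comp_apply]

/-- For every `t` there is `r₀` such that for every prime `r ≥ r₀`: for a uniformly random
surjection `f : [r+t] → [r]` (values of `Fin r` representing `{1,…,r}` via `val + 1`),
the probability that `Σ_{i=1}^r f(i) ≡ r(r+1)/2 (mod r)` is strictly greater than `1/r`. -/
theorem stmt_8 (t : ℕ) :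
    ∃ r0 : ℕ, ∀ r : ℕ, r0 ≤ r → r.Prime →
      (1 : ℝ) / r <
        ((univ.filter (fun f : Fin (r + t) → Fin r =>
            Function.Surjective f ∧
            (∑ i : Fin r, (((f (Fin.castLE (Nat.le_add_right r t) i)).val + 1 : ℕ) : ZMod r))
              = ((r * (r + 1) / 2 : ℕ) : ZMod r))).card : ℝ) /
          ((univ.filter (fun f : Fin (r + t) → Fin r => Function.Surjective f)).card : ℝ) := by
  refine ⟨t + 2, ?_⟩
  intro r hrt hp
  haveI : NeZero r := ⟨hp.pos.ne'⟩
  set M : ℕ := ((univ.filter (fun f : Fin (r + t) → Fin r =>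
      Function.Surjective f ∧
      (∑ i : Fin r, (((f (Fin.castLE (Nat.le_add_right r t) i)).val + 1 : ℕ) : ZMod r))
        = ((r * (r + 1) / 2 : ℕ) : ZMod r))).card) with hM
  set T : ℕ := ((univ.filter (fun f : Fin (r + t) → Fin r => Function.Surjective f)).card) with hT
  -- T is positive
  have hTpos : 0 < T := by
    rw [hT, Finset.card_pos]
    refine ⟨fun i => if h : (i : ℕ) < r then ⟨i, h⟩ else ⟨0, hp.pos⟩, ?_⟩
    rw [Finset.mem_filter]
    refine ⟨Finset.mem_univ _, fun v => ⟨⟨v.val, lt_of_lt_of_le v.isLt (Nat.le_add_right r t)⟩, ?_⟩⟩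
    simp only [v.isLt, dif_pos]
  -- the double count
  set Count : ℕ := ∑ R ∈ Finset.powersetCard r (Finset.univ : Finset (Fin (r + t))),
      ((Finset.univ : Finset (Fin (r+t) → Fin r)).filter
        (fun f => Function.Surjective f ∧
          R.sum (fun q => (((f q).val + 1 : ℕ) : ZMod r)) = ((r * (r + 1) / 2 : ℕ) : ZMod r))).card
    with hCount
  have hCa : Count = (r + t).choose r * M := by
    rw [hCount,
      Finset.sum_congr rfl (fun R hR => perR_card r t R (Finset.mem_powersetCard_univ.mp hR)),
      Finset.sum_const, Finset.card_powersetCard, Finset.card_univ, Fintype.card_fin, smul_eq_mul, hM]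
  have hCb : r * Count + T = T * (r + (r + t).choose r) := by
    have h1 : Count = ∑ f ∈ (Finset.univ : Finset (Fin (r+t) → Fin r)).filter Function.Surjective,
        ((Finset.powersetCard r (Finset.univ : Finset (Fin (r + t)))).filter
          (fun R => R.sum (fun q => (((f q).val + 1 : ℕ) : ZMod r)) = ((r * (r + 1) / 2 : ℕ) : ZMod r))).card := by
      rw [hCount]
      rw [Finset.sum_congr rfl (fun R _ => Finset.card_filter _ _)]
      rw [Finset.sum_comm]
      have h2 : ∀ f : Fin (r+t) → Fin r,
          (∑ R ∈ Finset.powersetCard r (Finset.univ : Finset (Fin (r + t))),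
            if Function.Surjective f ∧
              R.sum (fun q => (((f q).val + 1 : ℕ) : ZMod r)) = ((r * (r + 1) / 2 : ℕ) : ZMod r)
            then 1 else 0)
          = if Function.Surjective f then
              (∑ R ∈ Finset.powersetCard r (Finset.univ : Finset (Fin (r + t))),
                if R.sum (fun q => (((f q).val + 1 : ℕ) : ZMod r)) = ((r * (r + 1) / 2 : ℕ) : ZMod r)
                then 1 else 0) else 0 := by
        intro f
        by_cases hs : Function.Surjective f
        · simp only [hs, true_and, if_true]
        · simp only [hs, false_and, if_false, Finset.sum_const_zero]
      rw [Finset.sum_congr rfl (fun f _ => h2 f)]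
      rw [← Finset.sum_filter]
      apply Finset.sum_congr rfl
      intro f _
      exact (Finset.card_filter _ _).symm
    have h3 : r * Count + T =
        ∑ f ∈ (Finset.univ : Finset (Fin (r+t) → Fin r)).filter Function.Surjective,
          (r * ((Finset.powersetCard r (Finset.univ : Finset (Fin (r + t)))).filter
            (fun R => R.sum (fun q => (((f q).val + 1 : ℕ) : ZMod r)) = ((r * (r + 1) / 2 : ℕ) : ZMod r))).card
           + 1) := by
      rw [Finset.sum_add_distrib, Finset.sum_const, smul_eq_mul, mul_one, h1, Finset.mul_sum, hT]
    rw [h3]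
    rw [Finset.sum_congr rfl (fun f hf =>
      pointwise_count r t hp hrt f (Finset.mem_filter.mp hf).2)]
    rw [Finset.sum_const, smul_eq_mul, hT]
  -- conclude T < r * M
  have hchoosepos : 0 < (r + t).choose r := Nat.choose_pos (Nat.le_add_right r t)
  have key : T < r * M := by
    by_contra hcon
    push_neg at hcon
    set C := (r + t).choose r with hC
    have heq : r * (C * M) + T = T * r + T * C := by
      rw [← hCa, hCb]; ring
    have h2 : C * (r * M) ≤ C * T := Nat.mul_le_mul_left _ hcon
    have heq2 : C * (r * M) = r * (C * M) := by ring
    rw [heq2] at h2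
    have h4 : T * 2 ≤ T * r := Nat.mul_le_mul_left T hp.two_le
    have h5 : 0 < T := hTpos
    nlinarith [heq, h2, h4, h5, hchoosepos]
  -- final real inequality
  have hrpos : (0 : ℝ) < (r : ℝ) := by exact_mod_cast hp.pos
  have hTposR : (0 : ℝ) < (T : ℝ) := by exact_mod_cast hTpos
  rw [div_lt_div_iff₀ hrpos hTposR]
  have : (T : ℝ) < (M : ℝ) * (r : ℝ) := by
    rw [mul_comm]
    exact_mod_cast key
  linarith
end

section
/- Let s ≥ 5 and let S_1, ..., S_t be the blocks of an (n, s, 2)-Steiner system on ground set V. Let G be the 4-uniform hypergraph on V whose edges are all 4-element subsets contained in some block S_i. Then for every bipartition (A, B) of V, the number of edges of G with at least one vertex in each of A and B exceeds (7/8)·e(G) by at most O(n² + n s²). -/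
open Finset

lemma castc2 (a : ℕ) : ((a.choose 2 : ℕ) : ℝ) * 2 = a * (a - 1) := by
  induction a with
  | zero => simp
  | succ k ih =>
    rw [Nat.choose_succ_succ, Nat.choose_one_right]
    push_cast
    nlinarith [ih]

lemma castc3 (a : ℕ) : ((a.choose 3 : ℕ) : ℝ) * 6 = a * (a - 1) * (a - 2) := by
  induction a with
  | zero => simp
  | succ k ih =>
    rw [Nat.choose_succ_succ]
    push_cast
    nlinarith [ih, castc2 k]

lemma castc4 (a : ℕ) : ((a.choose 4 : ℕ) : ℝ) * 24 = a * (a - 1) * (a - 2) * (a - 3) := by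
  induction a with
  | zero => simp
  | succ k ih =>
    rw [Nat.choose_succ_succ]
    push_cast
    nlinarith [ih, castc3 k]

lemma Mpos (n s : ℝ) (hs : 5 ≤ s) (hn : s ≤ n) :
    0 ≤ n^4 * (s*(s-1))^2
      - 2 * (4*s^2 - 18*s + 22) * n^2 * ((n*n - n) * (s*s - s))
      + 7 * (n*n - n)^2 * (s*(s-1)*(s-2)*(s-3))
      + 1920 * (n^2 + n*s^2) * ((n*n - n) * (s*s - s)) := by
  have key : n^4 * (s*(s-1))^2
      - 2 * (4*s^2 - 18*s + 22) * n^2 * ((n*n - n) * (s*s - s))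
      + 7 * (n*n - n)^2 * (s*(s-1)*(s-2)*(s-3))
      + 1920 * (n^2 + n*s^2) * ((n*n - n) * (s*s - s))
      = 1913 * (n^2*s^3*(n-s)) + 840 * (n^3*s^3*(s-5)) + 399 * (n^3*s^2*(s-5))
        + 9 * (n^2*s*(n-5))
        + (1918*n^4*s*(s-1) + 1074*n^3*s^4 + 8*n^3*s^3 + n^3*s^2 + 1951*n^3*s
           + 1878*n^2*s^3 + 77*n^2*s^2 + 3*n^2*s) := by ring
  rw [key]
  have h0s : (0:ℝ) ≤ s := by linarith
  have h0n : (0:ℝ) ≤ n := by linarith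
  have hns : (0:ℝ) ≤ n - s := by linarith
  have hs5 : (0:ℝ) ≤ s - 5 := by linarith
  have hn5 : (0:ℝ) ≤ n - 5 := by linarith
  have hs1 : (0:ℝ) ≤ s - 1 := by linarith
  have t1 : (0:ℝ) ≤ n^2*s^3*(n-s) := by positivity
  have t2 : (0:ℝ) ≤ n^3*s^3*(s-5) := by positivity
  have t3 : (0:ℝ) ≤ n^3*s^2*(s-5) := by positivity
  have t4 : (0:ℝ) ≤ n^2*s*(n-5) := by positivity
  have t5 : (0:ℝ) ≤ n^4*s*(s-1) := by positivity
  have t6 : (0:ℝ) ≤ 1074*n^3*s^4 + 8*n^3*s^3 + n^3*s^2 + 1951*n^3*s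
      + 1878*n^2*s^3 + 77*n^2*s^2 + 3*n^2*s := by positivity
  linarith

/-- Core arithmetic inequality. -/
lemma core (n s T P SP K : ℝ) (hs : 5 ≤ s) (hn : s ≤ n) (hT1 : 1 ≤ T)
    (hTs : T * (s*s - s) = n*n - n) (hCS : P^2 ≤ T * SP)
    (hPK : P = K * (n - K)) (hK0 : 0 ≤ K) (hKn : K ≤ n) :
    0 ≤ 2*SP - (4*s^2 - 18*s + 22)*P + (7/8)*T*(s*(s-1)*(s-2)*(s-3))
        + 240*(n^2 + n*s^2) := by
  have hT0 : (0:ℝ) < T := by linarith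
  have hss : (0:ℝ) < s*s - s := by nlinarith
  have hX : 0 ≤ n^2/4 - P := by nlinarith [sq_nonneg (n - 2*K)]
  -- Q*T ≥ n^2
  have hkey : n^2 * (s*s - s) ≤ (4*s^2 - 18*s + 22) * (n*n - n) := by
    nlinarith [mul_nonneg (mul_nonneg (by linarith : (0:ℝ) ≤ n) (by linarith : (0:ℝ) ≤ n - s)) (by linarith : (0:ℝ) ≤ s - 5), mul_nonneg (by linarith : (0:ℝ) ≤ n) (by linarith : (0:ℝ) ≤ s - 5), sq_nonneg s, sq_nonneg n]
  have hQT : n^2 ≤ (4*s^2 - 18*s + 22) * T := by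
    have h2 : 0 ≤ ((4*s^2 - 18*s + 22) * T - n^2) * (s*s - s) := by nlinarith [hkey, hTs]
    nlinarith [h2, hss]
  -- bracket nonneg
  have hbr : 0 ≤ 2*(n^2/4)^2 - (4*s^2 - 18*s + 22)*(n^2/4)*T
      + (7/8)*T^2*(s*(s-1)*(s-2)*(s-3)) + 240*(n^2 + n*s^2)*T := by
    have hM := Mpos n s hs hn
    have hident : (2*(n^2/4)^2 - (4*s^2 - 18*s + 22)*(n^2/4)*T
        + (7/8)*T^2*(s*(s-1)*(s-2)*(s-3)) + 240*(n^2 + n*s^2)*T) * (8*(s*s-s)^2)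
        = n^4 * (s*(s-1))^2
          - 2 * (4*s^2 - 18*s + 22) * n^2 * ((n*n - n) * (s*s - s))
          + 7 * (n*n - n)^2 * (s*(s-1)*(s-2)*(s-3))
          + 1920 * (n^2 + n*s^2) * ((n*n - n) * (s*s - s)) := by
      linear_combination (-2*(4*s^2 - 18*s + 22)*n^2*(s*s - s)
        + 7*(s*(s-1)*(s-2)*(s-3))*(T*(s*s - s) + (n*n - n))
        + 1920*(n^2 + n*s^2)*(s*s - s)) * hTs
    have h8 : (0:ℝ) < 8*(s*s-s)^2 := by positivity
    exact nonneg_of_mul_nonneg_left (by rw [hident]; exact hM) h8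
  -- assemble G2
  have hG2 : 0 ≤ 2*P^2 - (4*s^2 - 18*s + 22)*P*T
      + (7/8)*T^2*(s*(s-1)*(s-2)*(s-3)) + 240*(n^2 + n*s^2)*T := by
    have hid : 2*P^2 - (4*s^2 - 18*s + 22)*P*T
        + (7/8)*T^2*(s*(s-1)*(s-2)*(s-3)) + 240*(n^2 + n*s^2)*T
        = (2*(n^2/4)^2 - (4*s^2 - 18*s + 22)*(n^2/4)*T
            + (7/8)*T^2*(s*(s-1)*(s-2)*(s-3)) + 240*(n^2 + n*s^2)*T)
          + (n^2/4 - P)*((4*s^2 - 18*s + 22)*T - n^2) + 2*(n^2/4 - P)^2 := by ring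
    rw [hid]
    have h1 : 0 ≤ (n^2/4 - P)*((4*s^2 - 18*s + 22)*T - n^2) :=
      mul_nonneg hX (by linarith)
    have h2 : (0:ℝ) ≤ 2*(n^2/4 - P)^2 := by positivity
    linarith
  -- divide by T
  have h3 : 0 ≤ (2*SP - (4*s^2 - 18*s + 22)*P + (7/8)*T*(s*(s-1)*(s-2)*(s-3))
      + 240*(n^2 + n*s^2)) * T := by
    have hexp : (2*SP - (4*s^2 - 18*s + 22)*P + (7/8)*T*(s*(s-1)*(s-2)*(s-3))
        + 240*(n^2 + n*s^2)) * T
        = (2*P^2 - (4*s^2 - 18*s + 22)*P*T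
            + (7/8)*T^2*(s*(s-1)*(s-2)*(s-3)) + 240*(n^2 + n*s^2)*T)
          + 2*(T*SP - P^2) := by ring
    rw [hexp]
    linarith [hG2, hCS]
  exact nonneg_of_mul_nonneg_left h3 hT0

/-- Let `S 1, …, S tc` be the blocks of an `(n, s, 2)`-Steiner system (`s ≥ 5`) on a ground
set `V`, and let `G` be the 4-uniform hypergraph whose edges are all 4-subsets contained in
some block. Then every 2-cut `(A, Aᶜ)` of `V` cuts at most `(7/8)·e(G) + O(n² + n·s²)`
edges of `G`. -/
theorem stmt_11 :
    ∃ C : ℝ, ∀ (V : Type) [Fintype V] [DecidableEq V] (n s tc : ℕ)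
      (S : Fin tc → Finset V), 5 ≤ s → Fintype.card V = n →
      (∀ i, (S i).card = s) →
      (∀ u v : V, u ≠ v → ∃! i, u ∈ S i ∧ v ∈ S i) →
      ∀ A : Finset V,
        ((((univ : Finset (Finset V)).filter
              (fun e => (e.card = 4 ∧ ∃ i, e ⊆ S i) ∧
                (∃ x ∈ e, x ∈ A) ∧ (∃ x ∈ e, x ∉ A))).card : ℝ)
          ≤ (7 / 8) * (((univ : Finset (Finset V)).filter
              (fun e => e.card = 4 ∧ ∃ i, e ⊆ S i)).card : ℝ)
            + C * ((n : ℝ) ^ 2 + (n : ℝ) * (s : ℝ) ^ 2)) := by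
  use 10
  intro V _ _ n s tc S hs hn hcard hpair A
  classical
  by_cases htc : tc = 0
  · have h1 : ((univ : Finset (Finset V)).filter
        (fun e => (e.card = 4 ∧ ∃ i, e ⊆ S i) ∧
          (∃ x ∈ e, x ∈ A) ∧ (∃ x ∈ e, x ∉ A))) = ∅ := by
      apply filter_eq_empty_iff.mpr
      rintro e - ⟨⟨-, i, -⟩, -⟩
      exact absurd i.2 (by omega)
    rw [h1]
    have h2 : (0:ℝ) ≤ (((univ : Finset (Finset V)).filter
        (fun e => e.card = 4 ∧ ∃ i, e ⊆ S i)).card : ℝ) := by positivity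
    have h3 : (0:ℝ) ≤ (n:ℝ)^2 + (n:ℝ)*(s:ℝ)^2 := by positivity
    simp only [card_empty, Nat.cast_zero]
    nlinarith
  -- main case
  have htc1 : 1 ≤ tc := Nat.one_le_iff_ne_zero.mpr htc
  have huniq : ∀ e : Finset V, 2 ≤ e.card → ∀ i j : Fin tc,
      e ⊆ S i → e ⊆ S j → i = j := by
    intro e he i j hi hj
    obtain ⟨u, hu, v, hv, huv⟩ := Finset.one_lt_card.mp (show 1 < e.card by omega)
    obtain ⟨k, -, hk⟩ := hpair u v huv
    rw [hk i ⟨hi hu, hi hv⟩, hk j ⟨hj hu, hj hv⟩]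
  -- edge count
  have hdisjE : ∀ i ∈ (univ : Finset (Fin tc)), ∀ j ∈ univ, i ≠ j →
      Disjoint ((S i).powersetCard 4) ((S j).powersetCard 4) := by
    rintro i - j - hij
    rw [Finset.disjoint_left]
    intro e he1 he2
    rw [mem_powersetCard] at he1 he2
    exact hij (huniq e (by omega) i j he1.1 he2.1)
  have hE : (univ : Finset (Finset V)).filter (fun e => e.card = 4 ∧ ∃ i, e ⊆ S i)
      = univ.biUnion (fun i => (S i).powersetCard 4) := by
    ext e
    simp only [mem_filter, mem_univ, true_and, mem_biUnion, mem_powersetCard]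
    constructor
    · rintro ⟨h4, i, hi⟩; exact ⟨i, hi, h4⟩
    · rintro ⟨i, hi, h4⟩; exact ⟨h4, i, hi⟩
  have hEcard : ((univ : Finset (Finset V)).filter
      (fun e => e.card = 4 ∧ ∃ i, e ⊆ S i)).card = tc * s.choose 4 := by
    rw [hE, card_biUnion hdisjE]
    simp [card_powersetCard, hcard, card_univ]
  -- cut edges
  have hdisjC : ∀ i ∈ (univ : Finset (Fin tc)), ∀ j ∈ univ, i ≠ j →
      Disjoint ((S i).powersetCard 4 \ ((S i ∩ A).powersetCard 4 ∪ (S i \ A).powersetCard 4))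
        ((S j).powersetCard 4 \ ((S j ∩ A).powersetCard 4 ∪ (S j \ A).powersetCard 4)) := by
    intro i hi j hj hij
    exact (hdisjE i hi j hj hij).mono sdiff_subset sdiff_subset
  have hC : (univ : Finset (Finset V)).filter
        (fun e => (e.card = 4 ∧ ∃ i, e ⊆ S i) ∧
          (∃ x ∈ e, x ∈ A) ∧ (∃ x ∈ e, x ∉ A))
      = univ.biUnion (fun i =>
          (S i).powersetCard 4 \ ((S i ∩ A).powersetCard 4 ∪ (S i \ A).powersetCard 4)) := by
    ext e
    simp only [mem_filter, mem_univ, true_and, mem_biUnion, mem_sdiff, mem_union,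
      mem_powersetCard]
    constructor
    · rintro ⟨⟨h4, i, hi⟩, ⟨x, hx, hxA⟩, ⟨y, hy, hyA⟩⟩
      refine ⟨i, ⟨hi, h4⟩, ?_⟩
      rintro (⟨hsub, -⟩ | ⟨hsub, -⟩)
      · exact hyA (mem_of_mem_inter_right (hsub hy))
      · exact (mem_sdiff.mp (hsub hx)).2 hxA
    · rintro ⟨i, ⟨hi, h4⟩, hnot⟩
      refine ⟨⟨h4, i, hi⟩, ?_, ?_⟩
      · by_contra hcon; push_neg at hcon
        exact hnot (Or.inr ⟨fun x hx => mem_sdiff.mpr ⟨hi hx, hcon x hx⟩, h4⟩)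
      · by_contra hcon; push_neg at hcon
        exact hnot (Or.inl ⟨fun x hx => mem_inter.mpr ⟨hi hx, hcon x hx⟩, h4⟩)
  have hblock : ∀ i : Fin tc,
      ((S i).powersetCard 4 \ ((S i ∩ A).powersetCard 4 ∪ (S i \ A).powersetCard 4)).card
        + ((S i ∩ A).card.choose 4 + (S i \ A).card.choose 4) = s.choose 4 := by
    intro i
    have hsub : ((S i ∩ A).powersetCard 4 ∪ (S i \ A).powersetCard 4)
        ⊆ (S i).powersetCard 4 :=
      union_subset (powersetCard_mono inter_subset_left) (powersetCard_mono sdiff_subset)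
    have hd : Disjoint ((S i ∩ A).powersetCard 4) ((S i \ A).powersetCard 4) := by
      rw [Finset.disjoint_left]
      intro e he1 he2
      rw [mem_powersetCard] at he1 he2
      obtain ⟨x, hx⟩ := card_pos.mp (by omega : 0 < e.card)
      exact (mem_sdiff.mp (he2.1 hx)).2 (mem_inter.mp (he1.1 hx)).2
    have h1 := card_sdiff_add_card_eq_card hsub
    rw [card_union_of_disjoint hd] at h1
    simpa [card_powersetCard, hcard] using h1
  have hCutCard : ((univ : Finset (Finset V)).filter
        (fun e => (e.card = 4 ∧ ∃ i, e ⊆ S i) ∧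
          (∃ x ∈ e, x ∈ A) ∧ (∃ x ∈ e, x ∉ A))).card
      + ∑ i : Fin tc, ((S i ∩ A).card.choose 4 + (S i \ A).card.choose 4)
      = tc * s.choose 4 := by
    rw [hC, card_biUnion hdisjC, ← sum_add_distrib,
      Finset.sum_congr rfl (fun i _ => hblock i)]
    simp [card_univ]
  -- pair counts
  have hOff : (univ : Finset V).offDiag = univ.biUnion (fun i => (S i).offDiag) := by
    ext q
    simp only [mem_offDiag, mem_univ, true_and, mem_biUnion]
    constructor
    · intro hne
      obtain ⟨i, ⟨h1, h2⟩, -⟩ := hpair q.1 q.2 hne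
      exact ⟨i, h1, h2, hne⟩
    · rintro ⟨i, -, -, hne⟩
      exact hne
  have hdisjO : ∀ i ∈ (univ : Finset (Fin tc)), ∀ j ∈ univ, i ≠ j →
      Disjoint ((S i).offDiag) ((S j).offDiag) := by
    rintro i - j - hij
    rw [Finset.disjoint_left]
    intro q hq1 hq2
    rw [mem_offDiag] at hq1 hq2
    obtain ⟨k, -, hk⟩ := hpair q.1 q.2 hq1.2.2
    exact hij ((hk i ⟨hq1.1, hq1.2.1⟩).trans (hk j ⟨hq2.1, hq2.2.1⟩).symm)
  have hTnat : n*n - n = tc * (s*s - s) := by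
    have h1 := congrArg Finset.card hOff
    rw [card_biUnion hdisjO] at h1
    simpa [Finset.offDiag_card, hcard, card_univ, hn] using h1
  -- crossing pairs
  have hdisjX : ∀ i ∈ (univ : Finset (Fin tc)), ∀ j ∈ univ, i ≠ j →
      Disjoint ((S i ∩ A) ×ˢ (S i \ A)) ((S j ∩ A) ×ˢ (S j \ A)) := by
    rintro i - j - hij
    rw [Finset.disjoint_left]
    intro q hq1 hq2
    rw [mem_product] at hq1 hq2
    have hne : q.1 ≠ q.2 := by
      intro h
      exact (mem_sdiff.mp hq1.2).2 (h ▸ (mem_inter.mp hq1.1).2)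
    obtain ⟨k, -, hk⟩ := hpair q.1 q.2 hne
    exact hij ((hk i ⟨(mem_inter.mp hq1.1).1, (mem_sdiff.mp hq1.2).1⟩).trans
      (hk j ⟨(mem_inter.mp hq2.1).1, (mem_sdiff.mp hq2.2).1⟩).symm)
  have hcross : A ×ˢ ((univ : Finset V) \ A)
      = univ.biUnion (fun i => (S i ∩ A) ×ˢ (S i \ A)) := by
    ext q
    simp only [mem_product, mem_sdiff, mem_univ, true_and, mem_biUnion, mem_inter]
    constructor
    · rintro ⟨hA1, hA2⟩
      have hne : q.1 ≠ q.2 := fun h => hA2 (h ▸ hA1)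
      obtain ⟨i, ⟨h1, h2⟩, -⟩ := hpair q.1 q.2 hne
      exact ⟨i, ⟨h1, hA1⟩, h2, hA2⟩
    · rintro ⟨i, ⟨-, h1⟩, -, h2⟩
      exact ⟨h1, h2⟩
  have hPnat : A.card * ((univ : Finset V) \ A).card
      = ∑ i : Fin tc, (S i ∩ A).card * (S i \ A).card := by
    have h1 := congrArg Finset.card hcross
    rw [card_biUnion hdisjX, card_product] at h1
    simpa [card_product] using h1
  -- numeric setup
  have i0 : Fin tc := ⟨0, htc1⟩
  have hns : s ≤ n := by
    rw [← hn, ← hcard i0]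
    exact card_le_univ _
  have hn5 : 5 ≤ n := le_trans hs hns
  have hAn : A.card ≤ n := by rw [← hn]; exact card_le_univ _
  have hcompl : ((univ : Finset V) \ A).card = n - A.card := by
    rw [card_sdiff_of_subset (subset_univ A), card_univ, hn]
  -- real variables
  have habs : ∀ i : Fin tc, ((S i ∩ A).card : ℝ) + ((S i \ A).card : ℝ) = (s : ℝ) := by
    intro i
    have h0 := card_inter_add_card_sdiff (S i) A
    rw [hcard i] at h0
    exact_mod_cast h0
  -- per-block real identity
  have hbR : ∀ i : Fin tc,
      24 * (((S i ∩ A).card.choose 4 : ℝ) + ((S i \ A).card.choose 4 : ℝ))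
      = 24 * ((s.choose 4 : ℝ))
        + 2*(((S i ∩ A).card : ℝ) * ((S i \ A).card : ℝ))^2
        - (4*(s:ℝ)^2 - 18*(s:ℝ) + 22)*(((S i ∩ A).card : ℝ) * ((S i \ A).card : ℝ)) := by
    intro i
    have h1 := castc4 (S i ∩ A).card
    have h2 := castc4 (S i \ A).card
    have h3 := castc4 s
    have h4 : ((S i \ A).card : ℝ) = (s : ℝ) - ((S i ∩ A).card : ℝ) := by
      linarith [habs i]
    rw [h4] at h2 ⊢
    linear_combination h1 + h2 - h3
  -- global real facts
  have hTreal : (tc:ℝ) * ((s:ℝ)*(s:ℝ) - (s:ℝ)) = (n:ℝ)*(n:ℝ) - (n:ℝ) := by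
    have hs2 : s ≤ s*s := Nat.le_mul_of_pos_left s (by omega)
    have hn2 : n ≤ n*n := Nat.le_mul_of_pos_left n (by omega)
    have hcast := congrArg (fun m : ℕ => (m:ℝ)) hTnat
    simp only [Nat.cast_sub hs2, Nat.cast_sub hn2, Nat.cast_mul] at hcast
    linarith
  have hPreal : (∑ i : Fin tc, ((S i ∩ A).card : ℝ) * ((S i \ A).card : ℝ))
      = (A.card : ℝ) * ((n:ℝ) - (A.card:ℝ)) := by
    have h1 : A.card * (n - A.card) = ∑ i : Fin tc, (S i ∩ A).card * (S i \ A).card := by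
      rw [← hcompl]; exact hPnat
    have h2 := congrArg (fun m : ℕ => (m:ℝ)) h1
    simp only [Nat.cast_mul, Nat.cast_sub hAn, Nat.cast_sum] at h2
    exact h2.symm
  have hCS : (∑ i : Fin tc, ((S i ∩ A).card : ℝ) * ((S i \ A).card : ℝ))^2
      ≤ (tc:ℝ) * ∑ i : Fin tc, (((S i ∩ A).card : ℝ) * ((S i \ A).card : ℝ))^2 := by
    have h1 := sq_sum_le_card_mul_sum_sq (s := (univ : Finset (Fin tc)))
      (f := fun i => ((S i ∩ A).card : ℝ) * ((S i \ A).card : ℝ))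
    simpa [card_univ] using h1
  have e1 : (((univ : Finset (Finset V)).filter
        (fun e => (e.card = 4 ∧ ∃ i, e ⊆ S i) ∧
          (∃ x ∈ e, x ∈ A) ∧ (∃ x ∈ e, x ∉ A))).card : ℝ)
      + ∑ i : Fin tc, (((S i ∩ A).card.choose 4 : ℝ) + ((S i \ A).card.choose 4 : ℝ))
      = (tc:ℝ) * (s.choose 4 : ℝ) := by
    have h2 := congrArg (fun m : ℕ => (m:ℝ)) hCutCard
    push_cast at h2
    convert h2 using 2
  have e2 : (((univ : Finset (Finset V)).filter
        (fun e => e.card = 4 ∧ ∃ i, e ⊆ S i)).card : ℝ) = (tc:ℝ) * (s.choose 4 : ℝ) := by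
    exact_mod_cast congrArg (fun m : ℕ => (m:ℝ)) hEcard
  have e3 : 24 * (∑ i : Fin tc, (((S i ∩ A).card.choose 4 : ℝ) + ((S i \ A).card.choose 4 : ℝ)))
      = 24 * ((tc:ℝ) * (s.choose 4 : ℝ))
        + 2 * (∑ i : Fin tc, (((S i ∩ A).card : ℝ) * ((S i \ A).card : ℝ))^2)
        - (4*(s:ℝ)^2 - 18*(s:ℝ) + 22)
          * (∑ i : Fin tc, ((S i ∩ A).card : ℝ) * ((S i \ A).card : ℝ)) := by
    rw [Finset.mul_sum, Finset.sum_congr rfl (fun i _ => hbR i)]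
    rw [Finset.sum_sub_distrib, Finset.sum_add_distrib, Finset.sum_const, card_univ,
      Fintype.card_fin, nsmul_eq_mul, ← Finset.mul_sum, ← Finset.mul_sum]
    ring
  have hs' : (5:ℝ) ≤ (s:ℝ) := by exact_mod_cast hs
  have hns' : (s:ℝ) ≤ (n:ℝ) := by exact_mod_cast hns
  have hT1' : (1:ℝ) ≤ (tc:ℝ) := by exact_mod_cast htc1
  have hK0 : (0:ℝ) ≤ (A.card:ℝ) := by positivity
  have hKn : (A.card:ℝ) ≤ (n:ℝ) := by exact_mod_cast hAn
  have hcore := core (n:ℝ) (s:ℝ) (tc:ℝ)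
    (∑ i : Fin tc, ((S i ∩ A).card : ℝ) * ((S i \ A).card : ℝ))
    (∑ i : Fin tc, (((S i ∩ A).card : ℝ) * ((S i \ A).card : ℝ))^2)
    (A.card:ℝ) hs' hns' hT1' hTreal hCS hPreal hK0 hKn
  have e7 : (tc:ℝ) * ((s:ℝ)*((s:ℝ)-1)*((s:ℝ)-2)*((s:ℝ)-3))
      = 24 * ((tc:ℝ) * (s.choose 4 : ℝ)) := by
    rw [← castc4 s]; ring
  linarith [hcore, e1, e2, e3, e7]
end

section
/- Let H be an n-vertex, m-edge k-uniform multihypergraph and 2 ≤ r ≤ k. There exists ε = ε(k) > 0 such that: if U ⊆ V(H) is a vertex subset and at least (1−ε)m edges have at least k−1 of their vertices in U, then either H has an r-cut of surplus Ω(m), or the induced sub-multihypergraph H[U] has Ω(m) edges. -/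
open Finset

/-- Stirling numbers of the second kind. -/
def stirling2 : ℕ → ℕ → ℕ
  | 0, 0 => 1
  | 0, _ + 1 => 0
  | _ + 1, 0 => 0
  | n + 1, k + 1 => (k + 1) * stirling2 n (k + 1) + stirling2 n k

def Nsurj (t y : ℕ) : ℕ := Fintype.card {f : Fin t → Fin y // Function.Surjective f}

lemma Nsurj_congr (α β : Type*) [Fintype α] [Fintype β] [DecidableEq α] [DecidableEq β] :
    Fintype.card {f : α → β // Function.Surjective f}
      = Nsurj (Fintype.card α) (Fintype.card β) := by
  classical
  apply Fintype.card_congr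
  refine Equiv.subtypeEquiv ((Fintype.equivFin α).arrowCongr (Fintype.equivFin β)) ?_
  intro f
  show _ ↔ Function.Surjective (⇑(Fintype.equivFin β) ∘ f ∘ ⇑(Fintype.equivFin α).symm)
  rw [Equiv.comp_surjective, Equiv.surjective_comp]

lemma Nsurj_zero_zero : Nsurj 0 0 = 1 := by
  rw [Nsurj, Fintype.card_eq_one_iff]
  refine ⟨⟨fun x => x.elim0, fun y => y.elim0⟩, ?_⟩
  rintro ⟨f, hf⟩
  ext x
  exact x.elim0

lemma Nsurj_zero_succ (y : ℕ) : Nsurj 0 (y + 1) = 0 := by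
  rw [Nsurj, Fintype.card_eq_zero_iff]
  constructor
  rintro ⟨f, hf⟩
  obtain ⟨x, -⟩ := hf 0
  exact x.elim0

lemma Nsurj_succ_zero (t : ℕ) : Nsurj (t + 1) 0 = 0 := by
  rw [Nsurj, Fintype.card_eq_zero_iff]
  constructor
  rintro ⟨f, -⟩
  exact (f 0).elim0

lemma Nsurj_succ_succ (t s : ℕ) :
    Nsurj (t + 1) (s + 1) = (s + 1) * (Nsurj t (s + 1) + Nsurj t s) := by
  classical
  have e1 : {f : Fin (t+1) → Fin (s+1) // Function.Surjective f} ≃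
      {p : Fin (s+1) × (Fin t → Fin (s+1)) // ∀ b, b = p.1 ∨ ∃ x, p.2 x = b} := by
    refine Equiv.subtypeEquiv (Fin.consEquiv (fun _ => Fin (s+1))).symm ?_
    intro f
    constructor
    · intro hf b
      obtain ⟨x, hx⟩ := hf b
      induction x using Fin.cases with
      | zero => exact Or.inl hx.symm
      | succ i => exact Or.inr ⟨i, hx⟩
    · intro h b
      rcases h b with h | ⟨x, hx⟩
      · exact ⟨0, h.symm⟩
      · exact ⟨x.succ, hx⟩
  have e2 : {p : Fin (s+1) × (Fin t → Fin (s+1)) // ∀ b, b = p.1 ∨ ∃ x, p.2 x = b} ≃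
      Σ c : Fin (s+1), {h : Fin t → Fin (s+1) // ∀ b, b = c ∨ ∃ x, h x = b} :=
    Equiv.subtypeProdEquivSigmaSubtype (fun c (h : Fin t → Fin (s+1)) => ∀ b, b = c ∨ ∃ x, h x = b)
  have hc : ∀ c : Fin (s+1), Fintype.card {h : Fin t → Fin (s+1) // ∀ b, b = c ∨ ∃ x, h x = b}
      = Nsurj t (s+1) + Nsurj t s := by
    intro c
    have hiff : ∀ h : Fin t → Fin (s+1), (∀ b, b = c ∨ ∃ x, h x = b) ↔
        (Function.Surjective h ∨ ((∀ x, h x ≠ c) ∧ ∀ b, b ≠ c → ∃ x, h x = b)) := by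
      intro h
      constructor
      · intro hP
        by_cases hx : ∃ x, h x = c
        · left
          intro b
          rcases hP b with rfl | hb
          · exact hx
          · exact hb
        · right
          refine ⟨fun x hxc => hx ⟨x, hxc⟩, fun b hb => ?_⟩
          rcases hP b with rfl | hbb
          · exact absurd rfl hb
          · exact hbb
      · rintro (hs | ⟨h1, h2⟩) b
        · exact Or.inr (hs b)
        · by_cases hb : b = c
          · exact Or.inl hb
          · exact Or.inr (h2 b hb)
    rw [Fintype.card_congr (Equiv.subtypeEquivRight hiff)]
    have hdisj : Disjoint (fun h : Fin t → Fin (s+1) => Function.Surjective h)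
        (fun h => (∀ x, h x ≠ c) ∧ ∀ b, b ≠ c → ∃ x, h x = b) := by
      rw [Pi.disjoint_iff]
      intro h
      rw [disjoint_iff_inf_le]
      rintro ⟨hs, h1, -⟩
      obtain ⟨x, hx⟩ := hs c
      exact h1 x hx
    rw [Fintype.card_subtype_or_disjoint _ _ hdisj]
    congr 1
    have e3 : {h : Fin t → Fin (s+1) // (∀ x, h x ≠ c) ∧ ∀ b, b ≠ c → ∃ x, h x = b} ≃
          {h' : Fin t → {b : Fin (s+1) // b ≠ c} // Function.Surjective h'} :=
        { toFun := fun h => ⟨fun x => ⟨h.1 x, h.2.1 x⟩, fun b => (h.2.2 b.1 b.2).imp fun x hx => Subtype.ext hx⟩,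
          invFun := fun h' => ⟨fun x => (h'.1 x).1, ⟨fun x => (h'.1 x).2,
            fun b hb => (h'.2 ⟨b, hb⟩).imp fun x hx => congrArg Subtype.val hx⟩⟩,
          left_inv := by rintro ⟨h, -⟩; rfl,
          right_inv := by rintro ⟨h', -⟩; rfl }
    rw [Fintype.card_congr e3, Nsurj_congr]
    congr 1
    · exact Fintype.card_fin t
    · have : Fintype.card {b : Fin (s+1) // ¬ b = c} = s := by
        rw [Fintype.card_subtype_compl, Fintype.card_subtype_eq, Fintype.card_fin]
        omega
      simpa using this
  have htot : Nsurj (t+1) (s+1)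
      = ∑ c : Fin (s+1), Fintype.card {h : Fin t → Fin (s+1) // ∀ b, b = c ∨ ∃ x, h x = b} := by
    rw [← Fintype.card_sigma]
    exact Fintype.card_congr (e1.trans e2)
  rw [htot]
  simp only [hc]
  simp [mul_comm]

lemma Nsurj_eq (t y : ℕ) : Nsurj t y = stirling2 t y * y.factorial := by
  induction t generalizing y with
  | zero =>
    cases y with
    | zero => simp [Nsurj_zero_zero, stirling2]
    | succ y => simp [Nsurj_zero_succ, stirling2]
  | succ t ih =>
    cases y with
    | zero => simp [Nsurj_succ_zero, stirling2]
    | succ s =>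
      rw [Nsurj_succ_succ, ih, ih]
      show _ = ((s + 1) * stirling2 t (s + 1) + stirling2 t s) * (s+1).factorial
      rw [Nat.factorial_succ]
      ring
def step1F (t y : ℕ) (f : {f : Fin (t+1) → Fin (y+1) // Function.Surjective f}) :
    {h : Fin t → Fin (y+1) // ∀ b, b ≠ Fin.last y → ∃ x, h x = b} × Fin (y+1) :=
  ⟨⟨fun x => Equiv.swap (f.1 (Fin.last t)) (Fin.last y) (f.1 x.castSucc), by
    intro b hb
    obtain ⟨x, hx⟩ := f.2 (Equiv.swap (f.1 (Fin.last t)) (Fin.last y) b)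
    have hxne : x ≠ Fin.last t := by
      rintro rfl
      apply hb
      have := congrArg (Equiv.swap (f.1 (Fin.last t)) (Fin.last y)) hx
      rw [Equiv.swap_apply_self, Equiv.swap_apply_left] at this
      exact this.symm
    obtain ⟨x', rfl⟩ := Fin.exists_castSucc_eq.mpr hxne
    refine ⟨x', ?_⟩
    show Equiv.swap (f.1 (Fin.last t)) (Fin.last y) (f.1 x'.castSucc) = b
    rw [hx, Equiv.swap_apply_self]⟩,
    f.1 (Fin.last t)⟩

lemma step1 (t y : ℕ) :
    Nsurj (t+1) (y+1) ≤
      (y+1) * Fintype.card {h : Fin t → Fin (y+1) // ∀ b, b ≠ Fin.last y → ∃ x, h x = b} := by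
  classical
  have hF : Function.Injective (step1F t y) := by
    rintro ⟨f, hf⟩ ⟨g, hg⟩ h
    simp only [step1F, Prod.mk.injEq, Subtype.mk.injEq] at h
    obtain ⟨h1, h2⟩ := h
    ext x
    induction x using Fin.lastCases with
    | last => exact congrArg Fin.val h2
    | cast i =>
      have := congrFun h1 i
      rw [h2] at this
      have := (Equiv.swap (g (Fin.last t)) (Fin.last y)).injective this
      exact congrArg Fin.val this
  calc Nsurj (t+1) (y+1)
      ≤ Fintype.card ({h : Fin t → Fin (y+1) // ∀ b, b ≠ Fin.last y → ∃ x, h x = b} × Fin (y+1)) :=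
        Fintype.card_le_of_injective (step1F t y) hF
    _ = _ := by rw [Fintype.card_prod, Fintype.card_fin, mul_comm]

def step2F (t y : ℕ)
    (p : {h : Fin t → Fin (y+1) // ∀ b, b ≠ Fin.last y → ∃ x, h x = b} × (Fin t → Fin y)) :
    {g : Fin t → Fin y // Function.Surjective g} × (Fin t → Fin (y+1)) :=
  ⟨⟨fun i => if hc : p.1.1 i = Fin.last y then p.2 i else (p.1.1 i).castPred hc, by
    intro b
    obtain ⟨x, hx⟩ := p.1.2 b.castSucc (Fin.castSucc_lt_last b).ne
    refine ⟨x, ?_⟩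
    show (if hc : p.1.1 x = Fin.last y then p.2 x else (p.1.1 x).castPred hc) = b
    rw [dif_neg]
    · simp only [hx, Fin.castPred_castSucc]
    · rw [hx]; exact (Fin.castSucc_lt_last b).ne⟩,
    fun i => if p.1.1 i = Fin.last y then Fin.last y else Fin.castSucc (p.2 i)⟩

lemma step2 (t y : ℕ) (hy : 1 ≤ y) (hty : y ≤ t) :
    Fintype.card {h : Fin t → Fin (y+1) // ∀ b, b ≠ Fin.last y → ∃ x, h x = b} * y ^ t
      < Nsurj t y * (y+1) ^ t := by
  classical
  have hΦ : Function.Injective (step2F t y) := by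
    rintro ⟨⟨h, hcov⟩, w⟩ ⟨⟨h', hcov'⟩, w'⟩ heq
    simp only [step2F, Prod.mk.injEq, Subtype.mk.injEq] at heq
    obtain ⟨h1, h2⟩ := heq
    have key : ∀ i, h i = h' i ∧ w i = w' i := by
      intro i
      have e1 := congrFun h1 i
      have e2 := congrFun h2 i
      by_cases hc : h i = Fin.last y <;> by_cases hc' : h' i = Fin.last y
      · rw [if_pos hc, if_pos hc'] at e2
        rw [dif_pos hc, dif_pos hc'] at e1
        exact ⟨hc.trans hc'.symm, e1⟩
      · rw [if_pos hc, if_neg hc'] at e2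
        exact absurd e2.symm (Fin.castSucc_lt_last (w' i)).ne
      · rw [if_neg hc, if_pos hc'] at e2
        exact absurd e2 (Fin.castSucc_lt_last (w i)).ne
      · rw [if_neg hc, if_neg hc'] at e2
        rw [dif_neg hc, dif_neg hc'] at e1
        refine ⟨?_, Fin.castSucc_injective _ e2⟩
        rw [← Fin.castSucc_castPred (h i) hc, ← Fin.castSucc_castPred (h' i) hc', e1]
    refine Prod.ext (Subtype.ext (funext fun i => (key i).1)) (funext fun i => (key i).2)
  have hg0 : Function.Surjective (fun i : Fin t =>
      if hi : (i : ℕ) < y then (⟨i, hi⟩ : Fin y) else ⟨0, hy⟩) := by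
    intro b
    refine ⟨⟨(b : ℕ), lt_of_lt_of_le b.2 hty⟩, ?_⟩
    simp only [dif_pos b.2]
  have hnotmem : (⟨⟨_, hg0⟩, fun _ => Fin.last y⟩ :
      {g : Fin t → Fin y // Function.Surjective g} × (Fin t → Fin (y+1))) ∉ Set.range (step2F t y) := by
    rintro ⟨⟨h, w⟩, hcontra⟩
    simp only [step2F, Prod.mk.injEq, Subtype.mk.injEq] at hcontra
    obtain ⟨-, h2⟩ := hcontra
    have hall : ∀ i, h.1 i = Fin.last y := by
      intro i
      have := congrFun h2 i
      by_cases hc : h.1 i = Fin.last y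
      · exact hc
      · rw [if_neg hc] at this
        exact absurd this (Fin.castSucc_lt_last (w i)).ne
    obtain ⟨x, hx⟩ := h.2 (Fin.castSucc ⟨0, hy⟩) (Fin.castSucc_lt_last _).ne
    exact (Fin.castSucc_lt_last (⟨0, hy⟩ : Fin y)).ne (hx ▸ hall x)
  have := Fintype.card_lt_of_injective_of_notMem (step2F t y) hΦ hnotmem
  simpa [Fintype.card_prod, Fintype.card_fun, Fintype.card_fin, Nsurj] using this

lemma key_ineq (t y : ℕ) (hy : 1 ≤ y) (hty : y ≤ t) :
    Nsurj (t+1) (y+1) * y ^ t < Nsurj t y * (y+1) ^ (t+1) := by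
  calc Nsurj (t+1) (y+1) * y ^ t
      ≤ ((y+1) * Fintype.card {h : Fin t → Fin (y+1) // ∀ b, b ≠ Fin.last y → ∃ x, h x = b}) * y ^ t :=
        Nat.mul_le_mul_right _ (step1 t y)
    _ = (y+1) * (Fintype.card {h : Fin t → Fin (y+1) // ∀ b, b ≠ Fin.last y → ∃ x, h x = b} * y ^ t) := by
        ring
    _ < (y+1) * (Nsurj t y * (y+1) ^ t) :=
        (Nat.mul_lt_mul_left (Nat.succ_pos y)).mpr (step2 t y hy hty)
    _ = Nsurj t y * (y+1) ^ (t+1) := by ring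
lemma card_cover (V : Type) [Fintype V] [DecidableEq V] (s : Finset V) (y : ℕ) :
    (Finset.univ.filter (fun g : V → Fin y => ∀ p : Fin y, ∃ v ∈ s, g v = p)).card
      = Nsurj s.card y * y ^ (Fintype.card V - s.card) := by
  classical
  rw [← Fintype.card_subtype]
  have E : {g : V → Fin y // ∀ p : Fin y, ∃ v ∈ s, g v = p} ≃
      {h : ↥s → Fin y // Function.Surjective h} × (↥(sᶜ : Finset V) → Fin y) :=
    { toFun := fun g => ⟨⟨fun x => g.1 x.1, fun p => by
        obtain ⟨v, hv, he⟩ := g.2 p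
        exact ⟨⟨v, hv⟩, he⟩⟩, fun x => g.1 x.1⟩,
      invFun := fun p => ⟨fun v => if hv : v ∈ s then p.1.1 ⟨v, hv⟩
          else p.2 ⟨v, Finset.mem_compl.mpr hv⟩, fun q => by
        obtain ⟨⟨v, hv⟩, he⟩ := p.1.2 q
        exact ⟨v, hv, by
          show (if hv : v ∈ s then p.1.1 ⟨v, hv⟩ else _) = q
          rw [dif_pos hv]; exact he⟩⟩,
      left_inv := fun g => Subtype.ext (funext fun v => by
        by_cases hv : v ∈ s <;> simp [hv]),
      right_inv := fun p => by
        refine Prod.ext (Subtype.ext (funext fun x => ?_)) (funext fun x => ?_)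
        · simp [x.2]
        · have hx := x.2
          rw [Finset.mem_compl] at hx
          simp [hx] }
  rw [Fintype.card_congr E, Fintype.card_prod, Fintype.card_fun, Nsurj_congr,
    Fintype.card_coe, Fintype.card_coe, Fintype.card_fin, Finset.card_compl]

lemma sum_filter_card {α : Type} (γ : Type) [Fintype γ] [DecidableEq γ] (B : Multiset α)
    (P : γ → α → Prop) [∀ g, DecidablePred (P g)] (C : ℕ)
    (h : ∀ e ∈ B, (Finset.univ.filter (fun g => P g e)).card = C) :
    ∑ g : γ, Multiset.card (B.filter (P g)) = Multiset.card B * C := by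
  induction B using Multiset.induction_on with
  | empty => simp
  | cons e B ih =>
    have he := h e (Multiset.mem_cons_self e B)
    have hB := ih (fun e' he' => h e' (Multiset.mem_cons_of_mem he'))
    simp only [Multiset.filter_cons, Multiset.card_add, Finset.sum_add_distrib, hB,
      Multiset.card_cons]
    have : ∀ g : γ, Multiset.card (if P g e then ({e} : Multiset α) else 0)
        = if P g e then 1 else 0 := by
      intro g
      split <;> simp
    simp only [this]
    rw [← Finset.card_filter]
    rw [he]
    ring

set_option maxHeartbeats 1000000 in
/-- Let `H` be a `k`-uniform multihypergraph with `m` edges and `2 ≤ r ≤ k`. There is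
`ε = ε(k,r) > 0` such that if `U` is a vertex subset and at least `(1−ε)m` edges have at
least `k−1` vertices in `U`, then either `H` has an `r`-cut of surplus `Ω(m)` (surplus:
cut size minus `S(k,r)·r!/r^k · m`), or `H[U]` has `Ω(m)` edges. -/
theorem stmt_16 (k r : ℕ) (hr2 : 2 ≤ r) (hrk : r ≤ k) :
    ∃ ε : ℝ, 0 < ε ∧ ∃ c : ℝ, 0 < c ∧
      ∀ (V : Type) [Fintype V] [DecidableEq V] (H : Multiset (Finset V)),
        (∀ e ∈ H, e.card = k) →
        ∀ U : Finset V,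
          (1 - ε) * (Multiset.card H : ℝ) ≤
              (Multiset.card (H.filter (fun e => k - 1 ≤ (e ∩ U).card)) : ℝ) →
          ((∃ f : V → Fin r,
              ((stirling2 k r * r.factorial : ℕ) : ℝ) / ((r : ℝ) ^ k) * (Multiset.card H : ℝ)
                  + c * (Multiset.card H : ℝ)
                ≤ (Multiset.card (H.filter (fun e => ∀ p : Fin r, ∃ v ∈ e, f v = p)) : ℝ)) ∨
            c * (Multiset.card H : ℝ) ≤
              (Multiset.card (H.filter (fun e => e ⊆ U)) : ℝ)) := by
  classical
  obtain ⟨s, rfl⟩ : ∃ s, r = s + 1 := ⟨r - 1, by omega⟩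
  obtain ⟨t, rfl⟩ : ∃ t, k = t + 1 := ⟨k - 1, by omega⟩
  have hs1 : 1 ≤ s := by omega
  have hst : s ≤ t := by omega
  have hspos : (0:ℝ) < (s:ℝ) := by exact_mod_cast hs1
  set p : ℝ := (Nsurj (t+1) (s+1) : ℝ) / ((s:ℝ)+1) ^ (t+1) with hp
  set q : ℝ := (Nsurj t s : ℝ) / (s:ℝ) ^ t with hq
  have hstpos : (0:ℝ) < (s:ℝ) ^ t := by positivity
  have hs1pos : (0:ℝ) < ((s:ℝ)+1) ^ (t+1) := by positivity
  have hqp : p < q := by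
    rw [hp, hq, div_lt_div_iff₀ hs1pos hstpos]
    have := key_ineq t s hs1 hst
    have := (Nat.cast_lt (α := ℝ)).mpr this
    push_cast at this ⊢
    convert this using 2 <;> push_cast <;> ring
  have hppos : 0 ≤ p := by positivity
  have hqle : q ≤ 1 := by
    rw [hq, div_le_one hstpos]
    have h1 : Nsurj t s ≤ s ^ t := by
      have h2 := Fintype.card_subtype_le (fun f : Fin t → Fin s => Function.Surjective f)
      simpa [Nsurj, Fintype.card_fun] using h2
    exact_mod_cast h1
  set δ : ℝ := (q - p) / (2*q + 2) with hδ
  have hq0 : 0 ≤ q := le_trans hppos hqp.le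
  have h2q2 : (0:ℝ) < 2*q + 2 := by nlinarith
  have hδpos : 0 < δ := div_pos (by linarith) h2q2
  have hδeq : δ * (2*q + 2) = q - p := by rw [hδ]; field_simp
  have hδkey : p + δ ≤ q * (1 - 2*δ) := by nlinarith
  have h2δ : 2*δ < 1 := by nlinarith
  clear_value p q δ
  refine ⟨δ, hδpos, δ, hδpos, ?_⟩
  intro V _ _ H hcard U hU
  by_cases hm : Multiset.card H = 0
  · right
    rw [hm]
    push_cast
    rw [mul_zero]
    positivity
  by_cases hA : δ * (Multiset.card H : ℝ) ≤ (Multiset.card (H.filter (fun e => e ⊆ U)) : ℝ)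
  · right; exact hA
  left
  push_neg at hA
  simp only [Nat.add_sub_cancel] at hU
  have hm1 : (1:ℝ) ≤ (Multiset.card H : ℝ) := by
    exact_mod_cast Nat.one_le_iff_ne_zero.mpr hm
  set B : Multiset (Finset V) := H.filter (fun e => t ≤ (e ∩ U).card ∧ ¬ e ⊆ U) with hB
  have hsplit : Multiset.card (H.filter (fun e => t ≤ (e ∩ U).card))
      ≤ Multiset.card B + Multiset.card (H.filter (fun e => e ⊆ U)) := by
    rw [hB, ← Multiset.countP_eq_card_filter, ← Multiset.countP_eq_card_filter,
      ← Multiset.countP_eq_card_filter]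
    rw [Multiset.countP_eq_countP_filter_add H _ (fun e => e ⊆ U)]
    have h1 : Multiset.countP (fun e => t ≤ (e ∩ U).card) (H.filter (fun e => e ⊆ U))
        ≤ Multiset.countP (fun e => e ⊆ U) H := by
      rw [Multiset.countP_eq_card_filter (fun e => e ⊆ U)]
      exact Multiset.countP_le_card _ _
    have h2 : Multiset.countP (fun e => t ≤ (e ∩ U).card) (H.filter (fun e => ¬ e ⊆ U))
        = Multiset.countP (fun e => t ≤ (e ∩ U).card ∧ ¬ e ⊆ U) H := by
      rw [Multiset.countP_eq_card_filter, Multiset.filter_filter,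
        ← Multiset.countP_eq_card_filter]
    omega
  have hb_lb : (1 - 2*δ) * (Multiset.card H : ℝ) ≤ (Multiset.card B : ℝ) := by
    have hs' : (Multiset.card (H.filter (fun e => t ≤ (e ∩ U).card)) : ℝ)
        ≤ (Multiset.card B : ℝ) + (Multiset.card (H.filter (fun e => e ⊆ U)) : ℝ) := by
      exact_mod_cast hsplit
    nlinarith [hU, hA]
  have hbpos : 0 < Multiset.card B := by
    have h0 : (0:ℝ) < (1 - 2*δ) * (Multiset.card H : ℝ) := by nlinarith
    have : (0:ℝ) < (Multiset.card B : ℝ) := lt_of_lt_of_le h0 hb_lb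
    exact_mod_cast this
  obtain ⟨e₀, he₀⟩ := Multiset.exists_mem_of_ne_zero (Multiset.card_pos.mp hbpos)
  have hinterB : ∀ e ∈ B, (e ∩ U).card = t := by
    intro e he
    rw [hB, Multiset.mem_filter] at he
    obtain ⟨heH, h1, h2⟩ := he
    have hec := hcard e heH
    have hsub : e ∩ U ⊆ e := Finset.inter_subset_left
    have hle : (e ∩ U).card ≤ t + 1 := hec ▸ Finset.card_le_card hsub
    have hne : (e ∩ U).card ≠ t + 1 := by
      intro hcc
      have heq : e ∩ U = e := Finset.eq_of_subset_of_card_le hsub (by omega)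
      exact h2 (by rw [← heq]; exact Finset.inter_subset_right)
    omega
  have hnt : t ≤ Fintype.card V := by
    have h1 := hinterB e₀ he₀
    have h2 := Finset.card_le_univ (e₀ ∩ U)
    omega
  set n := Fintype.card V with hn
  set C := Nsurj t s * s ^ (n - t) with hC
  have hCB : ∀ e ∈ B,
      (Finset.univ.filter (fun g : V → Fin s => ∀ pp : Fin s, ∃ v ∈ e ∩ U, g v = pp)).card = C := by
    intro e he
    rw [card_cover V (e ∩ U) s, hinterB e he]
  have hsum := sum_filter_card (V → Fin s) B
    (fun g e => ∀ pp : Fin s, ∃ v ∈ e ∩ U, g v = pp) C hCB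
  set F : (V → Fin s) → V → Fin (s+1) :=
    fun g v => if v ∈ U then (g v).castSucc else Fin.last s with hF
  have hcut : ∀ g : V → Fin s,
      Multiset.card (B.filter (fun e => ∀ pp : Fin s, ∃ v ∈ e ∩ U, g v = pp))
        ≤ Multiset.card (H.filter (fun e => ∀ pp : Fin (s+1), ∃ v ∈ e, F g v = pp)) := by
    intro g
    rw [hB, Multiset.filter_filter]
    apply Multiset.card_le_card
    apply Multiset.monotone_filter_right
    intro e
    rintro ⟨hcov, -, hnsub⟩ pp
    induction pp using Fin.lastCases with
    | last =>
      obtain ⟨v, hv, hvU⟩ := Finset.not_subset.mp hnsub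
      exact ⟨v, hv, by rw [hF]; simp [hvU]⟩
    | cast i =>
      obtain ⟨v, hv, he⟩ := hcov i
      rw [Finset.mem_inter] at hv
      exact ⟨v, hv.1, by rw [hF]; simp [hv.2, he]⟩
  have hγ : Nonempty (V → Fin s) := ⟨fun _ => ⟨0, hs1⟩⟩
  have hsnpos : (0:ℝ) < (s:ℝ) ^ n := by positivity
  have hcardγ : (Fintype.card (V → Fin s) : ℝ) = (s:ℝ) ^ n := by
    rw [Fintype.card_fun, Fintype.card_fin]
    push_cast
    rfl
  have havg : ∑ _g : V → Fin s, ((Multiset.card B : ℝ) * C / (s:ℝ)^n)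
      ≤ ∑ g : V → Fin s,
        (Multiset.card (H.filter (fun e => ∀ pp : Fin (s+1), ∃ v ∈ e, F g v = pp)) : ℝ) := by
    rw [Finset.sum_const, Finset.card_univ, nsmul_eq_mul, hcardγ]
    rw [mul_div_assoc', mul_comm ((s:ℝ)^n) _, mul_div_assoc, div_self (ne_of_gt hsnpos), mul_one]
    calc (Multiset.card B : ℝ) * C
        = ((∑ g : V → Fin s, Multiset.card (B.filter
            (fun e => ∀ pp : Fin s, ∃ v ∈ e ∩ U, g v = pp)) : ℕ) : ℝ) := by
          rw [hsum]; push_cast; ring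
      _ ≤ _ := by
          push_cast
          apply Finset.sum_le_sum
          intro g _
          exact_mod_cast hcut g
  obtain ⟨g, -, hg⟩ := Finset.exists_le_of_sum_le Finset.univ_nonempty havg
  refine ⟨F g, ?_⟩
  have hstirling : ((stirling2 (t+1) (s+1) * (s+1).factorial : ℕ) : ℝ)
      = (Nsurj (t+1) (s+1) : ℝ) := by rw [Nsurj_eq]
  have hCeq : (Multiset.card B : ℝ) * C / (s:ℝ)^n = (Multiset.card B : ℝ) * q := by
    have hnn : n - t + t = n := Nat.sub_add_cancel hnt
    have hsn : (s:ℝ)^n = (s:ℝ)^(n-t) * (s:ℝ)^t := by rw [← pow_add, hnn]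
    rw [hC, hq, hsn]
    push_cast
    field_simp
  rw [hCeq] at hg
  have hfinal : p * (Multiset.card H : ℝ) + δ * (Multiset.card H : ℝ)
      ≤ (Multiset.card B : ℝ) * q := by
    have h1 : (1 - 2*δ) * (Multiset.card H : ℝ) * q ≤ (Multiset.card B : ℝ) * q :=
      mul_le_mul_of_nonneg_right hb_lb hq0
    nlinarith [hδkey, hm1]
  calc ((stirling2 (t+1) (s+1) * (s+1).factorial : ℕ) : ℝ) / (((s+1 : ℕ) : ℝ) ^ (t+1))
        * (Multiset.card H : ℝ) + δ * (Multiset.card H : ℝ)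
      = p * (Multiset.card H : ℝ) + δ * (Multiset.card H : ℝ) := by
        rw [hstirling, hp]
        push_cast
        ring
    _ ≤ (Multiset.card B : ℝ) * q := hfinal
    _ ≤ _ := hg
end

section
/- For integers 2 ≤ y ≤ x, let p(x, y) = S(x,y)·y!/y^x be the probability that a uniformly random assignment of x labeled elements to y parts hits all y parts. Then p(x−1, y−1) > p(x, y). -/
def surj (n k : ℕ) : ℕ := stirling2 n k * k.factorial

lemma surj_succ_succ (n k : ℕ) :
    surj (n+1) (k+1) = (k+1) * (surj n (k+1) + surj n k) := by
  show ((k + 1) * stirling2 n (k + 1) + stirling2 n k) * (k+1).factorial = _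
  simp only [surj, Nat.factorial_succ]
  ring

lemma surj_succ (n k : ℕ) :
    surj (n+1) k = k * (surj n k + surj n (k-1)) := by
  cases k with
  | zero => show stirling2 (n+1) 0 * _ = _; simp [show stirling2 (n+1) 0 = 0 from rfl]
  | succ k => simpa using surj_succ_succ n k

lemma surj_zero (z : ℕ) : surj 0 (z+1) = 0 := by
  show stirling2 0 (z+1) * _ = 0
  simp [show stirling2 0 (z+1) = 0 from rfl]

lemma stirling2_pos : ∀ n k : ℕ, k + 1 ≤ n → 0 < stirling2 n (k+1) := by
  intro n
  induction n with
  | zero => intro k h; omega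
  | succ n ih =>
    intro k h
    show 0 < (k + 1) * stirling2 n (k + 1) + stirling2 n k
    cases k with
    | zero =>
      cases n with
      | zero => simp [show stirling2 0 0 = 1 from rfl]
      | succ m => have := ih 0 (by omega); omega
    | succ j =>
      have := ih j (by omega)
      omega

lemma surj_pos (n z : ℕ) (h : z + 1 ≤ n) : 0 < surj n (z+1) :=
  Nat.mul_pos (stirling2_pos n z h) (Nat.factorial_pos _)

lemma surj_mul_le (n z : ℕ) : z * surj n z ≤ surj (n+1) z := by
  rw [surj_succ]
  exact Nat.mul_le_mul_left z (Nat.le_add_right _ _)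

lemma surj_pow_le (d n z : ℕ) : surj n z * z ^ d ≤ surj (n + d) z := by
  induction d with
  | zero => simp
  | succ d ih =>
    calc surj n z * z ^ (d+1) = z * (surj n z * z ^ d) := by ring
    _ ≤ z * surj (n + d) z := Nat.mul_le_mul_left z ih
    _ ≤ surj (n + d + 1) z := surj_mul_le _ _

lemma surj_identity : ∀ (n z : ℕ),
    surj n (z+1) + surj n z = ∑ j ∈ Finset.range (n+1), n.choose j * surj j z := by
  intro n
  induction n with
  | zero => intro z; simp [surj_zero]
  | succ n ih =>
    intro z
    have step : ∑ j ∈ Finset.range (n+2), (n+1).choose j * surj j z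
        = (∑ j ∈ Finset.range (n+1), n.choose j * surj j z)
          + ∑ j ∈ Finset.range (n+1), n.choose j * surj (j+1) z := by
      rw [Finset.sum_range_succ' (fun j => (n+1).choose j * surj j z) (n+1)]
      have h1 : ∀ j, (n+1).choose (j+1) * surj (j+1) z
          = n.choose j * surj (j+1) z + n.choose (j+1) * surj (j+1) z := by
        intro j; rw [Nat.choose_succ_succ, add_mul]
      rw [Finset.sum_congr rfl (fun j _ => h1 j), Finset.sum_add_distrib]
      have h2 : (∑ j ∈ Finset.range (n+1), n.choose (j+1) * surj (j+1) z)
            + n.choose 0 * surj 0 z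
          = ∑ j ∈ Finset.range (n+1), n.choose j * surj j z := by
        rw [← Finset.sum_range_succ' (fun j => n.choose j * surj j z) (n+1),
            Finset.sum_range_succ]
        simp
      have h3 : (n+1).choose 0 * surj 0 z = n.choose 0 * surj 0 z := by
        simp
      omega
    rw [step, ← ih z]
    have hsucc : ∑ j ∈ Finset.range (n+1), n.choose j * surj (j+1) z
        = z * ((∑ j ∈ Finset.range (n+1), n.choose j * surj j z)
            + ∑ j ∈ Finset.range (n+1), n.choose j * surj j (z-1)) := by
      simp only [surj_succ, Finset.mul_sum, ← Finset.sum_add_distrib]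
      apply Finset.sum_congr rfl
      intro j _
      ring
    rw [hsucc, ← ih z, ← ih (z-1)]
    cases z with
    | zero => simp [surj_succ]
    | succ w =>
      simp only [Nat.add_sub_cancel]
      rw [surj_succ_succ n (w+1), surj_succ_succ n w]
      ring

lemma key (n z : ℕ) (hz : 1 ≤ z) (hn : z ≤ n) :
    surj n (z+1) * z ^ n + surj n z * z ^ n < surj n z * (z+1) ^ n := by
  obtain ⟨w, rfl⟩ : ∃ w, z = w + 1 := ⟨z - 1, by omega⟩
  have hid := surj_identity n (w+1)
  have hL : surj n (w+1+1) * (w+1) ^ n + surj n (w+1) * (w+1) ^ n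
      = ∑ j ∈ Finset.range (n+1), n.choose j * surj j (w+1) * (w+1) ^ n := by
    rw [← Finset.sum_mul, ← hid]; ring
  have hR : surj n (w+1) * (w+1+1) ^ n
      = ∑ j ∈ Finset.range (n+1), surj n (w+1) * ((w+1) ^ j * n.choose j) := by
    rw [← Finset.mul_sum]
    congr 1
    rw [add_pow]
    simp
  rw [hL, hR]
  apply Finset.sum_lt_sum
  · intro j hj
    have hj' : j ≤ n := by simp at hj; omega
    have h1 : surj j (w+1) * (w+1) ^ (n - j) ≤ surj n (w+1) := by
      have := surj_pow_le (n - j) j (w+1)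
      rwa [show j + (n - j) = n by omega] at this
    calc n.choose j * surj j (w+1) * (w+1) ^ n
        = (surj j (w+1) * (w+1) ^ (n-j)) * ((w+1) ^ j * n.choose j) := by
          have hp : (w+1) ^ n = (w+1) ^ (n-j) * (w+1) ^ j := by
            rw [← pow_add]; congr 1; omega
          rw [hp]; ring
      _ ≤ surj n (w+1) * ((w+1) ^ j * n.choose j) :=
          Nat.mul_le_mul_right _ h1
  · refine ⟨0, by simp, ?_⟩
    have hp := surj_pos n w hn
    simp [surj_zero]
    omega

lemma main_nat_s17 (n z : ℕ) (h : z + 1 ≤ n) :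
    surj (n+1) (z+2) * (z+1) ^ n < surj n (z+1) * (z+2) ^ (n+1) := by
  have hk := key n (z+1) (by omega) h
  rw [surj_succ_succ]
  calc (z+1+1) * (surj n (z+1+1) + surj n (z+1)) * (z+1) ^ n
      = (z+2) * (surj n (z+2) * (z+1) ^ n + surj n (z+1) * (z+1) ^ n) := by ring
    _ < (z+2) * (surj n (z+1) * (z+2) ^ n) := by
        have : surj n (z+2) * (z+1) ^ n + surj n (z+1) * (z+1) ^ n
            < surj n (z+1) * (z+2) ^ n := by
          simpa [show z+1+1 = z+2 by ring] using hk
        exact mul_lt_mul_of_pos_left this (by omega)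
    _ = surj n (z+1) * (z+2) ^ (n+1) := by ring

/-- For `2 ≤ y ≤ x`, the probability `p(x,y) = S(x,y)·y!/y^x` that a uniformly random
assignment of `x` labelled elements into `y` classes hits all classes satisfies
`p(x−1, y−1) > p(x, y)`. -/
theorem stmt_17 (x y : ℕ) (hy : 2 ≤ y) (hxy : y ≤ x) :
    ((stirling2 x y * y.factorial : ℕ) : ℝ) / ((y : ℝ) ^ x)
      < ((stirling2 (x - 1) (y - 1) * (y - 1).factorial : ℕ) : ℝ) /
          (((y - 1 : ℕ) : ℝ) ^ (x - 1)) := by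
  obtain ⟨z, rfl⟩ : ∃ z, y = z + 2 := ⟨y - 2, by omega⟩
  obtain ⟨n, rfl⟩ : ∃ n, x = n + 1 := ⟨x - 1, by omega⟩
  have h : z + 1 ≤ n := by omega
  have hnat := main_nat_s17 n z h
  have e1 : z + 2 - 1 = z + 1 := rfl
  have e2 : n + 1 - 1 = n := rfl
  rw [e1, e2]
  rw [div_lt_div_iff₀ (by positivity) (by positivity)]
  have : ((surj (n+1) (z+2) : ℕ) : ℝ) * ((z+1:ℕ):ℝ) ^ n
      < ((surj n (z+1) : ℕ) : ℝ) * ((z+2:ℕ):ℝ) ^ (n+1) := by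
    push_cast
    exact_mod_cast hnat
  simpa [surj] using this
end
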